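/- arXiv:2306.07645 — 7 statements merged into one kernel-verified Lean document; each statement's English description precedes it below -/
import Mathlib

section
/- Let α ∈ (1,2). There exists a constant c = c(α) > 0 such that for every b ∈ ℝ and every x ∈ ℝ with x ≠ 0, the function φ_{b,−}(x) = |x|^α − |x − b|^α satisfies |φ'_{b,−}(x)| ≥ c · min(|b| · |x|^{α−2}, |b|^{α−1}). -/
open Real Filter

private lemma bern_concave {β u v : ℝ} (hβ0 : 0 < β) (hβ1 : β ≤ 1) (hv : 0 ≤ v) (hvu : v ≤ u) :
    β * (u - v) * u ^ (β - 1) ≤ u ^ β - v ^ β := by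
  rcases eq_or_lt_of_le (hv.trans hvu) with hu | hu
  · have hv0 : v = 0 := le_antisymm (hvu.trans_eq hu.symm) hv
    subst hv0
    rw [← hu]
    simp
  · have hs : (-1 : ℝ) ≤ v / u - 1 := by
      have : 0 ≤ v / u := div_nonneg hv hu.le
      linarith
    have h := rpow_one_add_le_one_add_mul_self hs hβ0.le hβ1
    rw [add_sub_cancel] at h
    rw [Real.div_rpow hv hu.le] at h
    have hupos : (0:ℝ) < u ^ β := Real.rpow_pos_of_pos hu β
    have h2 := (div_le_iff₀ hupos).mp h
    have hsub : u ^ (β - 1) = u ^ β / u := Real.rpow_sub_one hu.ne' β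
    rw [hsub]
    have key : (1 + β * (v / u - 1)) * u ^ β = u ^ β - β * (u - v) * (u ^ β / u) := by
      field_simp
      ring
    linarith [key ▸ h2]

private lemma rpow_subadd {β a c : ℝ} (hβ0 : 0 ≤ β) (hβ1 : β ≤ 1) (ha : 0 ≤ a) (hc : 0 ≤ c) :
    (a + c) ^ β ≤ a ^ β + c ^ β := by
  have h := NNReal.rpow_add_le_add_rpow a.toNNReal c.toNNReal hβ0 hβ1
  rw [← Real.toNNReal_add ha hc] at h
  have h2 := NNReal.coe_le_coe.mpr h
  rwa [NNReal.coe_add, NNReal.coe_rpow, NNReal.coe_rpow, NNReal.coe_rpow,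
    Real.coe_toNNReal _ ha, Real.coe_toNNReal _ hc,
    Real.coe_toNNReal _ (by positivity : (0:ℝ) ≤ a + c)] at h2

private lemma key_pos {α : ℝ} (hα1 : 1 < α) (hα2 : α < 2) {b x : ℝ} (hb : 0 < b) (hx : x ≠ 0) :
    ((α - 1) * 2 ^ (α - 2)) * min (b * |x| ^ (α - 2)) (b ^ (α - 1)) ≤
      x * |x| ^ (α - 2) - (x - b) * |x - b| ^ (α - 2) := by
  have hβ0 : (0:ℝ) < α - 1 := by linarith
  have hβ1 : α - 1 ≤ 1 := by linarith
  have h2le : (2:ℝ) ^ (α - 2) ≤ 1 :=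
    Real.rpow_le_one_of_one_le_of_nonpos one_le_two (by linarith)
  have h2pos : (0:ℝ) < 2 ^ (α - 2) := Real.rpow_pos_of_pos two_pos _
  have Gnonneg : ∀ y : ℝ, 0 ≤ y → y * |y| ^ (α - 2) = y ^ (α - 1) := by
    intro y hy
    rcases eq_or_lt_of_le hy with h | h
    · rw [← h]
      simp [Real.zero_rpow hβ0.ne']
    · rw [abs_of_pos h, show α - 1 = (α - 2) + 1 by ring, Real.rpow_add_one h.ne']
      ring
  have Gnonpos : ∀ y : ℝ, y ≤ 0 → y * |y| ^ (α - 2) = -((-y) ^ (α - 1)) := by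
    intro y hy
    rcases eq_or_lt_of_le hy with h | h
    · rw [h]
      simp [Real.zero_rpow hβ0.ne']
    · rw [abs_of_neg h, show α - 1 = (α - 2) + 1 by ring,
        Real.rpow_add_one (neg_ne_zero.2 h.ne)]
      ring
  have hminb : min (b * |x| ^ (α - 2)) (b ^ (α - 1)) ≤ b ^ (α - 1) := min_le_right _ _
  have hbpow : b ^ (α - 1) = b ^ (α - 2) * b := by
    rw [show α - 1 = (α - 2) + 1 by ring, Real.rpow_add_one hb.ne']
  rcases hx.lt_or_gt with hxneg | hxpos
  · -- x < 0
    set t := -x with ht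
    have htpos : 0 < t := by simp [ht]; linarith
    have hxb : x - b < 0 := by linarith
    have habs : |x| = t := abs_of_neg hxneg
    rw [Gnonpos x hxneg.le, Gnonpos (x - b) hxb.le, habs, show -(x - b) = b + t by ring,
      show -x = t from rfl]
    have hminx : min (b * t ^ (α - 2)) (b ^ (α - 1)) ≤ b * t ^ (α - 2) := min_le_left _ _
    have hbc := bern_concave hβ0 hβ1 htpos.le (by linarith : t ≤ b + t)
    rw [show b + t - t = b by ring, show α - 1 - 1 = α - 2 by ring] at hbc
    rcases le_total t b with hc | hc
    · have h1 : (2 * b) ^ (α - 2) ≤ (b + t) ^ (α - 2) :=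
        Real.rpow_le_rpow_of_nonpos (by linarith) (by linarith) (by linarith)
      have h2 : ((2:ℝ) * b) ^ (α - 2) = 2 ^ (α - 2) * b ^ (α - 2) :=
        Real.mul_rpow (by norm_num) hb.le
      have e1 : (α - 1) * 2 ^ (α - 2) * min (b * t ^ (α - 2)) (b ^ (α - 1)) ≤
          (α - 1) * 2 ^ (α - 2) * b ^ (α - 1) :=
        mul_le_mul_of_nonneg_left (min_le_right _ _) (by positivity)
      have e2 : (α - 1) * 2 ^ (α - 2) * b ^ (α - 1) = (α - 1) * b * ((2 * b) ^ (α - 2)) := by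
        rw [h2, hbpow]; ring
      have e3 : (α - 1) * b * ((2 * b) ^ (α - 2)) ≤ (α - 1) * b * ((b + t) ^ (α - 2)) :=
        mul_le_mul_of_nonneg_left h1 (by positivity)
      linarith
    · have h1 : (2 * t) ^ (α - 2) ≤ (b + t) ^ (α - 2) :=
        Real.rpow_le_rpow_of_nonpos (by linarith) (by linarith) (by linarith)
      have h2 : ((2:ℝ) * t) ^ (α - 2) = 2 ^ (α - 2) * t ^ (α - 2) :=
        Real.mul_rpow (by norm_num) htpos.le
      have e1 : (α - 1) * 2 ^ (α - 2) * min (b * t ^ (α - 2)) (b ^ (α - 1)) ≤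
          (α - 1) * 2 ^ (α - 2) * (b * t ^ (α - 2)) :=
        mul_le_mul_of_nonneg_left hminx (by positivity)
      have e2 : (α - 1) * 2 ^ (α - 2) * (b * t ^ (α - 2)) = (α - 1) * b * ((2 * t) ^ (α - 2)) := by
        rw [h2]; ring
      have e3 : (α - 1) * b * ((2 * t) ^ (α - 2)) ≤ (α - 1) * b * ((b + t) ^ (α - 2)) :=
        mul_le_mul_of_nonneg_left h1 (by positivity)
      linarith
  · -- x > 0
    rw [Gnonneg x hxpos.le, abs_of_pos hxpos]
    have hminx : min (b * x ^ (α - 2)) (b ^ (α - 1)) ≤ b * x ^ (α - 2) := min_le_left _ _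
    rcases le_total b x with hc | hc
    · rw [Gnonneg (x - b) (by linarith)]
      have hbc := bern_concave hβ0 hβ1 (by linarith : (0:ℝ) ≤ x - b) (by linarith : x - b ≤ x)
      rw [show x - (x - b) = b by ring, show α - 1 - 1 = α - 2 by ring] at hbc
      have e1 : (α - 1) * 2 ^ (α - 2) * min (b * x ^ (α - 2)) (b ^ (α - 1)) ≤
          (α - 1) * 2 ^ (α - 2) * (b * x ^ (α - 2)) :=
        mul_le_mul_of_nonneg_left hminx (by positivity)
      have e2 : (α - 1) * 2 ^ (α - 2) * (b * x ^ (α - 2)) ≤ (α - 1) * b * x ^ (α - 2) := by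
        have hx2 : (0:ℝ) < x ^ (α - 2) := Real.rpow_pos_of_pos hxpos _
        nlinarith [mul_nonneg (mul_nonneg hβ0.le (mul_pos hb hx2).le) (sub_nonneg.2 h2le)]
      linarith
    · rw [Gnonpos (x - b) (by linarith), show -(x - b) = b - x by ring]
      have hsub := rpow_subadd hβ0.le hβ1 hxpos.le (by linarith : (0:ℝ) ≤ b - x)
      rw [show x + (b - x) = b by ring] at hsub
      have hbp : (0:ℝ) < b ^ (α - 1) := Real.rpow_pos_of_pos hb _
      have e1 : (α - 1) * 2 ^ (α - 2) * min (b * x ^ (α - 2)) (b ^ (α - 1)) ≤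
          (α - 1) * 2 ^ (α - 2) * b ^ (α - 1) :=
        mul_le_mul_of_nonneg_left (min_le_right _ _) (by positivity)
      have hcle1 : (α - 1) * 2 ^ (α - 2) ≤ 1 := by nlinarith
      have e2 : (α - 1) * 2 ^ (α - 2) * b ^ (α - 1) ≤ b ^ (α - 1) := by
        nlinarith [mul_nonneg (sub_nonneg.2 hcle1) hbp.le]
      linarith

/-- Lower bound for the derivative of `φ_{b,-}(x) = |x|^α - |x-b|^α`
when `α ∈ (1,2)`. -/
theorem phi_minus_deriv_lower (α : ℝ) (hα : α ∈ Set.Ioo (1 : ℝ) 2) :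
    ∃ c : ℝ, 0 < c ∧ ∀ b x : ℝ, x ≠ 0 →
      c * min (|b| * |x| ^ (α - 2)) (|b| ^ (α - 1)) ≤
        |deriv (fun y : ℝ => |y| ^ α - |y - b| ^ α) x| := by
  obtain ⟨hα1, hα2⟩ := hα
  have hαpos : (0:ℝ) < α := by linarith
  have hβ0 : (0:ℝ) < α - 1 := by linarith
  have h2pos : (0:ℝ) < 2 ^ (α - 2) := Real.rpow_pos_of_pos two_pos _
  refine ⟨α * ((α - 1) * 2 ^ (α - 2)), by positivity, ?_⟩
  intro b x hx
  have hd : deriv (fun y : ℝ => |y| ^ α - |y - b| ^ α) x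
      = α * (x * |x| ^ (α - 2) - (x - b) * |x - b| ^ (α - 2)) := by
    have h1 : HasDerivAt (fun y : ℝ => |y| ^ α) (α * |x| ^ (α - 2) * x) x :=
      hasDerivAt_abs_rpow x hα1
    have h2 : HasDerivAt (fun y : ℝ => |y - b| ^ α) (α * |x - b| ^ (α - 2) * (x - b)) x := by
      have := (hasDerivAt_abs_rpow (x - b) hα1).comp x ((hasDerivAt_id x).sub_const b)
      simpa [Function.comp_def] using this
    have := (h1.sub h2).deriv
    rw [show (fun y : ℝ => |y| ^ α - |y - b| ^ α) = (fun y => |y| ^ α) - (fun y => |y - b| ^ α) from rfl, this]; ring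
  rw [hd, abs_mul, abs_of_pos hαpos, mul_assoc]
  refine mul_le_mul_of_nonneg_left ?_ hαpos.le
  rcases lt_trichotomy b 0 with hb | rfl | hb
  · -- b < 0
    have hkey := key_pos hα1 hα2 (b := -b) (x := -x) (by linarith) (neg_ne_zero.2 hx)
    rw [abs_neg] at hkey
    have heq : (-x) * |x| ^ (α - 2) - (-x - -b) * |-x - -b| ^ (α - 2)
        = -(x * |x| ^ (α - 2) - (x - b) * |x - b| ^ (α - 2)) := by
      rw [show -x - -b = -(x - b) by ring, abs_neg]
      ring
    rw [heq] at hkey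
    rw [abs_of_neg hb]
    exact hkey.trans (neg_le_abs _)
  · -- b = 0
    simp [Real.zero_rpow hβ0.ne']
  · -- b > 0
    have hkey := key_pos hα1 hα2 hb hx
    rw [abs_of_pos hb]
    exact hkey.trans (le_abs_self _)
end

section
/- Let α ∈ (1,2) and θ ∈ (0,1]. There exists a constant c = c(α,θ) > 0 such that for every b ∈ ℝ with |b| ≥ 1 and every x ∈ ℝ with |2x − b| ≥ θ|b|, the function φ_{b,+}(x) = |x|^α + |x − b|^α satisfies |φ'_{b,+}(x)| ≥ c · |b|^{α−1}. -/
open Real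

/-- Core concavity inequality: for `0 ≤ w ≤ x`, `s ∈ (0,1)`,
`s * x^(s-1) * (x - w) ≤ x^s - w^s`. -/
lemma core_ineq {s x w : ℝ} (hs0 : 0 < s) (hs1 : s < 1) (hw : 0 ≤ w) (hwx : w ≤ x) :
    s * x ^ (s - 1) * (x - w) ≤ x ^ s - w ^ s := by
  rcases eq_or_lt_of_le (hw.trans hwx) with hx | hx
  · rw [← hx] at hwx ⊢
    have hw0 : w = 0 := le_antisymm hwx hw
    subst hw0
    simp [Real.zero_rpow hs0.ne', Real.zero_rpow (by linarith : s - 1 ≠ 0)]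
  · set t := w / x with ht
    have ht0 : 0 ≤ t := div_nonneg hw hx.le
    have hB : (1 + (t - 1)) ^ s ≤ 1 + s * (t - 1) :=
      rpow_one_add_le_one_add_mul_self (by linarith) hs0.le hs1.le
    rw [show (1 : ℝ) + (t - 1) = t by ring] at hB
    have hws : w ^ s = t ^ s * x ^ s := by
      rw [← Real.mul_rpow ht0 hx.le, ht, div_mul_cancel₀ _ hx.ne']
    have hxs : 0 < x ^ s := Real.rpow_pos_of_pos hx s
    have hxs1 : x ^ (s - 1) * x = x ^ s := by
      rw [← Real.rpow_add_one hx.ne' (s - 1), sub_add_cancel]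
    have h1 : t ^ s * x ^ s ≤ (1 + s * (t - 1)) * x ^ s :=
      mul_le_mul_of_nonneg_right hB hxs.le
    have h2 : (1 + s * (t - 1)) * x ^ s = x ^ s - s * x ^ (s - 1) * (x - w) := by
      have h3 : x ^ s * (1 - t) = x ^ (s - 1) * (x - w) := by
        rw [← hxs1]; field_simp [ht]; rw [ht, mul_sub, mul_one, mul_div_assoc', mul_div_cancel_left₀ _ hx.ne']
      nlinarith [h3]
    rw [hws]; nlinarith [h1, h2]

/-- Key positive-case lemma. -/
lemma key_pos_s2 {s θ b x : ℝ} (hs0 : 0 < s) (hs1 : s < 1) (hθ0 : 0 < θ) (hθ1 : θ ≤ 1)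
    (hb : 0 < b) (hS : θ * b ≤ 2 * x - b) :
    s * θ / 2 * b ^ s ≤ |x| ^ (s - 1) * x + |x - b| ^ (s - 1) * (x - b) := by
  have hbs : 0 < b ^ s := Real.rpow_pos_of_pos hb s
  have hx0 : 0 < x := by nlinarith
  have hxabs : |x| = x := abs_of_pos hx0
  have hgx : |x| ^ (s - 1) * x = x ^ s := by
    rw [hxabs, ← Real.rpow_add_one hx0.ne' (s - 1), sub_add_cancel]
  have hsθ : s * θ ≤ 1 := by nlinarith
  rcases le_or_gt b x with hv | hv
  · -- x - b ≥ 0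
    have hv0 : 0 ≤ x - b := by linarith
    have hgv : 0 ≤ |x - b| ^ (s - 1) * (x - b) :=
      mul_nonneg (Real.rpow_nonneg (abs_nonneg _) _) hv0
    have hxb2 : b / 2 ≤ x := by nlinarith
    have h1 : (b / 2) ^ s ≤ x ^ s := Real.rpow_le_rpow (by positivity) hxb2 hs0.le
    have h2 : b ^ s / 2 ≤ (b / 2) ^ s := by
      rw [Real.div_rpow hb.le (by norm_num : (0:ℝ) ≤ 2)]
      have h2' : (2:ℝ) ^ s ≤ 2 ^ (1:ℝ) :=
        Real.rpow_le_rpow_of_exponent_le (by norm_num) hs1.le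
      rw [Real.rpow_one] at h2'
      exact div_le_div_of_nonneg_left hbs.le (by positivity) h2'
    have h3 : s * θ / 2 * b ^ s ≤ b ^ s / 2 := by nlinarith
    rw [hgx]; nlinarith
  · -- x - b < 0
    set w := b - x with hwdef
    have hwpos : 0 < w := by simp only [hwdef]; linarith
    have hwx : w ≤ x := by simp only [hwdef]; nlinarith
    have hxb : x ≤ b := by simp only [hwdef] at hwpos; linarith
    have hws : w ^ (s - 1) * w = w ^ s := by
      rw [← Real.rpow_add_one hwpos.ne' (s - 1), sub_add_cancel]
    have hgv : |x - b| ^ (s - 1) * (x - b) = -(w ^ s) := by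
      have habs : |x - b| = w := by
        rw [abs_of_neg (by linarith : x - b < 0)]; simp [hwdef]
      have hxbw : x - b = -w := by simp [hwdef]
      rw [habs, hxbw, mul_neg, hws]
    have hc := core_ineq hs0 hs1 hwpos.le hwx
    have hb1 : b ^ (s - 1) ≤ x ^ (s - 1) :=
      Real.rpow_le_rpow_of_nonpos hx0 hxb (by linarith)
    have hbs1 : b ^ (s - 1) * b = b ^ s := by
      rw [← Real.rpow_add_one hb.ne' (s - 1), sub_add_cancel]
    have hxw : θ * b ≤ x - w := by simp only [hwdef]; linarith
    have t1 : s * (b ^ (s - 1) * (θ * b)) ≤ s * (x ^ (s - 1) * (x - w)) := by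
      apply mul_le_mul_of_nonneg_left _ hs0.le
      exact mul_le_mul hb1 hxw (by positivity)
        (Real.rpow_nonneg hx0.le _)
    have t2 : b ^ (s - 1) * (θ * b) = θ * b ^ s := by rw [← hbs1]; ring
    rw [t2] at t1
    rw [hgx, hgv]
    nlinarith [mul_nonneg (mul_nonneg hs0.le hθ0.le) hbs.le]

/-- Wrapper for `b > 0` with absolute-value hypothesis. -/
lemma key_abs_pos {s θ b x : ℝ} (hs0 : 0 < s) (hs1 : s < 1) (hθ0 : 0 < θ) (hθ1 : θ ≤ 1)
    (hb : 0 < b) (hS : θ * b ≤ |2 * x - b|) :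
    s * θ / 2 * b ^ s ≤ |(|x| ^ (s - 1) * x + |x - b| ^ (s - 1) * (x - b))| := by
  rcases le_abs.mp hS with h | h
  · exact (key_pos_s2 hs0 hs1 hθ0 hθ1 hb h).trans (le_abs_self _)
  · have h' : θ * b ≤ 2 * (b - x) - b := by linarith
    have hk := key_pos_s2 hs0 hs1 hθ0 hθ1 hb h'
    have e1 : |b - x| ^ (s - 1) * (b - x) = -(|x - b| ^ (s - 1) * (x - b)) := by
      rw [show b - x = -(x - b) by ring, abs_neg, mul_neg]
    have e2 : |b - x - b| ^ (s - 1) * (b - x - b) = -(|x| ^ (s - 1) * x) := by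
      rw [show b - x - b = -x by ring, abs_neg, mul_neg]
    rw [e1, e2] at hk
    calc s * θ / 2 * b ^ s
        ≤ -(|x| ^ (s - 1) * x + |x - b| ^ (s - 1) * (x - b)) := by linarith
      _ ≤ |(|x| ^ (s - 1) * x + |x - b| ^ (s - 1) * (x - b))| := neg_le_abs _

/-- Full wrapper. -/
lemma key_abs {s θ b x : ℝ} (hs0 : 0 < s) (hs1 : s < 1) (hθ0 : 0 < θ) (hθ1 : θ ≤ 1)
    (hb : b ≠ 0) (hS : θ * |b| ≤ |2 * x - b|) :
    s * θ / 2 * |b| ^ s ≤ |(|x| ^ (s - 1) * x + |x - b| ^ (s - 1) * (x - b))| := by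
  rcases hb.lt_or_gt with hneg | hpos
  · have hb' : 0 < -b := by linarith
    have habs : |b| = -b := abs_of_neg hneg
    have hS' : θ * (-b) ≤ |2 * (-x) - (-b)| := by
      rw [show 2 * (-x) - (-b) = -(2 * x - b) by ring, abs_neg, ← habs]; exact hS
    have hk := key_abs_pos hs0 hs1 hθ0 hθ1 hb' hS'
    have e1 : |(-x)| ^ (s - 1) * (-x) = -(|x| ^ (s - 1) * x) := by
      rw [abs_neg, mul_neg]
    have e2 : |(-x) - (-b)| ^ (s - 1) * ((-x) - (-b)) = -(|x - b| ^ (s - 1) * (x - b)) := by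
      rw [show (-x) - (-b) = -(x - b) by ring, abs_neg, mul_neg]
    rw [e1, e2, ← neg_add, abs_neg, ← habs] at hk
    exact hk
  · rw [abs_of_pos hpos] at hS ⊢
    exact key_abs_pos hs0 hs1 hθ0 hθ1 hpos hS

/-- Lower bound for the derivative of `φ_{b,+}(x) = |x|^α + |x-b|^α`
when `α ∈ (1,2)`, `|b| ≥ 1` and `|2x - b| ≥ θ |b|`. -/
theorem phi_plus_deriv_lower_far (α θ : ℝ) (hα : α ∈ Set.Ioo (1 : ℝ) 2)
    (hθ : θ ∈ Set.Ioc (0 : ℝ) 1) :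
    ∃ c : ℝ, 0 < c ∧ ∀ b x : ℝ, 1 ≤ |b| → θ * |b| ≤ |2 * x - b| →
      c * |b| ^ (α - 1) ≤ |deriv (fun y : ℝ => |y| ^ α + |y - b| ^ α) x| := by
  obtain ⟨hα1, hα2⟩ := hα
  obtain ⟨hθ0, hθ1⟩ := hθ
  refine ⟨α * ((α - 1) * θ / 2), mul_pos (by linarith) (by nlinarith [mul_pos (show (0:ℝ) < α - 1 by linarith) hθ0]), fun b x hb hS => ?_⟩
  have hb0 : b ≠ 0 := by
    intro h; rw [h, abs_zero] at hb; linarith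
  -- compute the derivative
  have h1 : HasDerivAt (fun y : ℝ => |y| ^ α) (α * |x| ^ (α - 2) * x) x :=
    hasDerivAt_abs_rpow x hα1
  have h2 : HasDerivAt (fun y : ℝ => |y - b| ^ α) (α * |x - b| ^ (α - 2) * (x - b)) x := by
    have := (hasDerivAt_abs_rpow (x - b) hα1).comp x ((hasDerivAt_id x).sub_const b)
    simpa [Function.comp_def] using this
  have hd : deriv (fun y : ℝ => |y| ^ α + |y - b| ^ α) x
      = α * |x| ^ (α - 2) * x + α * |x - b| ^ (α - 2) * (x - b) := (h1.add h2).deriv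
  rw [hd]
  have key := key_abs (s := α - 1) (θ := θ) (b := b) (x := x)
    (by linarith) (by linarith) hθ0 hθ1 hb0 hS
  rw [show α - 1 - 1 = α - 2 by ring] at key
  have e : α * |x| ^ (α - 2) * x + α * |x - b| ^ (α - 2) * (x - b)
      = α * (|x| ^ (α - 2) * x + |x - b| ^ (α - 2) * (x - b)) := by ring
  rw [e, abs_mul, abs_of_pos (by linarith : (0:ℝ) < α)]
  calc α * ((α - 1) * θ / 2) * |b| ^ (α - 1)
      = α * ((α - 1) * θ / 2 * |b| ^ (α - 1)) := by ring
    _ ≤ α * |(|x| ^ (α - 2) * x + |x - b| ^ (α - 2) * (x - b))| :=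
        mul_le_mul_of_nonneg_left key (by linarith)
end

section
/- Let α ∈ (1,2). There exists a constant c = c(α) > 0 such that for every b ∈ ℝ with |b| ≥ 1 and every x ∈ ℝ with |2x − b| ≥ |b|^{1−α/2}, the function φ_{b,+}(x) = |x|^α + |x − b|^α satisfies |φ'_{b,+}(x)| ≥ c · |b|^{α/2−1}. -/
open Real

noncomputable def Gsgn (p : ℝ) (y : ℝ) : ℝ := if 0 ≤ y then y ^ p else -((-y) ^ p)

lemma Gsgn_neg (p : ℝ) (hp : 0 < p) (y : ℝ) : Gsgn p (-y) = -Gsgn p y := by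
  unfold Gsgn
  rcases lt_trichotomy y 0 with h | rfl | h
  · rw [if_pos (by linarith), if_neg (not_le.mpr h), neg_neg]
  · simp [Real.zero_rpow hp.ne']
  · rw [if_neg (by linarith), if_pos h.le, neg_neg]

lemma Gsgn_mono (p : ℝ) (hp : 0 < p) : Monotone (Gsgn p) := by
  intro a c hac
  unfold Gsgn
  rcases le_or_gt 0 a with ha | ha
  · rw [if_pos ha, if_pos (ha.trans hac)]
    exact Real.rpow_le_rpow ha hac hp.le
  · rcases le_or_gt 0 c with hc | hc
    · rw [if_neg (not_le.mpr ha), if_pos hc]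
      have : (0:ℝ) ≤ c ^ p := Real.rpow_nonneg hc p
      have : (0:ℝ) ≤ (-a) ^ p := Real.rpow_nonneg (by linarith) p
      linarith [Real.rpow_nonneg hc p]
    · rw [if_neg (not_le.mpr ha), if_neg (not_le.mpr hc)]
      have := Real.rpow_le_rpow (by linarith : (0:ℝ) ≤ -c) (by linarith : -c ≤ -a) hp.le
      linarith

lemma phi_hasDerivAt_abs_rpow {α : ℝ} (hα : 1 < α) (y : ℝ) :
    HasDerivAt (fun x : ℝ => |x| ^ α) (α * Gsgn (α - 1) y) y := by
  have hp : (0:ℝ) < α - 1 := by linarith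
  rcases lt_trichotomy y 0 with hy | rfl | hy
  · have h1 : HasDerivAt (fun x : ℝ => (-x) ^ α) (α * (-y) ^ (α - 1) * (-1)) y :=
      (Real.hasDerivAt_rpow_const (p := α) (Or.inl (by linarith : -y ≠ 0))).comp y
        (hasDerivAt_neg y)
    have h2 : (fun x : ℝ => (-x) ^ α) =ᶠ[nhds y] (fun x : ℝ => |x| ^ α) := by
      filter_upwards [Iio_mem_nhds hy] with x hx
      rw [abs_of_neg hx]
    have h3 := h1.congr_of_eventuallyEq h2.symm
    have e : α * Gsgn (α - 1) y = α * (-y) ^ (α - 1) * (-1) := by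
      unfold Gsgn
      rw [if_neg (not_le.mpr hy)]; ring
    rw [e]; exact h3
  · have : α * Gsgn (α - 1) 0 = 0 := by
      unfold Gsgn
      rw [if_pos le_rfl, Real.zero_rpow hp.ne', mul_zero]
    rw [this, hasDerivAt_iff_tendsto_slope]
    apply squeeze_zero_norm' (a := fun x : ℝ => |x| ^ (α - 1))
    · filter_upwards [self_mem_nhdsWithin] with x (hx : x ≠ 0)
      have hx' : (0:ℝ) < |x| := abs_pos.mpr hx
      have : ‖slope (fun x : ℝ => |x| ^ α) 0 x‖ = |x| ^ α / |x| := by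
        rw [slope_def_field]
        rw [abs_zero, Real.zero_rpow (by linarith : α ≠ 0), sub_zero, sub_zero]
        rw [Real.norm_eq_abs, abs_div, abs_of_nonneg (Real.rpow_nonneg (abs_nonneg x) α)]
      rw [this, Real.rpow_sub hx', Real.rpow_one]
    · have hc : ContinuousAt (fun r : ℝ => r ^ (α - 1)) 0 :=
        Real.continuousAt_rpow_const 0 (α - 1) (Or.inr hp.le)
      have : Filter.Tendsto (fun x : ℝ => |x| ^ (α - 1)) (nhds 0) (nhds 0) := by
        have h0 : Filter.Tendsto (fun x : ℝ => |x|) (nhds 0) (nhds 0) := by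
          simpa using continuous_abs.tendsto (0:ℝ)
        have := hc.tendsto.comp h0
        simpa [Real.zero_rpow hp.ne', Function.comp_def] using this
      exact this.mono_left nhdsWithin_le_nhds
  · have h1 : HasDerivAt (fun x : ℝ => x ^ α) (α * y ^ (α - 1)) y :=
      Real.hasDerivAt_rpow_const (Or.inl hy.ne')
    have h2 : (fun x : ℝ => x ^ α) =ᶠ[nhds y] (fun x : ℝ => |x| ^ α) := by
      filter_upwards [Ioi_mem_nhds hy] with x hx
      rw [abs_of_pos hx]
    have h3 := h1.congr_of_eventuallyEq h2.symm
    have e : α * Gsgn (α - 1) y = α * y ^ (α - 1) := by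
      unfold Gsgn
      rw [if_pos hy.le]
    rw [e]; exact h3

lemma deriv_phi {α : ℝ} (hα : 1 < α) (b x : ℝ) :
    deriv (fun y : ℝ => |y| ^ α + |y - b| ^ α) x
      = α * (Gsgn (α - 1) x + Gsgn (α - 1) (x - b)) := by
  have h1 := phi_hasDerivAt_abs_rpow hα x
  have h2 : HasDerivAt (fun y : ℝ => |y - b| ^ α) (α * Gsgn (α - 1) (x - b)) x := by
    have := (phi_hasDerivAt_abs_rpow hα (x - b)).comp x ((hasDerivAt_id x).sub_const b)
    simpa [Function.comp_def] using this
  rw [show (fun y : ℝ => |y| ^ α + |y - b| ^ α) = (fun x : ℝ => |x| ^ α) + (fun y : ℝ => |y - b| ^ α) from rfl, (h1.add h2).deriv]; ring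

lemma key_ineq {p u v : ℝ} (hp1 : 0 < p) (hp2 : p ≤ 1) (hv : 0 ≤ v) (huv : v ≤ u)
    (hu : 0 < u) : p * u ^ (p - 1) * (u - v) ≤ u ^ p - v ^ p := by
  have hs : -1 ≤ v / u - 1 := by
    have h0 : 0 ≤ v / u := div_nonneg hv hu.le
    linarith
  have hb := rpow_one_add_le_one_add_mul_self hs hp1.le hp2
  rw [show 1 + (v / u - 1) = v / u by ring, Real.div_rpow hv hu.le] at hb
  have hup : (0:ℝ) < u ^ p := Real.rpow_pos_of_pos hu p
  have h1 : u ^ (p - 1) = u ^ p / u := by rw [Real.rpow_sub hu, Real.rpow_one]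
  rw [div_le_iff₀ hup] at hb
  have hu' : u ≠ 0 := hu.ne'
  have hb2 : v ^ p ≤ u ^ p + p * (u ^ p / u) * v - p * u ^ p := by
    have heq : (1 + p * (v / u - 1)) * u ^ p = u ^ p + p * (u ^ p / u) * v - p * u ^ p := by
      field_simp; ring
    linarith [hb.trans_eq heq]
  rw [h1]
  have heq2 : p * (u ^ p / u) * (u - v) = p * u ^ p - p * (u ^ p / u) * v := by
    field_simp
  rw [heq2]; linarith

/-- Lower bound for the derivative of `φ_{b,+}(x) = |x|^α + |x-b|^α`
when `α ∈ (1,2)`, `|b| ≥ 1` and `|2x - b| ≥ |b|^{1-α/2}`. -/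
theorem phi_plus_deriv_lower_sharp (α : ℝ) (hα : α ∈ Set.Ioo (1 : ℝ) 2) :
    ∃ c : ℝ, 0 < c ∧ ∀ b x : ℝ, 1 ≤ |b| → |b| ^ (1 - α / 2) ≤ |2 * x - b| →
      c * |b| ^ (α / 2 - 1) ≤ |deriv (fun y : ℝ => |y| ^ α + |y - b| ^ α) x| := by
  obtain ⟨hα1, hα2⟩ := hα
  have hp1 : (0:ℝ) < α - 1 := by linarith
  have hp2 : α - 1 ≤ 1 := by linarith
  set p : ℝ := α - 1 with hpdef
  refine ⟨α * p, by nlinarith, ?_⟩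
  intro b x hb hx
  have hbpos : (0:ℝ) < |b| := lt_of_lt_of_le one_pos hb
  rw [deriv_phi hα1 b x]
  set m : ℝ := |b| / 2 with hmdef
  set t : ℝ := x - b / 2 with htdef
  set t0 : ℝ := |b| ^ (1 - α / 2) / 2 with ht0def
  have ht0pos : 0 < t0 := half_pos (Real.rpow_pos_of_pos hbpos _)
  have ht0m : t0 ≤ m := by
    have h := Real.rpow_le_rpow_of_exponent_le hb (by linarith : 1 - α / 2 ≤ 1)
    rw [Real.rpow_one] at h
    rw [ht0def, hmdef]; linarith
  have hDelta : Gsgn p x + Gsgn p (x - b) = Gsgn p (m + t) - Gsgn p (m - t) := by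
    rcases abs_cases b with ⟨h1, _⟩ | ⟨h1, _⟩
    · have e1 : m + t = x := by rw [hmdef, htdef, h1]; ring
      have e2 : m - t = -(x - b) := by rw [hmdef, htdef, h1]; ring
      rw [e1, e2, Gsgn_neg p hp1, sub_neg_eq_add]
    · have e1 : m + t = x - b := by rw [hmdef, htdef, h1]; ring
      have e2 : m - t = -x := by rw [hmdef, htdef, h1]; ring
      rw [e1, e2, Gsgn_neg p hp1, sub_neg_eq_add, add_comm]
  have ht : t0 ≤ |t| := by
    have h2t : |2 * x - b| = 2 * |t| := by
      rw [show 2 * x - b = 2 * t by rw [htdef]; ring, abs_mul]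
      norm_num
    rw [h2t] at hx
    rw [ht0def]; linarith
  have hΔ0 : p * |b| ^ (α / 2 - 1) ≤ Gsgn p (m + t0) - Gsgn p (m - t0) := by
    have hmt0 : 0 ≤ m - t0 := by linarith
    have hmt0' : 0 < m + t0 := by linarith
    have hG1 : Gsgn p (m + t0) = (m + t0) ^ p := if_pos hmt0'.le
    have hG2 : Gsgn p (m - t0) = (m - t0) ^ p := if_pos hmt0
    rw [hG1, hG2]
    have h1 := key_ineq hp1 hp2 hmt0 (by linarith : m - t0 ≤ m + t0) hmt0'
    have h2 : |b| ^ (p - 1) ≤ (m + t0) ^ (p - 1) := by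
      apply Real.rpow_le_rpow_of_nonpos hmt0' (by rw [hmdef] at *; linarith) (by linarith)
    have h3 : p * |b| ^ (p - 1) * (m + t0 - (m - t0)) ≤ p * (m + t0) ^ (p - 1) * (m + t0 - (m - t0)) := by
      have hnn : (0:ℝ) ≤ m + t0 - (m - t0) := by linarith
      exact mul_le_mul_of_nonneg_right (mul_le_mul_of_nonneg_left h2 hp1.le) hnn
    have h4 : p * |b| ^ (p - 1) * (m + t0 - (m - t0)) = p * |b| ^ (α / 2 - 1) := by
      have e : m + t0 - (m - t0) = |b| ^ (1 - α / 2) := by rw [ht0def]; ring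
      have ee : p - 1 + (1 - α / 2) = α / 2 - 1 := by rw [hpdef]; ring
      rw [e, mul_assoc, ← Real.rpow_add hbpos, ee]
    rw [← h4]; exact h3.trans h1
  have hmono := Gsgn_mono p hp1
  have habs : Gsgn p (m + t0) - Gsgn p (m - t0) ≤ |Gsgn p (m + t) - Gsgn p (m - t)| := by
    rcases le_abs.mp ht with h | h
    · have a1 : Gsgn p (m + t0) ≤ Gsgn p (m + t) := hmono (by linarith)
      have a2 : Gsgn p (m - t) ≤ Gsgn p (m - t0) := hmono (by linarith)
      exact le_trans (by linarith) (le_abs_self _)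
    · have a1 : Gsgn p (m + t) ≤ Gsgn p (m - t0) := hmono (by linarith)
      have a2 : Gsgn p (m + t0) ≤ Gsgn p (m - t) := hmono (by linarith)
      have : Gsgn p (m + t0) - Gsgn p (m - t0) ≤ -(Gsgn p (m + t) - Gsgn p (m - t)) := by linarith
      exact le_trans this (neg_le_abs _)
  rw [hDelta, abs_mul, abs_of_pos (by linarith : (0:ℝ) < α)]
  calc α * p * |b| ^ (α / 2 - 1) = α * (p * |b| ^ (α / 2 - 1)) := by ring
    _ ≤ α * (Gsgn p (m + t0) - Gsgn p (m - t0)) := by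
        apply mul_le_mul_of_nonneg_left hΔ0 (by linarith)
    _ ≤ α * |Gsgn p (m + t) - Gsgn p (m - t)| := by
        apply mul_le_mul_of_nonneg_left habs (by linarith)
end

section
/- There exists a constant C = C(α,c₀) such that for all m ∈ ℝ and all N, N₁, N₂, N₃ with 1 ≤ N₁, N₂, N₃ ≤ N the following fiber bounds hold: (a) for every (k,k₁) ∈ ℤ², #S_{k k₁} ≤ C·((min(N₂,N₃))^{2−α}·⟨k₁−k⟩^{−1} + 1); (b) for every (k,k₃) ∈ ℤ², #S_{k k₃} ≤ C·((min(N₁,N₂))^{2−α}·⟨k−k₃⟩^{−1} + 1); (c) for every (k₁,k₂) ∈ ℤ², #S_{k₁ k₂} ≤ C·(N₃^{2−α}·⟨k₁−k₂⟩^{−1} + 1); (d) for every (k₂,k₃) ∈ ℤ², #S_{k₂ k₃} ≤ C·(N₁^{2−α}·⟨k₂−k₃⟩^{−1} + 1). -/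
/-- The set `S ⊆ ℤ⁴` of frequencies `(k, k₁, k₂, k₃)` with `k = k₁ - k₂ + k₃`,
`k₂ ∉ {k₁, k₃}`, `| |k₁|^α - |k₂|^α + |k₃|^α - |k|^α - m | ≤ c₀`, `|k| ≤ N` and
`|kⱼ| ≤ Nⱼ` for `j = 1, 2, 3`. -/
def Sset (α c₀ m N N₁ N₂ N₃ : ℝ) : Set (ℤ × ℤ × ℤ × ℤ) :=
  {p | p.1 = p.2.1 - p.2.2.1 + p.2.2.2 ∧ p.2.2.1 ≠ p.2.1 ∧ p.2.2.1 ≠ p.2.2.2 ∧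
    |(|p.2.1| : ℝ) ^ α - (|p.2.2.1| : ℝ) ^ α + (|p.2.2.2| : ℝ) ^ α - (|p.1| : ℝ) ^ α - m| ≤ c₀ ∧
    (|p.1| : ℝ) ≤ N ∧ (|p.2.1| : ℝ) ≤ N₁ ∧ (|p.2.2.1| : ℝ) ≤ N₂ ∧ (|p.2.2.2| : ℝ) ≤ N₃}

/-- The Japanese bracket `⟨n⟩ = (1 + n²)^{1/2}` of an integer. -/
noncomputable def jb (n : ℤ) : ℝ := Real.sqrt (1 + (n : ℝ) ^ 2)


open Real Set
set_option maxHeartbeats 1000000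

variable {α : ℝ}

/-- Bernoulli-type: concavity tangent bound for `t ↦ t^(α-1)`. -/
lemma lemB (hα1 : 1 < α) (hα2 : α < 2) {q t : ℝ} (h0 : 0 ≤ q) (hqt : q ≤ t) :
    (α - 1) * t ^ (α - 2) * (t - q) ≤ t ^ (α - 1) - q ^ (α - 1) := by
  rcases eq_or_lt_of_le (h0.trans hqt) with h | ht
  · have hq : q = 0 := le_antisymm (hqt.trans h.symm.le) h0
    simp [← h, hq]
  · have hts : q / t - 1 ∈ Set.Iic (0:ℝ) := by
      simp only [Set.mem_Iic, sub_nonpos]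
      exact (div_le_one ht).2 hqt
    have hs : (-1:ℝ) ≤ q / t - 1 := by
      have : (0:ℝ) ≤ q / t := div_nonneg h0 ht.le
      linarith
    have hb := rpow_one_add_le_one_add_mul_self hs (by linarith : (0:ℝ) ≤ α - 1)
      (by linarith : α - 1 ≤ 1)
    have h1s : 1 + (q / t - 1) = q / t := by ring
    rw [h1s] at hb
    have hdiv : (q / t) ^ (α - 1) = q ^ (α - 1) / t ^ (α - 1) :=
      Real.div_rpow h0 ht.le _
    have htpos : (0:ℝ) < t ^ (α - 1) := Real.rpow_pos_of_pos ht _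
    have hA : t ^ (α - 1) = t ^ (α - 2) * t := by
      rw [← Real.rpow_add_one (ne_of_gt ht)]; ring_nf
    have h2 : q ^ (α - 1) ≤ t ^ (α - 1) * (1 + (α - 1) * (q / t - 1)) := by
      rw [hdiv] at hb
      calc q ^ (α - 1) = q ^ (α - 1) / t ^ (α - 1) * t ^ (α - 1) := by
            field_simp
        _ ≤ (1 + (α - 1) * (q / t - 1)) * t ^ (α - 1) := by
            exact mul_le_mul_of_nonneg_right hb htpos.le
        _ = t ^ (α - 1) * (1 + (α - 1) * (q / t - 1)) := by ring
    have h3 : t ^ (α - 1) * (q / t - 1) = t ^ (α - 2) * (q - t) := by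
      rw [hA]; field_simp
    nlinarith [h2, h3]



lemma phi_nonneg_eq (hα1 : 1 < α) {u : ℝ} (hu : 0 ≤ u) :
    |u| ^ (α - 2) * u = u ^ (α - 1) := by
  rcases eq_or_lt_of_le hu with h | h
  · rw [← h]; simp [Real.zero_rpow (by linarith : α - 1 ≠ 0)]
  · rw [abs_of_pos h, ← Real.rpow_add_one (ne_of_gt h)]; ring_nf

lemma phi_odd (u : ℝ) : |(-u)| ^ (α - 2) * (-u) = -(|u| ^ (α - 2) * u) := by
  rw [abs_neg]; ring

/-- Monotonicity with quantitative bound for `φ(t) = |t|^(α-2) t`. -/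
lemma monoPhi (hα1 : 1 < α) (hα2 : α < 2) {s t : ℝ} (hst : s ≤ t) :
    (α - 1) * (t - s) * (max |s| |t|) ^ (α - 2) ≤
      |t| ^ (α - 2) * t - |s| ^ (α - 2) * s := by
  rcases le_or_gt 0 s with hs | hs
  · -- 0 ≤ s ≤ t
    have ht : (0:ℝ) ≤ t := hs.trans hst
    rw [phi_nonneg_eq hα1 hs, phi_nonneg_eq hα1 ht, abs_of_nonneg hs, abs_of_nonneg ht,
      max_eq_right hst]
    have := lemB hα1 hα2 hs hst
    nlinarith [this]
  · rcases le_or_gt t 0 with ht | ht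
    · -- s ≤ t ≤ 0
      have h1 : (0:ℝ) ≤ -t := by linarith
      have h2 : -t ≤ -s := by linarith
      have key := lemB hα1 hα2 h1 h2
      have hmax : max |s| |t| = -s := by
        rw [abs_of_nonpos ht, abs_of_nonpos hs.le]
        exact max_eq_left (by linarith)
      have hphit : |t| ^ (α - 2) * t = -((-t) ^ (α - 1)) := by
        have := phi_nonneg_eq hα1 h1
        rw [abs_neg] at this; nlinarith [this]
      have hphis : |s| ^ (α - 2) * s = -((-s) ^ (α - 1)) := by
        have := phi_nonneg_eq hα1 (h1.trans h2)
        rw [abs_neg] at this; nlinarith [this]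
      rw [hphit, hphis, hmax]
      nlinarith [key]
    · -- s < 0 < t
      set M := max |s| |t| with hM
      have hsabs : |s| = -s := abs_of_neg hs
      have htabs : |t| = t := abs_of_pos ht
      have hMpos : 0 < M := lt_of_lt_of_le ht (le_trans (le_of_eq htabs.symm) (le_max_right _ _))
      have h1 : t * M ^ (α - 2) ≤ t ^ (α - 1) := by
        have : M ^ (α - 2) ≤ t ^ (α - 2) :=
          Real.rpow_le_rpow_of_nonpos ht (htabs ▸ le_max_right |s| |t|) (by linarith)
        calc t * M ^ (α - 2) ≤ t * t ^ (α - 2) := by nlinarith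
          _ = t ^ (α - 1) := by rw [mul_comm, ← Real.rpow_add_one (ne_of_gt ht)]; ring_nf
      have h2 : (-s) * M ^ (α - 2) ≤ (-s) ^ (α - 1) := by
        have hns : (0:ℝ) < -s := by linarith
        have : M ^ (α - 2) ≤ (-s) ^ (α - 2) :=
          Real.rpow_le_rpow_of_nonpos hns (hsabs ▸ le_max_left |s| |t|) (by linarith)
        calc (-s) * M ^ (α - 2) ≤ (-s) * (-s) ^ (α - 2) := by nlinarith
          _ = (-s) ^ (α - 1) := by rw [mul_comm, ← Real.rpow_add_one (ne_of_gt hns)]; ring_nf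
      have hphit : |t| ^ (α - 2) * t = t ^ (α - 1) := phi_nonneg_eq hα1 ht.le
      have hphis : |s| ^ (α - 2) * s = -((-s) ^ (α - 1)) := by
        have := phi_nonneg_eq hα1 (by linarith : (0:ℝ) ≤ -s)
        rw [abs_neg] at this; nlinarith [this]
      rw [hphit, hphis]
      have hMnn : (0:ℝ) ≤ M ^ (α - 2) := Real.rpow_nonneg hMpos.le _
      nlinarith [h1, h2, mul_nonneg (by linarith : (0:ℝ) ≤ t - s) hMnn]

/-- Quantitative lower bound on `φ(t) - φ(t-μ)` under the support constraints. -/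
lemma derivH (hα1 : 1 < α) (hα2 : α < 2) {μ P Q t : ℝ} (hμ : 1 ≤ μ)
    (hP : 1 ≤ P) (hQ : 1 ≤ Q) (ht : |t| ≤ P) (htμ : |t - μ| ≤ Q) :
    (α - 1) * 2 ^ (α - 2) * min (μ * (min P Q) ^ (α - 2)) 1 ≤
      |t| ^ (α - 2) * t - |t - μ| ^ (α - 2) * (t - μ) := by
  have hst : t - μ ≤ t := by linarith
  have key := monoPhi hα1 hα2 hst
  set K := max |t - μ| |t| with hK
  have hKμ : μ ≤ 2 * K := by
    have h1 : |t - μ| ≤ K := le_max_left _ _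
    have h2 : |t| ≤ K := le_max_right _ _
    have := abs_sub_abs_le_abs_sub t (t - μ)
    have habs : |t - (t - μ)| = μ := by
      rw [show t - (t - μ) = μ by ring]; exact abs_of_pos (by linarith)
    calc μ = |t - (t - μ)| := habs.symm
      _ ≤ |t| + |t - μ| := abs_sub _ _
      _ ≤ 2 * K := by linarith
  have hKpos : 0 < K := by linarith
  set M := min P Q with hM
  have hMpos : (0:ℝ) < M := by simp only [hM, lt_min_iff]; constructor <;> linarith
  have hKle : K ≤ M + μ := by
    have h1 : |t| ≤ M + μ := by
      rcases min_cases P Q with ⟨h, hPQ⟩ | ⟨h, hPQ⟩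
      · rw [hM, h]; linarith
      · rw [hM, h]
        have : |t| ≤ |t - μ| + μ := by
          have := abs_add_le (t - μ) μ
          simpa [abs_of_pos (show (0:ℝ) < μ by linarith)] using this
        linarith
    have h2 : |t - μ| ≤ M + μ := by
      rcases min_cases P Q with ⟨h, hPQ⟩ | ⟨h, hPQ⟩
      · rw [hM, h]
        have : |t - μ| ≤ |t| + μ := by
          have := abs_sub_abs_le_abs_sub (t - μ) t
          have habs : |t - μ - t| = μ := by
            rw [show t - μ - t = -μ by ring, abs_neg]
            exact abs_of_pos (by linarith)
          have := abs_sub (t) (μ)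
          calc |t - μ| ≤ |t| + |μ| := abs_sub t μ
            _ = |t| + μ := by rw [abs_of_pos (show (0:ℝ) < μ by linarith)]
        linarith
      · rw [hM, h]; linarith
    exact max_le h2 h1
  have hK2max : K ≤ 2 * max M μ := by
    rcases le_total M μ with h | h
    · rw [max_eq_right h]; linarith
    · rw [max_eq_left h]; linarith
  have hmaxpos : 0 < max M μ := lt_of_lt_of_le hMpos (le_max_left _ _)
  have hrpow : (2 * max M μ) ^ (α - 2) ≤ K ^ (α - 2) :=
    Real.rpow_le_rpow_of_nonpos hKpos hK2max (by linarith)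
  have hmul : (2 * max M μ) ^ (α - 2) = 2 ^ (α - 2) * (max M μ) ^ (α - 2) :=
    Real.mul_rpow (by norm_num) hmaxpos.le
  -- μ * (max M μ)^(α-2) ≥ min (μ * M^(α-2)) 1
  have hcore : min (μ * M ^ (α - 2)) 1 ≤ μ * (max M μ) ^ (α - 2) := by
    rcases le_total M μ with h | h
    · rw [max_eq_right h]
      have : (1:ℝ) ≤ μ * μ ^ (α - 2) := by
        rw [mul_comm, ← Real.rpow_add_one (by linarith : μ ≠ 0)]
        calc (1:ℝ) = 1 ^ (α - 2 + 1) := (Real.one_rpow _).symm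
          _ ≤ μ ^ (α - 2 + 1) := Real.rpow_le_rpow (by norm_num) hμ (by linarith)
      exact le_trans (min_le_right _ _) this
    · rw [max_eq_left h]
      exact min_le_left _ _
  have h2pos : (0:ℝ) < 2 ^ (α - 2) := Real.rpow_pos_of_pos (by norm_num) _
  calc (α - 1) * 2 ^ (α - 2) * min (μ * M ^ (α - 2)) 1
      ≤ (α - 1) * 2 ^ (α - 2) * (μ * (max M μ) ^ (α - 2)) := by
        apply mul_le_mul_of_nonneg_left hcore
        have : (0:ℝ) < α - 1 := by linarith
        positivity
    _ = (α - 1) * μ * (2 ^ (α - 2) * (max M μ) ^ (α - 2)) := by ring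
    _ ≤ (α - 1) * μ * K ^ (α - 2) := by
        apply mul_le_mul_of_nonneg_left (hmul ▸ hrpow)
        nlinarith
    _ = (α - 1) * (t - (t - μ)) * K ^ (α - 2) := by ring_nf
    _ ≤ _ := key

lemma jb_pos (n : ℤ) : 0 < jb n := Real.sqrt_pos.2 (by positivity)

lemma jb_neg (n : ℤ) : jb (-n) = jb n := by simp [jb]

/-- The 1D model set. -/
def Tset (α c₀ : ℝ) (μ : ℤ) (P Q B : ℝ) : Set ℤ :=
  {x : ℤ | |(x:ℝ)| ≤ P ∧ |(x:ℝ) - (μ:ℝ)| ≤ Q ∧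
    abs (|(x:ℝ) - (μ:ℝ)| ^ α - |(x:ℝ)| ^ α - B) ≤ c₀}

lemma Tset_finite (α c₀ : ℝ) (μ : ℤ) (P Q B : ℝ) : (Tset α c₀ μ P Q B).Finite := by
  apply Set.Finite.subset (Set.finite_Icc (-⌈P⌉) ⌈P⌉)
  intro x hx
  have h1 : |(x:ℝ)| ≤ P := hx.1
  have h2 : ((|x| : ℤ) : ℝ) ≤ ((⌈P⌉ : ℤ) : ℝ) := by
    push_cast
    exact h1.trans (Int.le_ceil P)
  have h3 : |x| ≤ ⌈P⌉ := by exact_mod_cast h2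
  simp only [Set.mem_Icc]
  constructor <;> [linarith [neg_abs_le x]; linarith [le_abs_self x]]

lemma coreCount {c₀ : ℝ} (hα1 : 1 < α) (hα2 : α < 2) (hc₀ : 1 ≤ c₀)
    (μ : ℤ) (hμ : 1 ≤ μ) (P Q B : ℝ) (hP : 1 ≤ P) (hQ : 1 ≤ Q) :
    ((Tset α c₀ μ P Q B).ncard : ℝ) ≤
      (12 * c₀ / ((α - 1) * 2 ^ (α - 2)) + 3) * ((min P Q) ^ (2 - α) * (jb μ)⁻¹ + 1) := by
  set c : ℝ := (α - 1) * 2 ^ (α - 2) with hcdef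
  have hc : 0 < c := by
    have : (0:ℝ) < 2 ^ (α - 2) := Real.rpow_pos_of_pos (by norm_num) _
    have : (0:ℝ) < α - 1 := by linarith
    positivity
  set M : ℝ := min P Q with hMdef
  have hM1 : (1:ℝ) ≤ M := le_min hP hQ
  have hM0 : (0:ℝ) < M := by linarith
  have hμR : (1:ℝ) ≤ (μ:ℝ) := by exact_mod_cast hμ
  set D : ℝ := min ((μ:ℝ) * M ^ (α - 2)) 1 with hDdef
  have hD : 0 < D := by
    apply lt_min _ one_pos
    have := Real.rpow_pos_of_pos hM0 (α - 2)
    nlinarith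
  set T := Tset α c₀ μ P Q B with hTdef
  -- the function and its derivative
  set φf : ℝ → ℝ := fun t => α * |t - (μ:ℝ)| ^ (α - 2) * (t - (μ:ℝ)) - α * |t| ^ (α - 2) * t
    with hφf
  have hd : ∀ r : ℝ, HasDerivAt (fun t : ℝ => |t - (μ:ℝ)| ^ α - |t| ^ α) (φf r) r := by
    intro r
    have d1 : HasDerivAt (fun t : ℝ => |t - (μ:ℝ)| ^ α)
        (α * |r - (μ:ℝ)| ^ (α - 2) * (r - (μ:ℝ))) r := by
      have hg := hasDerivAt_abs_rpow (r - (μ:ℝ)) hα1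
      have hid : HasDerivAt (fun t : ℝ => t - (μ:ℝ)) 1 r := (hasDerivAt_id r).sub_const _
      have := hg.comp r hid
      simpa [Function.comp_def] using this
    have d2 := hasDerivAt_abs_rpow r hα1
    exact d1.sub d2
  -- gap bound
  have gap : ∀ x ∈ T, ∀ y ∈ T, (x:ℝ) < (y:ℝ) → ((y:ℝ) - x) * (c * D) ≤ 2 * c₀ := by
    intro x hx y hy hxy
    obtain ⟨ξ, hξmem, hξ⟩ := exists_hasDerivAt_eq_slope
      (fun t : ℝ => |t - (μ:ℝ)| ^ α - |t| ^ α) φf hxy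
      (fun r _ => (hd r).continuousAt.continuousWithinAt) (fun r _ => hd r)
    obtain ⟨hx1, hx2, hx3⟩ := hx
    obtain ⟨hy1, hy2, hy3⟩ := hy
    have hξx : (x:ℝ) ≤ ξ := hξmem.1.le
    have hξy : ξ ≤ (y:ℝ) := hξmem.2.le
    have hξP : |ξ| ≤ P := by
      rw [abs_le]; rw [abs_le] at hx1 hy1
      constructor <;> linarith
    have hξQ : |ξ - (μ:ℝ)| ≤ Q := by
      rw [abs_le]; rw [abs_le] at hx2 hy2
      constructor <;> linarith
    have hder := derivH hα1 hα2 hμR hP hQ hξP hξQ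
    rw [← hMdef, ← hDdef, ← hcdef] at hder
    -- slope identity
    have hslope : |(x:ℝ) - (μ:ℝ)| ^ α - |(x:ℝ)| ^ α - (|(y:ℝ) - (μ:ℝ)| ^ α - |(y:ℝ)| ^ α)
        = ((y:ℝ) - x) * (α * (|ξ| ^ (α - 2) * ξ - |ξ - (μ:ℝ)| ^ (α - 2) * (ξ - (μ:ℝ)))) := by
      have h0 : φf ξ = ((|(y:ℝ) - (μ:ℝ)| ^ α - |(y:ℝ)| ^ α) -
          (|(x:ℝ) - (μ:ℝ)| ^ α - |(x:ℝ)| ^ α)) / ((y:ℝ) - x) := hξ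
      have hne : ((y:ℝ) - x) ≠ 0 := by linarith
      field_simp at h0
      simp only [hφf] at h0
      nlinarith [h0]
    have hub : |(x:ℝ) - (μ:ℝ)| ^ α - |(x:ℝ)| ^ α - (|(y:ℝ) - (μ:ℝ)| ^ α - |(y:ℝ)| ^ α)
        ≤ 2 * c₀ := by
      rw [abs_le] at hx3 hy3
      linarith
    have hα0 : (1:ℝ) ≤ α := hα1.le
    have hcD : 0 ≤ c * D := by positivity
    calc ((y:ℝ) - x) * (c * D)
        ≤ ((y:ℝ) - x) * (α * (c * D)) := by
          nlinarith [mul_nonneg (mul_nonneg (by linarith : (0:ℝ) ≤ (y:ℝ) - x) hcD)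
            (by linarith : (0:ℝ) ≤ α - 1)]
      _ ≤ ((y:ℝ) - x) * (α * (|ξ| ^ (α - 2) * ξ - |ξ - (μ:ℝ)| ^ (α - 2) * (ξ - (μ:ℝ)))) := by
          apply mul_le_mul_of_nonneg_left _ (by linarith : (0:ℝ) ≤ (y:ℝ) - x)
          apply mul_le_mul_of_nonneg_left hder (by linarith : (0:ℝ) ≤ α)
      _ = _ := hslope.symm
      _ ≤ 2 * c₀ := hub
  -- distance bound for any two elements
  have dist2 : ∀ x ∈ T, ∀ y ∈ T, |(x:ℝ) - (y:ℝ)| * (c * D) ≤ 2 * c₀ := by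
    intro x hx y hy
    rcases lt_trichotomy ((x:ℝ)) ((y:ℝ)) with h | h | h
    · rw [abs_of_neg (by linarith : (x:ℝ) - y < 0)]
      have := gap x hx y hy h
      nlinarith
    · rw [h]; simp; positivity
    · rw [abs_of_pos (by linarith : (0:ℝ) < (x:ℝ) - y)]
      have := gap y hy x hx h
      nlinarith
  set L : ℝ := 2 * c₀ / (c * D) with hLdef
  have hL0 : 0 < L := by positivity
  -- cardinality bound
  have hcard : (T.ncard : ℝ) ≤ 2 * L + 3 := by
    rcases Set.eq_empty_or_nonempty T with hT | ⟨x₀, hx₀⟩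
    · rw [hT]; simp; linarith
    · have hsub : T ⊆ ↑(Finset.Icc (x₀ - ⌈L⌉) (x₀ + ⌈L⌉)) := by
        intro x hx
        have h1 : |(x:ℝ) - (x₀:ℝ)| ≤ L := by
          have := dist2 x hx x₀ hx₀
          rw [hLdef, le_div_iff₀ (by positivity : (0:ℝ) < c * D)]
          linarith
        have h2 : ((|x - x₀| : ℤ) : ℝ) ≤ ((⌈L⌉ : ℤ) : ℝ) := by
          push_cast
          exact h1.trans (Int.le_ceil L)
        have h3 : |x - x₀| ≤ ⌈L⌉ := by exact_mod_cast h2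
        rw [abs_le] at h3
        simp only [Finset.coe_Icc, Set.mem_Icc]
        constructor <;> linarith
      have h4 : T.ncard ≤ (Finset.Icc (x₀ - ⌈L⌉) (x₀ + ⌈L⌉)).card := by
        rw [← Set.ncard_coe_finset]
        exact Set.ncard_le_ncard hsub (Finset.finite_toSet _)
      have hceil0 : (0:ℤ) ≤ ⌈L⌉ := Int.ceil_nonneg hL0.le
      have h5 : (Finset.Icc (x₀ - ⌈L⌉) (x₀ + ⌈L⌉)).card = (2 * ⌈L⌉ + 1).toNat := by
        rw [Int.card_Icc]; congr 1; ring
      have h6 : ((2 * ⌈L⌉ + 1).toNat : ℝ) = ((2 * ⌈L⌉ + 1 : ℤ) : ℝ) := by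
        norm_cast
        omega
      have h7 : ((2 * ⌈L⌉ + 1 : ℤ) : ℝ) ≤ 2 * L + 3 := by
        push_cast
        have := Int.ceil_lt_add_one L
        have : ((⌈L⌉ : ℤ) : ℝ) < L + 1 := by exact_mod_cast this
        linarith
      calc (T.ncard : ℝ) ≤ ((Finset.Icc (x₀ - ⌈L⌉) (x₀ + ⌈L⌉)).card : ℝ) := by
            exact_mod_cast h4
        _ = ((2 * ⌈L⌉ + 1).toNat : ℝ) := by rw [h5]
        _ ≤ 2 * L + 3 := by rw [h6]; exact h7
  -- estimate L
  have hDinv : D⁻¹ ≤ (μ:ℝ)⁻¹ * M ^ (2 - α) + 1 := by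
    have ha : (0:ℝ) < (μ:ℝ) * M ^ (α - 2) := by
      have := Real.rpow_pos_of_pos hM0 (α - 2); nlinarith
    have hainv : ((μ:ℝ) * M ^ (α - 2))⁻¹ = (μ:ℝ)⁻¹ * M ^ (2 - α) := by
      rw [mul_inv]
      congr 1
      rw [← Real.rpow_neg hM0.le]
      ring_nf
    rcases le_total ((μ:ℝ) * M ^ (α - 2)) 1 with h | h
    · rw [hDdef, min_eq_left h, hainv]
      have : (0:ℝ) ≤ (μ:ℝ)⁻¹ * M ^ (2 - α) := by positivity
      linarith [le_refl ((μ:ℝ)⁻¹ * M ^ (2 - α))]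
    · rw [hDdef, min_eq_right h]
      simp only [inv_one]
      have : (0:ℝ) ≤ (μ:ℝ)⁻¹ * M ^ (2 - α) := by positivity
      linarith
  have hjb : (μ:ℝ)⁻¹ ≤ 2 * (jb μ)⁻¹ := by
    have h2μ : jb μ ≤ 2 * μ := by
      rw [jb]
      have : (1:ℝ) + (μ:ℝ) ^ 2 ≤ (2 * μ) ^ 2 := by nlinarith
      calc Real.sqrt (1 + (μ:ℝ) ^ 2) ≤ Real.sqrt ((2 * μ) ^ 2) := Real.sqrt_le_sqrt this
        _ = 2 * μ := Real.sqrt_sq (by linarith)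
    have hjp := jb_pos μ
    rw [show 2 * (jb μ)⁻¹ = (jb μ / 2)⁻¹ by field_simp]
    apply inv_anti₀ (by linarith) (by linarith)
  have hDinv2 : D⁻¹ ≤ 2 * M ^ (2 - α) * (jb μ)⁻¹ + 1 := by
    have hMnn : (0:ℝ) ≤ M ^ (2 - α) := Real.rpow_nonneg hM0.le _
    have := mul_le_mul_of_nonneg_right hjb hMnn
    calc D⁻¹ ≤ (μ:ℝ)⁻¹ * M ^ (2 - α) + 1 := hDinv
      _ ≤ 2 * (jb μ)⁻¹ * M ^ (2 - α) + 1 := by linarith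
      _ = 2 * M ^ (2 - α) * (jb μ)⁻¹ + 1 := by ring
  have hLeq : L = 2 * c₀ / c * D⁻¹ := by
    rw [hLdef]; field_simp
  have hLle : L ≤ 2 * (c₀ / c) * (2 * M ^ (2 - α) * (jb μ)⁻¹ + 1) := by
    rw [hLeq, show 2 * c₀ / c = 2 * (c₀ / c) by ring]
    apply mul_le_mul_of_nonneg_left hDinv2
    positivity
  set X : ℝ := M ^ (2 - α) * (jb μ)⁻¹ with hX
  have hX0 : 0 ≤ X := by
    have := (jb_pos μ).le
    have := Real.rpow_nonneg hM0.le (2 - α)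
    positivity
  set G : ℝ := c₀ / c with hG
  have hG0 : 0 < G := by positivity
  calc (T.ncard : ℝ) ≤ 2 * L + 3 := hcard
    _ ≤ 2 * (2 * G * (2 * X + 1)) + 3 := by
        have : 2 * M ^ (2 - α) * (jb μ)⁻¹ + 1 = 2 * X + 1 := by rw [hX]; ring
        rw [this] at hLle
        linarith
    _ ≤ (12 * G + 3) * (X + 1) := by nlinarith [mul_nonneg hG0.le hX0]
    _ = (12 * c₀ / c + 3) * (X + 1) := by rw [hG]; ring_nf

lemma Tset_swap (α c₀ : ℝ) (μ : ℤ) (P Q B : ℝ) (y : ℤ) :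
    y ∈ Tset α c₀ μ P Q B ↔ (-y) ∈ Tset α c₀ (-μ) P Q B := by
  simp only [Tset, Set.mem_setOf_eq]
  push_cast
  rw [abs_neg, show -(y:ℝ) - -(μ:ℝ) = -((y:ℝ) - μ) by ring, abs_neg]

lemma Tset_neg (α c₀ : ℝ) (μ : ℤ) (P Q B : ℝ) :
    Tset α c₀ μ P Q B = (fun x : ℤ => -x) '' Tset α c₀ (-μ) P Q B := by
  ext x
  constructor
  · intro hx
    exact ⟨-x, by simpa using (Tset_swap α c₀ μ P Q B x).mp hx, neg_neg x⟩
  · rintro ⟨y, hy, rfl⟩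
    have := (Tset_swap α c₀ (-μ) P Q B y).mp hy
    simpa using this

lemma coreCount' {c₀ : ℝ} (hα1 : 1 < α) (hα2 : α < 2) (hc₀ : 1 ≤ c₀)
    (μ : ℤ) (hμ : μ ≠ 0) (P Q B : ℝ) (hP : 1 ≤ P) (hQ : 1 ≤ Q) :
    ((Tset α c₀ μ P Q B).ncard : ℝ) ≤
      (12 * c₀ / ((α - 1) * 2 ^ (α - 2)) + 3) * ((min P Q) ^ (2 - α) * (jb μ)⁻¹ + 1) := by
  rcases le_or_gt 1 μ with h | h
  · exact coreCount hα1 hα2 hc₀ μ h P Q B hP hQ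
  · have h1 : 1 ≤ -μ := by omega
    have key := coreCount hα1 hα2 hc₀ (-μ) h1 P Q B hP hQ
    rw [Tset_neg α c₀ μ P Q B, Set.ncard_image_of_injective _ neg_injective]
    rwa [jb_neg] at key

lemma glue {c₀ : ℝ} (hα1 : 1 < α) (hα2 : α < 2) (hc₀ : 1 ≤ c₀)
    {μ : ℤ} {P Q B : ℝ} (hP : 1 ≤ P) (hQ : 1 ≤ Q)
    (F : Set (ℤ × ℤ)) (f : ℤ × ℤ → ℤ) (hinj : Set.InjOn f F)
    (himg : f '' F ⊆ Tset α c₀ μ P Q B) (hemp : μ = 0 → F = ∅) :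
    (F.ncard : ℝ) ≤
      (12 * c₀ / ((α - 1) * 2 ^ (α - 2)) + 3) * ((min P Q) ^ (2 - α) * (jb μ)⁻¹ + 1) := by
  by_cases hμ : μ = 0
  · rw [hemp hμ]
    simp only [Set.ncard_empty, Nat.cast_zero]
    have h1 : (0:ℝ) < α - 1 := by linarith
    have h2 : (0:ℝ) < 2 ^ (α - 2) := Real.rpow_pos_of_pos (by norm_num) _
    have h3 : (0:ℝ) ≤ (min P Q) ^ (2 - α) := Real.rpow_nonneg (by positivity) _
    have h4 : (0:ℝ) ≤ (jb μ)⁻¹ := (inv_nonneg).2 (jb_pos μ).le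
    have h5 : (0:ℝ) < 12 * c₀ / ((α - 1) * 2 ^ (α - 2)) + 3 := by positivity
    nlinarith [mul_nonneg h3 h4]
  · calc (F.ncard : ℝ) = ((f '' F).ncard : ℝ) := by rw [Set.ncard_image_of_injOn hinj]
      _ ≤ ((Tset α c₀ μ P Q B).ncard : ℝ) := by
          exact_mod_cast Set.ncard_le_ncard himg (Tset_finite α c₀ μ P Q B)
      _ ≤ _ := coreCount' hα1 hα2 hc₀ μ hμ P Q B hP hQ

/-- Two-parameter fiber counting bounds for the set `S`. -/
theorem fiber_counting_two (α c₀ : ℝ) (hα : α ∈ Set.Ioo (1 : ℝ) 2) (hc₀ : 1 ≤ c₀) :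
    ∃ C : ℝ, 0 < C ∧ ∀ m N N₁ N₂ N₃ : ℝ,
      1 ≤ N₁ → 1 ≤ N₂ → 1 ≤ N₃ → N₁ ≤ N → N₂ ≤ N → N₃ ≤ N →
      ((∀ k k₁ : ℤ,
        (({q : ℤ × ℤ | (k, k₁, q.1, q.2) ∈ Sset α c₀ m N N₁ N₂ N₃}.ncard : ℝ) ≤
          C * ((min N₂ N₃) ^ (2 - α) * (jb (k₁ - k))⁻¹ + 1))) ∧
      (∀ k k₃ : ℤ,
        (({q : ℤ × ℤ | (k, q.1, q.2, k₃) ∈ Sset α c₀ m N N₁ N₂ N₃}.ncard : ℝ) ≤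
          C * ((min N₁ N₂) ^ (2 - α) * (jb (k - k₃))⁻¹ + 1))) ∧
      (∀ k₁ k₂ : ℤ,
        (({q : ℤ × ℤ | (q.1, k₁, k₂, q.2) ∈ Sset α c₀ m N N₁ N₂ N₃}.ncard : ℝ) ≤
          C * (N₃ ^ (2 - α) * (jb (k₁ - k₂))⁻¹ + 1))) ∧
      (∀ k₂ k₃ : ℤ,
        (({q : ℤ × ℤ | (q.1, q.2, k₂, k₃) ∈ Sset α c₀ m N N₁ N₂ N₃}.ncard : ℝ) ≤
          C * (N₁ ^ (2 - α) * (jb (k₂ - k₃))⁻¹ + 1)))) := by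
  obtain ⟨hα1, hα2⟩ := hα
  refine ⟨12 * c₀ / ((α - 1) * 2 ^ (α - 2)) + 3, ?_, ?_⟩
  · have h1 : (0:ℝ) < α - 1 := by linarith
    have h2 : (0:ℝ) < 2 ^ (α - 2) := Real.rpow_pos_of_pos (by norm_num) _
    positivity
  intro m N N₁ N₂ N₃ hN₁ hN₂ hN₃ hN₁N hN₂N hN₃N
  have hN : (1:ℝ) ≤ N := hN₁.trans hN₁N
  refine ⟨?_, ?_, ?_, ?_⟩
  -- case (a)
  · intro k k₁
    have key := glue hα1 hα2 hc₀ (μ := k₁ - k) (P := N₂) (Q := N₃)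
      (B := m + |(k : ℝ)| ^ α - |(k₁ : ℝ)| ^ α) hN₂ hN₃
      {q : ℤ × ℤ | (k, k₁, q.1, q.2) ∈ Sset α c₀ m N N₁ N₂ N₃} Prod.fst ?_ ?_ ?_
    · exact key
    · intro q hq q' hq' h
      simp only [Set.mem_setOf_eq, Sset] at hq hq'
      have e1 := hq.1
      have e2 := hq'.1
      exact Prod.ext h (by omega)
    · rintro x ⟨q, hq, rfl⟩
      simp only [Set.mem_setOf_eq, Sset] at hq
      obtain ⟨he, hne1, hne2, hph, hk, h1, h2, h3⟩ := hq
      have e : q.1 - (k₁ - k) = q.2 := by omega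
      have ecast : (q.1 : ℝ) - ((k₁ - k : ℤ) : ℝ) = ((q.2 : ℤ) : ℝ) := by
        exact_mod_cast congrArg (fun z : ℤ => (z : ℝ)) e
      refine ⟨h2, ?_, ?_⟩
      · rw [ecast]; exact h3
      · rw [ecast]
        rw [show |((q.2 : ℤ) : ℝ)| ^ α - |((q.1 : ℤ) : ℝ)| ^ α -
            (m + |(k : ℝ)| ^ α - |(k₁ : ℝ)| ^ α) =
            |(k₁ : ℝ)| ^ α - |((q.1 : ℤ) : ℝ)| ^ α + |((q.2 : ℤ) : ℝ)| ^ α -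
            |(k : ℝ)| ^ α - m from by ring]
        exact hph
    · intro h0
      rw [Set.eq_empty_iff_forall_notMem]
      intro q hq
      simp only [Set.mem_setOf_eq, Sset] at hq
      exact hq.2.2.1 (by omega)
  -- case (b)
  · intro k k₃
    have key := glue hα1 hα2 hc₀ (μ := k₃ - k) (P := N₂) (Q := N₁)
      (B := m + |(k : ℝ)| ^ α - |(k₃ : ℝ)| ^ α) hN₂ hN₁
      {q : ℤ × ℤ | (k, q.1, q.2, k₃) ∈ Sset α c₀ m N N₁ N₂ N₃} Prod.snd ?_ ?_ ?_
    · rw [min_comm N₂ N₁] at key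
      rw [show k - k₃ = -(k₃ - k) from by ring, jb_neg]
      exact key
    · intro q hq q' hq' h
      simp only [Set.mem_setOf_eq, Sset] at hq hq'
      have e1 := hq.1
      have e2 := hq'.1
      exact Prod.ext (by omega) h
    · rintro x ⟨q, hq, rfl⟩
      simp only [Set.mem_setOf_eq, Sset] at hq
      obtain ⟨he, hne1, hne2, hph, hk, h1, h2, h3⟩ := hq
      have e : q.2 - (k₃ - k) = q.1 := by omega
      have ecast : (q.2 : ℝ) - ((k₃ - k : ℤ) : ℝ) = ((q.1 : ℤ) : ℝ) := by
        exact_mod_cast congrArg (fun z : ℤ => (z : ℝ)) e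
      refine ⟨h2, ?_, ?_⟩
      · rw [ecast]; exact h1
      · rw [ecast]
        rw [show |((q.1 : ℤ) : ℝ)| ^ α - |((q.2 : ℤ) : ℝ)| ^ α -
            (m + |(k : ℝ)| ^ α - |(k₃ : ℝ)| ^ α) =
            |((q.1 : ℤ) : ℝ)| ^ α - |((q.2 : ℤ) : ℝ)| ^ α + |(k₃ : ℝ)| ^ α -
            |(k : ℝ)| ^ α - m from by ring]
        exact hph
    · intro h0
      rw [Set.eq_empty_iff_forall_notMem]
      intro q hq
      simp only [Set.mem_setOf_eq, Sset] at hq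
      exact hq.2.1 (by omega)
  -- case (c)
  · intro k₁ k₂
    have key := glue hα1 hα2 hc₀ (μ := k₂ - k₁) (P := N₃) (Q := N)
      (B := |(k₁ : ℝ)| ^ α - |(k₂ : ℝ)| ^ α - m) hN₃ hN
      {q : ℤ × ℤ | (q.1, k₁, k₂, q.2) ∈ Sset α c₀ m N N₁ N₂ N₃} Prod.snd ?_ ?_ ?_
    · rw [min_eq_left hN₃N] at key
      rw [show k₁ - k₂ = -(k₂ - k₁) from by ring, jb_neg]
      exact key
    · intro q hq q' hq' h
      simp only [Set.mem_setOf_eq, Sset] at hq hq'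
      have e1 := hq.1
      have e2 := hq'.1
      exact Prod.ext (by omega) h
    · rintro x ⟨q, hq, rfl⟩
      simp only [Set.mem_setOf_eq, Sset] at hq
      obtain ⟨he, hne1, hne2, hph, hk, h1, h2, h3⟩ := hq
      have e : q.2 - (k₂ - k₁) = q.1 := by omega
      have ecast : (q.2 : ℝ) - ((k₂ - k₁ : ℤ) : ℝ) = ((q.1 : ℤ) : ℝ) := by
        exact_mod_cast congrArg (fun z : ℤ => (z : ℝ)) e
      refine ⟨h3, ?_, ?_⟩
      · rw [ecast]; exact hk
      · rw [ecast]
        rw [show |((q.1 : ℤ) : ℝ)| ^ α - |((q.2 : ℤ) : ℝ)| ^ α -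
            (|(k₁ : ℝ)| ^ α - |(k₂ : ℝ)| ^ α - m) =
            -(|(k₁ : ℝ)| ^ α - |(k₂ : ℝ)| ^ α + |((q.2 : ℤ) : ℝ)| ^ α -
            |((q.1 : ℤ) : ℝ)| ^ α - m) from by ring, abs_neg]
        exact hph
    · intro h0
      rw [Set.eq_empty_iff_forall_notMem]
      intro q hq
      simp only [Set.mem_setOf_eq, Sset] at hq
      exact hq.2.1 (by omega)
  -- case (d)
  · intro k₂ k₃
    have key := glue hα1 hα2 hc₀ (μ := k₂ - k₃) (P := N₁) (Q := N)
      (B := |(k₃ : ℝ)| ^ α - |(k₂ : ℝ)| ^ α - m) hN₁ hN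
      {q : ℤ × ℤ | (q.1, q.2, k₂, k₃) ∈ Sset α c₀ m N N₁ N₂ N₃} Prod.snd ?_ ?_ ?_
    · rw [min_eq_left hN₁N] at key
      exact key
    · intro q hq q' hq' h
      simp only [Set.mem_setOf_eq, Sset] at hq hq'
      have e1 := hq.1
      have e2 := hq'.1
      exact Prod.ext (by omega) h
    · rintro x ⟨q, hq, rfl⟩
      simp only [Set.mem_setOf_eq, Sset] at hq
      obtain ⟨he, hne1, hne2, hph, hk, h1, h2, h3⟩ := hq
      have e : q.2 - (k₂ - k₃) = q.1 := by omega
      have ecast : (q.2 : ℝ) - ((k₂ - k₃ : ℤ) : ℝ) = ((q.1 : ℤ) : ℝ) := by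
        exact_mod_cast congrArg (fun z : ℤ => (z : ℝ)) e
      refine ⟨h1, ?_, ?_⟩
      · rw [ecast]; exact hk
      · rw [ecast]
        rw [show |((q.1 : ℤ) : ℝ)| ^ α - |((q.2 : ℤ) : ℝ)| ^ α -
            (|(k₃ : ℝ)| ^ α - |(k₂ : ℝ)| ^ α - m) =
            -(|((q.2 : ℤ) : ℝ)| ^ α - |(k₂ : ℝ)| ^ α + |(k₃ : ℝ)| ^ α -
            |((q.1 : ℤ) : ℝ)| ^ α - m) from by ring, abs_neg]
        exact hph
    · intro h0
      rw [Set.eq_empty_iff_forall_notMem]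
      intro q hq
      simp only [Set.mem_setOf_eq, Sset] at hq
      exact hq.2.2.1 (by omega)
end

section
/- For every θ ∈ (0,1] there exists a constant C = C(α,c₀,θ) such that for all m ∈ ℝ and all N, N₁, N₂, N₃ with 1 ≤ N₁, N₂, N₃ ≤ N: (a) for every (k,k₂) ∈ ℤ², #S^{good,θ}_{k k₂} ≤ C and for every (k₁,k₃) ∈ ℤ², #S^{good,θ}_{k₁ k₃} ≤ C; (b) for every (k,k₂) ∈ ℤ², #S^{bad,θ}_{k k₂} ≤ C·(|k+k₂|^{1−α/2} + 1); (c) for every (k₁,k₃) ∈ ℤ², #S^{bad,θ}_{k₁ k₃} ≤ C·(|k₁+k₃|^{1−α/2} + 1). -/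
set_option maxHeartbeats 1000000

namespace GBC

open Real Set

lemma mvt_rpow {a b p : ℝ} (ha : 0 ≤ a) (hab : a < b) (hp : 0 < p) :
    ∃ c, a < c ∧ c < b ∧ b ^ p - a ^ p = p * c ^ (p - 1) * (b - a) := by
  have hcont : ContinuousOn (fun x : ℝ => x ^ p) (Icc a b) := fun x _ =>
    (Real.continuousAt_rpow_const x p (Or.inr hp.le)).continuousWithinAt
  have hderiv : ∀ x ∈ Ioo a b, HasDerivAt (fun x : ℝ => x ^ p) (p * x ^ (p - 1)) x := by
    intro x hx
    have hx0 : x ≠ 0 := ne_of_gt (lt_of_le_of_lt ha hx.1)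
    simpa [mul_comm] using Real.hasDerivAt_rpow_const (x := x) (p := p) (Or.inl hx0)
  obtain ⟨c, hc, hceq⟩ := exists_hasDerivAt_eq_slope (fun x : ℝ => x ^ p)
    (fun x => p * x ^ (p - 1)) hab hcont hderiv
  refine ⟨c, hc.1, hc.2, ?_⟩
  have hba : b - a ≠ 0 := by linarith [hab]
  field_simp at hceq
  linarith [hceq]

lemma rpow_sub_rpow_ge_mul {a b p : ℝ} (ha : 0 ≤ a) (hab : a ≤ b) (hp : 1 ≤ p) :
    p * a ^ (p - 1) * (b - a) ≤ b ^ p - a ^ p := by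
  rcases eq_or_lt_of_le hab with rfl | hab'
  · simp
  obtain ⟨c, hac, hcb, heq⟩ := mvt_rpow ha hab' (by linarith)
  rw [heq]
  have h1 : a ^ (p - 1) ≤ c ^ (p - 1) := Real.rpow_le_rpow ha hac.le (by linarith)
  have hba : (0:ℝ) ≤ b - a := by linarith
  have hp0 : (0:ℝ) ≤ p := by linarith
  exact mul_le_mul_of_nonneg_right (mul_le_mul_of_nonneg_left h1 hp0) hba

lemma rpow_sub_rpow_le_mul {a b p : ℝ} (ha : 0 ≤ a) (hab : a ≤ b) (hp : 1 ≤ p) :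
    b ^ p - a ^ p ≤ p * b ^ (p - 1) * (b - a) := by
  rcases eq_or_lt_of_le hab with rfl | hab'
  · simp
  obtain ⟨c, hac, hcb, heq⟩ := mvt_rpow ha hab' (by linarith)
  rw [heq]
  have hc0 : 0 ≤ c := le_of_lt (lt_of_le_of_lt ha hac)
  have h1 : c ^ (p - 1) ≤ b ^ (p - 1) := Real.rpow_le_rpow hc0 hcb.le (by linarith)
  have hba : (0:ℝ) ≤ b - a := by linarith
  have hp0 : (0:ℝ) ≤ p := by linarith
  exact mul_le_mul_of_nonneg_right (mul_le_mul_of_nonneg_left h1 hp0) hba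

lemma rpow_sub_rpow_ge_mul' {a b p : ℝ} (ha : 0 ≤ a) (hab : a ≤ b) (hp0 : 0 < p) (hp1 : p ≤ 1) :
    p * b ^ (p - 1) * (b - a) ≤ b ^ p - a ^ p := by
  rcases eq_or_lt_of_le hab with rfl | hab'
  · simp
  obtain ⟨c, hac, hcb, heq⟩ := mvt_rpow ha hab' hp0
  rw [heq]
  have hc0 : 0 < c := lt_of_le_of_lt ha hac
  have h1 : b ^ (p - 1) ≤ c ^ (p - 1) := Real.rpow_le_rpow_of_nonpos hc0 hcb.le (by linarith)
  have hba : (0:ℝ) ≤ b - a := by linarith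
  exact mul_le_mul_of_nonneg_right (mul_le_mul_of_nonneg_left h1 hp0.le) hba


noncomputable def gd (α t : ℝ) : ℝ := if t < 0 then -(α * (-t) ^ (α - 1)) else α * t ^ (α - 1)

variable {α : ℝ}

lemma gd_of_nonneg (ht : 0 ≤ t) : gd α t = α * t ^ (α - 1) := by
  unfold gd; rw [if_neg (not_lt.2 ht)]

lemma gd_neg (hα : 1 < α) (t : ℝ) : gd α (-t) = - gd α t := by
  unfold gd
  rcases lt_trichotomy t 0 with h | rfl | h
  · rw [if_neg (by linarith), if_pos h]; ring
  · simp [Real.zero_rpow (by intro h; exact absurd h (by intro h'; linarith) : α - 1 ≠ 0)]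
  · rw [if_pos (by linarith), if_neg (not_lt.2 h.le), neg_neg]

lemma gd_nonpos (hα : 1 < α) {t : ℝ} (ht : t ≤ 0) : gd α t ≤ 0 := by
  unfold gd
  rcases lt_or_eq_of_le ht with h | rfl
  · rw [if_pos h]
    have := Real.rpow_nonneg (by linarith : (0:ℝ) ≤ -t) (α - 1)
    nlinarith
  · simp [Real.zero_rpow (by intro h'; linarith : α - 1 ≠ 0)]

lemma tangent_nonneg (hα : 1 < α) {x : ℝ} (hx : 0 ≤ x) (y : ℝ) :
    x ^ α + α * x ^ (α - 1) * (y - x) ≤ |y| ^ α := by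
  rcases le_or_gt x y with hxy | hxy
  · rw [abs_of_nonneg (hx.trans hxy)]
    have := rpow_sub_rpow_ge_mul hx hxy hα.le
    linarith
  rcases le_or_gt 0 y with hy | hy
  · rw [abs_of_nonneg hy]
    have := rpow_sub_rpow_le_mul hy hxy.le hα.le
    nlinarith
  · have h0 : (0:ℝ) ≤ |y| ^ α := Real.rpow_nonneg (abs_nonneg y) α
    rcases eq_or_lt_of_le hx with rfl | hx0
    · simp [Real.zero_rpow (by positivity : α ≠ 0),
        Real.zero_rpow (by intro h'; linarith : α - 1 ≠ 0)]
      exact h0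
    have hxa : x ^ α = x ^ (α - 1) * x := by
      rw [← Real.rpow_add_one (ne_of_gt hx0)]; ring_nf
    have hpow : (0:ℝ) ≤ x ^ (α - 1) := Real.rpow_nonneg hx (α - 1)
    have h2 : 0 ≤ x ^ (α - 1) * (x - y) * (α - 1) :=
      mul_nonneg (mul_nonneg hpow (by linarith)) (by linarith)
    nlinarith [h2, mul_le_mul_of_nonneg_left (by linarith : x ≤ x - y) hpow]

lemma tangent (hα : 1 < α) (x y : ℝ) :
    |x| ^ α + gd α x * (y - x) ≤ |y| ^ α := by
  rcases le_or_gt 0 x with hx | hx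
  · rw [abs_of_nonneg hx, gd_of_nonneg hx]
    exact tangent_nonneg hα hx y
  · have h := tangent_nonneg hα (by linarith : (0:ℝ) ≤ -x) (-y)
    rw [abs_neg] at h
    have hg : gd α (-x) = - gd α x := gd_neg hα x
    rw [gd_of_nonneg (by linarith : (0:ℝ) ≤ -x)] at hg
    have hx' : |x| = -x := abs_of_neg hx
    have hgx : gd α x = -(α * (-x) ^ (α - 1)) := by linarith
    rw [hx', hgx]
    calc (-x) ^ α + -(α * (-x) ^ (α - 1)) * (y - x)
        = (-x) ^ α + α * (-x) ^ (α - 1) * (-y - -x) := by ring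
      _ ≤ |y| ^ α := h

noncomputable def Pf (α μ t : ℝ) : ℝ := |t| ^ α + |μ - t| ^ α

lemma Pf_two_point (hα : 1 < α) (μ x y : ℝ) :
    Pf α μ x + (gd α x - gd α (μ - x)) * (y - x) ≤ Pf α μ y := by
  have h1 := tangent hα x y
  have h2 := tangent hα (μ - x) (μ - y)
  rw [show μ - y - (μ - x) = -(y - x) from by ring] at h2
  unfold Pf
  nlinarith [h1, h2]


lemma one_le_rpow' {x p : ℝ} (hx : 1 ≤ x) (hp : 0 ≤ p) : 1 ≤ x ^ p := by
  calc (1:ℝ) = 1 ^ p := (Real.one_rpow p).symm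
    _ ≤ x ^ p := Real.rpow_le_rpow zero_le_one hx hp

lemma gdiff_good (hα : 1 < α) (hα2 : α < 2) {θ : ℝ} (hθ : 0 < θ) (hθ1 : θ ≤ 1)
    {μ x : ℝ} (hμ : 0 ≤ μ) (hx : 1 ≤ x) (hgood : (1 + θ) * μ ≤ 2 * x) :
    α * ((α - 1) * θ) ≤ gd α x - gd α (μ - x) := by
  have hx0 : (0:ℝ) < x := by linarith
  have hgx : gd α x = α * x ^ (α - 1) := gd_of_nonneg (by linarith)
  have hxp : 1 ≤ x ^ (α - 1) := one_le_rpow' hx (by linarith)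
  rcases le_or_gt (μ - x) 0 with hmx | hmx
  · have h1 : gd α (μ - x) ≤ 0 := gd_nonpos hα hmx
    have hθα : (α - 1) * θ ≤ 1 := by
      have := mul_le_mul_of_nonneg_right (by linarith : α - 1 ≤ 1) hθ.le
      linarith
    have h2 : α * ((α - 1) * θ) ≤ α * 1 := mul_le_mul_of_nonneg_left hθα (by linarith)
    nlinarith
  · -- 0 < μ - x, so x < μ, μ > 1
    have hxμ : x < μ := by linarith
    have hμ1 : 1 < μ := lt_of_le_of_lt hx hxμ
    have hgmx : gd α (μ - x) = α * (μ - x) ^ (α - 1) := gd_of_nonneg hmx.le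
    have hab : μ - x ≤ x := by nlinarith
    have hkey : (α - 1) * x ^ (α - 2) * (x - (μ - x)) ≤ x ^ (α - 1) - (μ - x) ^ (α - 1) := by
      have := rpow_sub_rpow_ge_mul' hmx.le hab (by linarith : (0:ℝ) < α - 1) (by linarith)
      rw [show α - 1 - 1 = α - 2 from by ring] at this
      linarith
    have hxm : μ ^ (α - 2) ≤ x ^ (α - 2) :=
      Real.rpow_le_rpow_of_nonpos hx0 hxμ.le (by linarith)
    have hμa : μ ^ (α - 2) * μ = μ ^ (α - 1) := by
      rw [← Real.rpow_add_one (by positivity : μ ≠ 0)]; ring_nf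
    have hμ1' : 1 ≤ μ ^ (α - 1) := one_le_rpow' hμ1.le (by linarith)
    have h2xμ : θ * μ ≤ x - (μ - x) := by nlinarith
    -- chain
    have c1 : (α - 1) * θ ≤ x ^ (α - 1) - (μ - x) ^ (α - 1) := by
      have e1 : (α - 1) * (μ ^ (α - 2) * (θ * μ)) ≤ (α - 1) * (x ^ (α - 2) * (x - (μ - x))) := by
        have hθμ : (0:ℝ) ≤ θ * μ := by positivity
        have : μ ^ (α - 2) * (θ * μ) ≤ x ^ (α - 2) * (x - (μ - x)) := by
          have hx2 : (0:ℝ) ≤ x ^ (α - 2) := Real.rpow_nonneg hx0.le _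
          calc μ ^ (α - 2) * (θ * μ) ≤ x ^ (α - 2) * (θ * μ) :=
                mul_le_mul_of_nonneg_right hxm hθμ
            _ ≤ x ^ (α - 2) * (x - (μ - x)) := mul_le_mul_of_nonneg_left h2xμ hx2
        exact mul_le_mul_of_nonneg_left this (by linarith)
      have e2 : (α - 1) * θ ≤ (α - 1) * (μ ^ (α - 2) * (θ * μ)) := by
        have : μ ^ (α - 2) * (θ * μ) = θ * (μ ^ (α - 2) * μ) := by ring
        rw [this, hμa]
        have h3 : θ ≤ θ * μ ^ (α - 1) := le_mul_of_one_le_right hθ.le hμ1'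
        exact mul_le_mul_of_nonneg_left h3 (by linarith)
      nlinarith [hkey]
    rw [hgx, hgmx]
    have : α * (x ^ (α - 1) - (μ - x) ^ (α - 1)) ≥ α * ((α - 1) * θ) :=
      mul_le_mul_of_nonneg_left c1 (by linarith)
    linarith

lemma gdiff_bad (hα : 1 < α) (hα2 : α < 2) {μ x t : ℝ} (hx : 0 < x) (hxμ : x ≤ μ)
    (ht : 0 ≤ t) (hbd : μ + t ≤ 2 * x) :
    α * ((α - 1) * (μ ^ (α - 2) * t)) ≤ gd α x - gd α (μ - x) := by
  have hμ0 : 0 < μ := lt_of_lt_of_le hx hxμ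
  have hmx : 0 ≤ μ - x := by linarith
  have hgx : gd α x = α * x ^ (α - 1) := gd_of_nonneg hx.le
  have hgmx : gd α (μ - x) = α * (μ - x) ^ (α - 1) := gd_of_nonneg hmx
  have hab : μ - x ≤ x := by linarith
  have hkey : (α - 1) * x ^ (α - 2) * (x - (μ - x)) ≤ x ^ (α - 1) - (μ - x) ^ (α - 1) := by
    have := rpow_sub_rpow_ge_mul' hmx hab (by linarith : (0:ℝ) < α - 1) (by linarith)
    rw [show α - 1 - 1 = α - 2 from by ring] at this
    linarith
  have hxm : μ ^ (α - 2) ≤ x ^ (α - 2) :=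
    Real.rpow_le_rpow_of_nonpos hx hxμ (by linarith)
  have hμ2 : (0:ℝ) ≤ μ ^ (α - 2) := Real.rpow_nonneg hμ0.le _
  have c1 : (α - 1) * (μ ^ (α - 2) * t) ≤ x ^ (α - 1) - (μ - x) ^ (α - 1) := by
    have e1 : μ ^ (α - 2) * t ≤ x ^ (α - 2) * (x - (μ - x)) := by
      have hx2 : (0:ℝ) ≤ x ^ (α - 2) := Real.rpow_nonneg hx.le _
      calc μ ^ (α - 2) * t ≤ x ^ (α - 2) * t := mul_le_mul_of_nonneg_right hxm ht
        _ ≤ x ^ (α - 2) * (x - (μ - x)) := mul_le_mul_of_nonneg_left (by linarith) hx2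
    nlinarith [hkey]
  rw [hgx, hgmx]
  have : α * ((α - 1) * (μ ^ (α - 2) * t)) ≤ α * (x ^ (α - 1) - (μ - x) ^ (α - 1)) :=
    mul_le_mul_of_nonneg_left c1 (by linarith)
  linarith


lemma finite_abs_le (M : ℝ) : {x : ℤ | (|x| : ℝ) ≤ M}.Finite := by
  apply Set.Finite.subset (Set.finite_Icc (-⌈M⌉) ⌈M⌉)
  intro x hx
  simp only [Set.mem_setOf_eq] at hx
  have h1 : ((|x| : ℤ) : ℝ) ≤ (⌈M⌉ : ℝ) := by
    push_cast at hx ⊢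
    exact hx.trans (Int.le_ceil M)
  have h2 : |x| ≤ ⌈M⌉ := by exact_mod_cast h1
  rw [abs_le] at h2
  simp only [Set.mem_Icc]
  omega

lemma ncard_le_of_diam (S : Set ℤ) (D : ℝ) (hD : 0 ≤ D)
    (h : ∀ x ∈ S, ∀ y ∈ S, (x : ℝ) ≤ y → (y : ℝ) - x ≤ D) : (S.ncard : ℝ) ≤ 2 * D + 3 := by
  rcases S.eq_empty_or_nonempty with rfl | ⟨a, ha⟩
  · simp; linarith
  have hsub : S ⊆ Set.Icc (a - ⌈D⌉) (a + ⌈D⌉) := by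
    intro x hx
    have hd : (|x - a| : ℝ) ≤ D := by
      rcases le_total (x : ℝ) (a : ℝ) with hle | hle
      · have := h x hx a ha hle
        rw [abs_of_nonpos (by push_cast; linarith)]
        push_cast
        linarith
      · have := h a ha x hx hle
        rw [abs_of_nonneg (by push_cast; linarith)]
        push_cast
        linarith
    have h1 : ((|x - a| : ℤ) : ℝ) ≤ (⌈D⌉ : ℝ) := by
      push_cast
      push_cast at hd
      exact hd.trans (Int.le_ceil D)
    have h2 : |x - a| ≤ ⌈D⌉ := by exact_mod_cast h1
    rw [abs_le] at h2
    simp only [Set.mem_Icc]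
    omega
  have hcard := Set.ncard_le_ncard hsub (Set.finite_Icc _ _)
  have hicc : (Set.Icc (a - ⌈D⌉) (a + ⌈D⌉)).ncard = (a + ⌈D⌉ + 1 - (a - ⌈D⌉)).toNat := by
    rw [← Finset.coe_Icc, Set.ncard_coe_finset, Int.card_Icc]
  have hD0 : (0:ℤ) ≤ ⌈D⌉ := by positivity
  have hceil : (⌈D⌉ : ℝ) ≤ D + 1 := by linarith [Int.ceil_lt_add_one D]
  have h3' : ((a + ⌈D⌉ + 1 - (a - ⌈D⌉)).toNat : ℤ) = 2 * ⌈D⌉ + 1 := by omega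
  have h3 : ((a + ⌈D⌉ + 1 - (a - ⌈D⌉)).toNat : ℝ) = ((2 * ⌈D⌉ + 1 : ℤ) : ℝ) := by
    exact_mod_cast congrArg (fun z : ℤ => (z : ℝ)) h3'
  calc (S.ncard : ℝ) ≤ ((Set.Icc (a - ⌈D⌉) (a + ⌈D⌉)).ncard : ℝ) := by exact_mod_cast hcard
    _ = ((2 * ⌈D⌉ + 1 : ℤ) : ℝ) := by rw [hicc]; exact_mod_cast h3
    _ ≤ 2 * D + 3 := by push_cast; linarith

lemma ncard_le_of_Icc (S : Set ℤ) (a b : ℝ) (hab : a ≤ b)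
    (hsub : ∀ x ∈ S, a ≤ (x : ℝ) ∧ (x : ℝ) ≤ b) : (S.ncard : ℝ) ≤ b - a + 1 := by
  have hsub' : S ⊆ Set.Icc ⌈a⌉ ⌊b⌋ := by
    intro x hx
    obtain ⟨h1, h2⟩ := hsub x hx
    simp only [Set.mem_Icc]
    exact ⟨Int.ceil_le.2 h1, Int.le_floor.2 h2⟩
  have hcard := Set.ncard_le_ncard hsub' (Set.finite_Icc _ _)
  have hicc : (Set.Icc ⌈a⌉ ⌊b⌋).ncard = (⌊b⌋ + 1 - ⌈a⌉).toNat := by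
    rw [← Finset.coe_Icc, Set.ncard_coe_finset, Int.card_Icc]
  have hfl : (⌊b⌋ : ℝ) ≤ b := Int.floor_le b
  have hcl : a ≤ (⌈a⌉ : ℝ) := Int.le_ceil a
  have h3 : ((⌊b⌋ + 1 - ⌈a⌉).toNat : ℝ) ≤ b - a + 1 := by
    rcases le_or_gt (⌊b⌋ + 1 - ⌈a⌉) 0 with hle | hlt
    · rw [Int.toNat_of_nonpos hle]
      push_cast
      linarith
    · have h4 : ((⌊b⌋ + 1 - ⌈a⌉).toNat : ℤ) = ⌊b⌋ + 1 - ⌈a⌉ := Int.toNat_of_nonneg hlt.le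
      have h5 : ((⌊b⌋ + 1 - ⌈a⌉).toNat : ℝ) = ((⌊b⌋ + 1 - ⌈a⌉ : ℤ) : ℝ) := by
        exact_mod_cast congrArg (fun z : ℤ => (z : ℝ)) h4
      rw [h5]
      push_cast
      linarith
  calc (S.ncard : ℝ) ≤ ((Set.Icc ⌈a⌉ ⌊b⌋).ncard : ℝ) := by exact_mod_cast hcard
    _ ≤ b - a + 1 := by rw [hicc]; exact h3


lemma Pf_reflect (α μ t : ℝ) : Pf α μ (μ - t) = Pf α μ t := by
  unfold Pf
  rw [show μ - (μ - t) = t from by ring]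
  ring

lemma abs_le_of_Pf (hα : 1 < α) {c₀ B t : ℝ} (h : |Pf α μ t - B| ≤ c₀) :
    |t| ≤ max 1 (B + c₀) := by
  have hP : Pf α μ t ≤ B + c₀ := by have := abs_le.1 h; linarith [this.2]
  have h1 : |t| ^ α ≤ B + c₀ := by
    have := Real.rpow_nonneg (abs_nonneg (μ - t)) α
    unfold Pf at hP
    linarith
  rcases le_or_gt (|t|) 1 with h2 | h2
  · exact le_max_of_le_left h2
  · refine le_max_of_le_right ?_
    calc |t| = |t| ^ (1:ℝ) := (Real.rpow_one _).symm
      _ ≤ |t| ^ α := Real.rpow_le_rpow_of_exponent_le h2.le hα.le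
      _ ≤ B + c₀ := h1

lemma Xfin (hα : 1 < α) (c₀ B μ : ℝ) :
    {x : ℤ | |Pf α μ (x : ℝ) - B| ≤ c₀}.Finite := by
  apply (finite_abs_le (max 1 (B + c₀))).subset
  intro x hx
  simp only [Set.mem_setOf_eq] at hx ⊢
  have := abs_le_of_Pf hα hx
  push_cast
  exact this

lemma core_good_nonneg (hα : 1 < α) (hα2 : α < 2) {c₀ θ : ℝ} (hc₀ : 1 ≤ c₀)
    (hθ : 0 < θ) (hθ1 : θ ≤ 1) {n : ℤ} (hn : 0 ≤ n) (B : ℝ) :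
    ({x : ℤ | |Pf α (n : ℝ) (x : ℝ) - B| ≤ c₀ ∧ θ * |(n : ℝ)| ≤ |2 * (x : ℝ) - n|}.ncard : ℝ)
      ≤ 8 * c₀ / (α * ((α - 1) * θ)) + 8 := by
  set δ := α * ((α - 1) * θ) with hδdef
  have hδ : 0 < δ := mul_pos (by linarith) (mul_pos (by linarith) hθ)
  set D := 2 * c₀ / δ with hDdef
  have hD : 0 ≤ D := div_nonneg (by linarith) hδ.le
  set μ : ℝ := (n : ℝ) with hμdef
  have hμ : 0 ≤ μ := by rw [hμdef]; exact_mod_cast hn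
  set S : Set ℤ := {x : ℤ | |Pf α μ (x : ℝ) - B| ≤ c₀ ∧ θ * |μ| ≤ |2 * (x : ℝ) - μ|} with hSdef
  have hSfin : S.Finite := (Xfin hα c₀ B μ).subset (fun x hx => hx.1)
  set G1 : Set ℤ := {x ∈ S | (1 + θ) * μ ≤ 2 * (x : ℝ)} with hG1def
  set G2 : Set ℤ := {x ∈ S | 2 * (x : ℝ) ≤ (1 - θ) * μ} with hG2def
  have hG1fin : G1.Finite := hSfin.subset (fun x hx => hx.1)
  have hG2fin : G2.Finite := hSfin.subset (fun x hx => hx.1)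
  have hcover : S ⊆ G1 ∪ G2 := by
    intro x hx
    have h2 := hx.2
    rw [abs_of_nonneg hμ] at h2
    rcases le_abs.1 h2 with h | h
    · left; exact ⟨hx, by linarith⟩
    · right; exact ⟨hx, by linarith⟩
  have hG2G1 : (G2.ncard : ℝ) ≤ (G1.ncard : ℝ) := by
    have hinj : Function.Injective (fun x : ℤ => n - x) := fun a b h => by
      simp only at h; omega
    have himg : (fun x : ℤ => n - x) '' G2 ⊆ G1 := by
      rintro _ ⟨x, hx, rfl⟩
      obtain ⟨⟨hP, hgood⟩, hup⟩ := hx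
      have hc1 : ((n - x : ℤ) : ℝ) = μ - (x : ℝ) := by push_cast; ring
      refine ⟨⟨?_, ?_⟩, ?_⟩
      · rw [hc1, Pf_reflect]; exact hP
      · rw [hc1, show 2 * (μ - (x:ℝ)) - μ = -(2 * (x:ℝ) - μ) from by ring, abs_neg]
        exact hgood
      · rw [hc1]; linarith
    calc (G2.ncard : ℝ) = (((fun x : ℤ => n - x) '' G2).ncard : ℝ) := by
          rw [Set.ncard_image_of_injective G2 hinj]
      _ ≤ (G1.ncard : ℝ) := by
          exact_mod_cast Set.ncard_le_ncard himg hG1fin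
  -- count G1
  set G1' : Set ℤ := {x ∈ G1 | 1 ≤ x} with hG1'def
  have hG1'fin : G1'.Finite := hG1fin.subset (fun x hx => hx.1)
  have hG1sub : G1 ⊆ G1' ∪ {0} := by
    intro x hx
    have hx0 : (0:ℝ) ≤ 2 * (x:ℝ) := le_trans (by positivity) hx.2
    have : 0 ≤ x := by exact_mod_cast (by linarith : (0:ℝ) ≤ (x:ℝ))
    rcases eq_or_lt_of_le this with h | h
    · right; simp [← h]
    · left; exact ⟨hx, h⟩
  have hG1'card : (G1'.ncard : ℝ) ≤ 2 * D + 3 := by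
    apply ncard_le_of_diam G1' D hD
    intro x hx y hy hxy
    rcases eq_or_lt_of_le hxy with h | h
    · rw [← h]; simpa using hD
    obtain ⟨⟨⟨hPx, _⟩, hgx⟩, hx1⟩ := hx
    obtain ⟨⟨⟨hPy, _⟩, _⟩, _⟩ := hy
    have hx1' : (1:ℝ) ≤ (x:ℝ) := by exact_mod_cast hx1
    have hgd := gdiff_good hα hα2 hθ hθ1 hμ hx1' hgx
    have h2p := Pf_two_point hα μ (x:ℝ) (y:ℝ)
    have hyx : (0:ℝ) ≤ (y:ℝ) - x := by linarith
    have hmul : δ * ((y:ℝ) - x) ≤ (gd α (x:ℝ) - gd α (μ - x)) * ((y:ℝ) - x) :=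
      mul_le_mul_of_nonneg_right hgd hyx
    have hax := abs_le.1 hPx
    have hay := abs_le.1 hPy
    have hfin : δ * ((y:ℝ) - x) ≤ 2 * c₀ := by linarith
    show (y:ℝ) - x ≤ D
    rw [hDdef, le_div_iff₀ hδ]
    linarith
  have hG1card : (G1.ncard : ℝ) ≤ 2 * D + 4 := by
    have h1 := Set.ncard_le_ncard hG1sub (hG1'fin.union (Set.finite_singleton 0))
    have h2 := Set.ncard_union_le G1' ({0} : Set ℤ)
    have h3 : (({0} : Set ℤ)).ncard = 1 := Set.ncard_singleton 0
    have : (G1.ncard : ℝ) ≤ (G1'.ncard : ℝ) + 1 := by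
      push_cast at h1 h2 ⊢
      calc (G1.ncard : ℝ) ≤ ((G1' ∪ {0} : Set ℤ).ncard : ℝ) := by exact_mod_cast h1
        _ ≤ (G1'.ncard : ℝ) + (({0} : Set ℤ).ncard : ℝ) := by exact_mod_cast h2
        _ = (G1'.ncard : ℝ) + 1 := by rw [h3]; norm_num
    linarith
  have hScard : (S.ncard : ℝ) ≤ (G1.ncard : ℝ) + (G2.ncard : ℝ) := by
    have h1 := Set.ncard_le_ncard hcover (hG1fin.union hG2fin)
    have h2 := Set.ncard_union_le G1 G2
    have : S.ncard ≤ G1.ncard + G2.ncard := le_trans h1 h2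
    exact_mod_cast this
  have : (S.ncard : ℝ) ≤ 2 * (2 * D + 4) := by linarith
  calc (S.ncard : ℝ) ≤ 2 * (2 * D + 4) := this
    _ = 8 * c₀ / δ + 8 := by rw [hDdef]; ring


def XG (α c₀ θ B : ℝ) (n : ℤ) : Set ℤ :=
  {x : ℤ | |Pf α (n : ℝ) (x : ℝ) - B| ≤ c₀ ∧ θ * |(n : ℝ)| ≤ |2 * (x : ℝ) - (n : ℝ)|}

def XB (α c₀ θ B : ℝ) (n : ℤ) : Set ℤ :=
  {x : ℤ | |Pf α (n : ℝ) (x : ℝ) - B| ≤ c₀ ∧ |2 * (x : ℝ) - (n : ℝ)| < θ * |(n : ℝ)|}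

lemma XG_fin (hα : 1 < α) (c₀ θ B : ℝ) (n : ℤ) : (XG α c₀ θ B n).Finite :=
  (Xfin hα c₀ B (n : ℝ)).subset (fun x hx => hx.1)

lemma XB_fin (hα : 1 < α) (c₀ θ B : ℝ) (n : ℤ) : (XB α c₀ θ B n).Finite :=
  (Xfin hα c₀ B (n : ℝ)).subset (fun x hx => hx.1)

lemma core_bad_nonneg (hα : 1 < α) (hα2 : α < 2) {c₀ θ : ℝ} (hc₀ : 1 ≤ c₀)
    (hθ : 0 < θ) (hθ1 : θ ≤ 1) {n : ℤ} (hn : 0 ≤ n) (B : ℝ) :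
    (((XB α c₀ θ B n)).ncard : ℝ)
      ≤ (8 + 8 * c₀ / (α * (α - 1))) * (|(n : ℝ)| ^ (1 - α / 2) + 1) := by
  set κ := α * (α - 1) with hκdef
  have hκ : 0 < κ := mul_pos (by linarith) (by linarith)
  have hCb : (0:ℝ) ≤ 8 + 8 * c₀ / κ := by positivity
  rcases eq_or_lt_of_le hn with rfl | hn1
  · -- n = 0 : the bad set is empty
    have hempty : XB α c₀ θ B 0 = ∅ := by
      ext x
      simp only [XB, Set.mem_setOf_eq, Set.mem_empty_iff_false, iff_false, not_and]
      intro _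
      push_cast
      simp only [abs_zero, mul_zero, sub_zero]
      intro h
      exact absurd h (not_lt.2 (abs_nonneg _))
    rw [hempty]
    simp only [Set.ncard_empty, Nat.cast_zero]
    have : (0:ℝ) ≤ |((0:ℤ) : ℝ)| ^ (1 - α / 2) + 1 := by positivity
    exact mul_nonneg hCb this
  -- n ≥ 1
  have hn1' : (1:ℝ) ≤ (n : ℝ) := by exact_mod_cast hn1
  set μ : ℝ := (n : ℝ) with hμdef
  have hμ1 : 1 ≤ μ := hn1'
  have hμ0 : 0 < μ := by linarith
  set t : ℝ := μ ^ (1 - α / 2) with htdef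
  have ht1 : 1 ≤ t := one_le_rpow' hμ1 (by linarith)
  have ht0 : 0 < t := by linarith
  have habsμ : |μ| = μ := abs_of_pos hμ0
  set S : Set ℤ := XB α c₀ θ B n with hSdef
  have hSfin : S.Finite := XB_fin hα c₀ θ B n
  -- every element satisfies 0 < x and x < μ
  have hxbd : ∀ x ∈ S, (0:ℝ) < (x:ℝ) ∧ (x:ℝ) < μ := by
    intro x hx
    have h2 := hx.2
    rw [habsμ] at h2
    have := abs_lt.1 h2
    constructor <;> nlinarith [this.1, this.2, hθ, hθ1, hμ0]
  set Bp : Set ℤ := {x ∈ S | μ ≤ 2 * (x:ℝ)} with hBpdef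
  set Bm : Set ℤ := {x ∈ S | 2 * (x:ℝ) < μ} with hBmdef
  have hBpfin : Bp.Finite := hSfin.subset (fun x hx => hx.1)
  have hBmfin : Bm.Finite := hSfin.subset (fun x hx => hx.1)
  have hcover : S ⊆ Bp ∪ Bm := by
    intro x hx
    rcases le_or_gt μ (2 * (x:ℝ)) with h | h
    · left; exact ⟨hx, h⟩
    · right; exact ⟨hx, h⟩
  have hBmBp : (Bm.ncard : ℝ) ≤ (Bp.ncard : ℝ) := by
    have hinj : Function.Injective (fun x : ℤ => n - x) := fun a b h => by
      simp only at h; omega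
    have himg : (fun x : ℤ => n - x) '' Bm ⊆ Bp := by
      rintro _ ⟨x, hx, rfl⟩
      obtain ⟨⟨hP, hbad⟩, hup⟩ := hx
      have hc1 : ((n - x : ℤ) : ℝ) = μ - (x : ℝ) := by push_cast; ring
      refine ⟨⟨?_, ?_⟩, ?_⟩
      · rw [hc1, Pf_reflect]; exact hP
      · rw [hc1, show 2 * (μ - (x:ℝ)) - μ = -(2 * (x:ℝ) - μ) from by ring, abs_neg]
        exact hbad
      · rw [hc1]; linarith
    calc (Bm.ncard : ℝ) = (((fun x : ℤ => n - x) '' Bm).ncard : ℝ) := by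
          rw [Set.ncard_image_of_injective Bm hinj]
      _ ≤ (Bp.ncard : ℝ) := by exact_mod_cast Set.ncard_le_ncard himg hBpfin
  set B1 : Set ℤ := {x ∈ Bp | 2 * (x:ℝ) - μ < t} with hB1def
  set B2 : Set ℤ := {x ∈ Bp | t ≤ 2 * (x:ℝ) - μ} with hB2def
  have hB1fin : B1.Finite := hBpfin.subset (fun x hx => hx.1)
  have hB2fin : B2.Finite := hBpfin.subset (fun x hx => hx.1)
  have hcover2 : Bp ⊆ B1 ∪ B2 := by
    intro x hx
    rcases lt_or_ge (2 * (x:ℝ) - μ) t with h | h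
    · left; exact ⟨hx, h⟩
    · right; exact ⟨hx, h⟩
  have hB1card : (B1.ncard : ℝ) ≤ t / 2 + 1 := by
    have hmem : ∀ x ∈ B1, μ / 2 ≤ (x:ℝ) ∧ (x:ℝ) ≤ (μ + t) / 2 := by
      intro x hx
      obtain ⟨⟨_, hlow⟩, hup⟩ := hx
      constructor <;> linarith
    have := ncard_le_of_Icc B1 (μ / 2) ((μ + t) / 2) (by linarith) hmem
    linarith
  have hB2card : (B2.ncard : ℝ) ≤ 2 * (2 * c₀ / κ * t) + 3 := by
    set D₂ : ℝ := 2 * c₀ / κ * t with hD2def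
    have hD2 : 0 ≤ D₂ := by positivity
    apply ncard_le_of_diam B2 D₂ hD2
    intro x hx y hy hxy
    rcases eq_or_lt_of_le hxy with h | h
    · rw [← h]; simpa using hD2
    obtain ⟨⟨⟨hPx, hbadx⟩, _⟩, htx⟩ := hx
    obtain ⟨⟨⟨hPy, _⟩, _⟩, _⟩ := hy
    have hx0 : (0:ℝ) < (x:ℝ) := by nlinarith [ht0, hμ0]
    have hxμ' : (x:ℝ) < μ := by
      rw [habsμ] at hbadx
      have := (abs_lt.1 hbadx).2
      nlinarith
    have hgd := gdiff_bad hα hα2 hx0 hxμ'.le ht0.le (by linarith : μ + t ≤ 2 * (x:ℝ))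
    have h2p := Pf_two_point hα μ (x:ℝ) (y:ℝ)
    have hyx : (0:ℝ) ≤ (y:ℝ) - x := by linarith
    set δ₂ : ℝ := α * ((α - 1) * (μ ^ (α - 2) * t)) with hδ2def
    have hμa2 : (0:ℝ) < μ ^ (α - 2) := Real.rpow_pos_of_pos hμ0 _
    have hδ₂ : 0 < δ₂ := by
      apply mul_pos (by linarith)
      apply mul_pos (by linarith)
      exact mul_pos hμa2 ht0
    have hmul : δ₂ * ((y:ℝ) - x) ≤ (gd α (x:ℝ) - gd α (μ - x)) * ((y:ℝ) - x) :=
      mul_le_mul_of_nonneg_right hgd hyx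
    have hax := abs_le.1 hPx
    have hay := abs_le.1 hPy
    have hup2 : δ₂ * ((y:ℝ) - x) ≤ 2 * c₀ := by linarith
    have htt : μ ^ (α - 2) * (t * t) = 1 := by
      rw [htdef, ← Real.rpow_add hμ0, ← Real.rpow_add hμ0]
      rw [show α - 2 + (1 - α / 2 + (1 - α / 2)) = 0 from by ring, Real.rpow_zero]
    have heq : δ₂ * D₂ = 2 * c₀ := by
      have hκ0 : κ ≠ 0 := ne_of_gt hκ
      have h5 : δ₂ * D₂ = 2 * c₀ * (μ ^ (α - 2) * (t * t)) * (κ / κ) := by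
        rw [hδ2def, hD2def, hκdef]; ring
      rw [h5, htt, div_self hκ0]
      ring
    have : δ₂ * ((y:ℝ) - x) ≤ δ₂ * D₂ := by rw [heq]; exact hup2
    exact le_of_mul_le_mul_left this hδ₂
  have hBpcard : (Bp.ncard : ℝ) ≤ (B1.ncard : ℝ) + (B2.ncard : ℝ) := by
    have h1 := Set.ncard_le_ncard hcover2 (hB1fin.union hB2fin)
    have h2 := Set.ncard_union_le B1 B2
    exact_mod_cast le_trans h1 h2
  have hScard : (S.ncard : ℝ) ≤ (Bp.ncard : ℝ) + (Bm.ncard : ℝ) := by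
    have h1 := Set.ncard_le_ncard hcover (hBpfin.union hBmfin)
    have h2 := Set.ncard_union_le Bp Bm
    exact_mod_cast le_trans h1 h2
  have hc₀κ : (0:ℝ) ≤ c₀ / κ := div_nonneg (by linarith) hκ.le
  have hfinal : (S.ncard : ℝ) ≤ (8 + 8 * c₀ / κ) * (t + 1) := by
    have expand : (8 + 8 * c₀ / κ) * (t + 1) = 8 * t + 8 + 8 * (c₀ / κ) * t + 8 * (c₀ / κ) := by
      ring
    have h6 : (S.ncard : ℝ) ≤ t + 8 + 8 * (c₀ / κ) * t := by
      have e1 : 2 * (2 * c₀ / κ * t) + 3 = 4 * (c₀ / κ) * t + 3 := by ring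
      rw [e1] at hB2card
      linarith [hB1card, hB2card, hBmBp, hBpcard, hScard]
    rw [expand]
    have h7 : t ≤ 8 * t := by linarith
    have h8 : (0:ℝ) ≤ 8 * (c₀ / κ) := by linarith
    linarith [h6, h7, h8]
  rw [show |(n:ℝ)| = μ from habsμ, ← htdef]
  exact hfinal

lemma Pf_negn (α n x : ℝ) : Pf α (-n) x = Pf α n (-x) := by
  unfold Pf
  have h1 : |(-n) - x| = |n + x| := by rw [show -n - x = -(n + x) from by ring, abs_neg]
  have h2 : |n - -x| = |n + x| := by ring_nf
  rw [h1, h2, ← abs_neg x]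

lemma XG_neg_mem (α c₀ θ B : ℝ) (n x : ℤ) :
    x ∈ XG α c₀ θ B (-n) ↔ -x ∈ XG α c₀ θ B n := by
  unfold XG
  simp only [Set.mem_setOf_eq]
  have hPf : Pf α ((-n : ℤ) : ℝ) (x : ℝ) = Pf α (n : ℝ) ((-x : ℤ) : ℝ) := by
    push_cast
    exact Pf_negn α (n:ℝ) (x:ℝ)
  have habs1 : |((-n : ℤ) : ℝ)| = |(n:ℝ)| := by push_cast; exact abs_neg _
  have habs2 : |2 * (x:ℝ) - ((-n:ℤ):ℝ)| = |2 * ((-x : ℤ):ℝ) - (n:ℝ)| := by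
    push_cast
    rw [show 2 * (x:ℝ) - -(n:ℝ) = -(2 * (-(x:ℝ)) - n) from by ring, abs_neg]
  rw [hPf, habs1, habs2]

lemma XB_neg_mem (α c₀ θ B : ℝ) (n x : ℤ) :
    x ∈ XB α c₀ θ B (-n) ↔ -x ∈ XB α c₀ θ B n := by
  unfold XB
  simp only [Set.mem_setOf_eq]
  have hPf : Pf α ((-n : ℤ) : ℝ) (x : ℝ) = Pf α (n : ℝ) ((-x : ℤ) : ℝ) := by
    push_cast
    exact Pf_negn α (n:ℝ) (x:ℝ)
  have habs1 : |((-n : ℤ) : ℝ)| = |(n:ℝ)| := by push_cast; exact abs_neg _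
  have habs2 : |2 * (x:ℝ) - ((-n:ℤ):ℝ)| = |2 * ((-x : ℤ):ℝ) - (n:ℝ)| := by
    push_cast
    rw [show 2 * (x:ℝ) - -(n:ℝ) = -(2 * (-(x:ℝ)) - n) from by ring, abs_neg]
  rw [hPf, habs1, habs2]

lemma XG_neg (α c₀ θ B : ℝ) (n : ℤ) :
    XG α c₀ θ B (-n) = (fun x : ℤ => -x) '' XG α c₀ θ B n := by
  ext x
  rw [Set.mem_image]
  constructor
  · intro hx
    exact ⟨-x, (XG_neg_mem α c₀ θ B n x).1 hx, neg_neg x⟩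
  · rintro ⟨y, hy, rfl⟩
    exact (XG_neg_mem α c₀ θ B n (-y)).2 (by rwa [neg_neg])

lemma XB_neg (α c₀ θ B : ℝ) (n : ℤ) :
    XB α c₀ θ B (-n) = (fun x : ℤ => -x) '' XB α c₀ θ B n := by
  ext x
  rw [Set.mem_image]
  constructor
  · intro hx
    exact ⟨-x, (XB_neg_mem α c₀ θ B n x).1 hx, neg_neg x⟩
  · rintro ⟨y, hy, rfl⟩
    exact (XB_neg_mem α c₀ θ B n (-y)).2 (by rwa [neg_neg])


lemma core_good (hα : 1 < α) (hα2 : α < 2) {c₀ θ : ℝ} (hc₀ : 1 ≤ c₀)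
    (hθ : 0 < θ) (hθ1 : θ ≤ 1) (n : ℤ) (B : ℝ) :
    ((XG α c₀ θ B n).ncard : ℝ) ≤ 8 * c₀ / (α * ((α - 1) * θ)) + 8 := by
  rcases le_or_gt 0 n with hn | hn
  · exact core_good_nonneg hα hα2 hc₀ hθ hθ1 hn B
  · have h1 : XG α c₀ θ B n = (fun x : ℤ => -x) '' XG α c₀ θ B (-n) := by
      have := XG_neg α c₀ θ B (-n)
      rwa [neg_neg] at this
    rw [h1, Set.ncard_image_of_injective _ neg_injective]
    exact core_good_nonneg hα hα2 hc₀ hθ hθ1 (by omega : (0:ℤ) ≤ -n) B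

lemma core_bad (hα : 1 < α) (hα2 : α < 2) {c₀ θ : ℝ} (hc₀ : 1 ≤ c₀)
    (hθ : 0 < θ) (hθ1 : θ ≤ 1) (n : ℤ) (B : ℝ) :
    ((XB α c₀ θ B n).ncard : ℝ)
      ≤ (8 + 8 * c₀ / (α * (α - 1))) * (|(n : ℝ)| ^ (1 - α / 2) + 1) := by
  rcases le_or_gt 0 n with hn | hn
  · exact core_bad_nonneg hα hα2 hc₀ hθ hθ1 hn B
  · have h1 : XB α c₀ θ B n = (fun x : ℤ => -x) '' XB α c₀ θ B (-n) := by
      have := XB_neg α c₀ θ B (-n)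
      rwa [neg_neg] at this
    rw [h1, Set.ncard_image_of_injective _ neg_injective]
    have := core_bad_nonneg (c₀ := c₀) (θ := θ) hα hα2 hc₀ hθ hθ1 (by omega : (0:ℤ) ≤ -n) B
    rwa [show |((-n : ℤ) : ℝ)| = |(n : ℝ)| from by push_cast; exact abs_neg _] at this


lemma mem1 {α c₀ m N N₁ N₂ N₃ : ℝ} {k k₁ k₂ k₃ : ℤ}
    (hS : (k, k₁, k₂, k₃) ∈ Sset α c₀ m N N₁ N₂ N₃) :
    |Pf α ((k + k₂ : ℤ) : ℝ) (k₁ : ℝ) - (m + (|k| : ℝ) ^ α + (|k₂| : ℝ) ^ α)| ≤ c₀ := by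
  obtain ⟨h1, -, -, habs, -⟩ := hS
  simp only at h1
  have h1' : k₃ = k + k₂ - k₁ := by omega
  have hPf : Pf α ((k + k₂ : ℤ) : ℝ) (k₁ : ℝ) - (m + (|k| : ℝ) ^ α + (|k₂| : ℝ) ^ α)
      = (|k₁| : ℝ) ^ α - (|k₂| : ℝ) ^ α + (|k₃| : ℝ) ^ α - (|k| : ℝ) ^ α - m := by
    unfold Pf
    have e : ((k + k₂ : ℤ) : ℝ) - (k₁ : ℝ) = ((k₃ : ℤ) : ℝ) := by
      rw [h1']; push_cast; ring
    rw [e]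
    push_cast [Int.cast_abs]
    ring
  rw [hPf]
  exact habs

lemma mem2 {α c₀ m N N₁ N₂ N₃ : ℝ} {k k₁ k₂ k₃ : ℤ}
    (hS : (k, k₁, k₂, k₃) ∈ Sset α c₀ m N N₁ N₂ N₃) :
    |Pf α ((k₁ + k₃ : ℤ) : ℝ) (k : ℝ) - ((|k₁| : ℝ) ^ α + (|k₃| : ℝ) ^ α - m)| ≤ c₀ := by
  obtain ⟨h1, -, -, habs, -⟩ := hS
  simp only at h1
  have h1' : k₂ = k₁ + k₃ - k := by omega
  have hPf : Pf α ((k₁ + k₃ : ℤ) : ℝ) (k : ℝ) - ((|k₁| : ℝ) ^ α + (|k₃| : ℝ) ^ α - m)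
      = -((|k₁| : ℝ) ^ α - (|k₂| : ℝ) ^ α + (|k₃| : ℝ) ^ α - (|k| : ℝ) ^ α - m) := by
    unfold Pf
    have e : ((k₁ + k₃ : ℤ) : ℝ) - (k : ℝ) = ((k₂ : ℤ) : ℝ) := by
      rw [h1']; push_cast; ring
    rw [e]
    push_cast [Int.cast_abs]
    ring
  rw [hPf, abs_neg]
  exact habs

end GBC

/-- Counting bounds for the good and bad portions of the fibers
`S_{k k₂}` and `S_{k₁ k₃}`. Given `(k, k₂)` the fiber consists of pairs `(k₁, k₃)`, split
according to whether `|2k₁ - (k + k₂)| ≥ θ |k + k₂|` (good) or `< θ |k + k₂|` (bad);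
similarly for `(k₁, k₃)` with `|2k - (k₁ + k₃)|` versus `θ |k₁ + k₃|`. -/
theorem good_bad_counting (α c₀ θ : ℝ) (hα : α ∈ Set.Ioo (1 : ℝ) 2) (hc₀ : 1 ≤ c₀)
    (hθ : θ ∈ Set.Ioc (0 : ℝ) 1) :
    ∃ C : ℝ, 0 < C ∧ ∀ m N N₁ N₂ N₃ : ℝ,
      1 ≤ N₁ → 1 ≤ N₂ → 1 ≤ N₃ → N₁ ≤ N → N₂ ≤ N → N₃ ≤ N →
      ((∀ k k₂ : ℤ,
        (({q : ℤ × ℤ | (k, q.1, k₂, q.2) ∈ Sset α c₀ m N N₁ N₂ N₃ ∧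
            θ * (|k + k₂| : ℝ) ≤ (|2 * q.1 - (k + k₂)| : ℝ)}.ncard : ℝ) ≤ C)) ∧
      (∀ k₁ k₃ : ℤ,
        (({q : ℤ × ℤ | (q.1, k₁, q.2, k₃) ∈ Sset α c₀ m N N₁ N₂ N₃ ∧
            θ * (|k₁ + k₃| : ℝ) ≤ (|2 * q.1 - (k₁ + k₃)| : ℝ)}.ncard : ℝ) ≤ C)) ∧
      (∀ k k₂ : ℤ,
        (({q : ℤ × ℤ | (k, q.1, k₂, q.2) ∈ Sset α c₀ m N N₁ N₂ N₃ ∧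
            (|2 * q.1 - (k + k₂)| : ℝ) < θ * (|k + k₂| : ℝ)}.ncard : ℝ) ≤
          C * ((|k + k₂| : ℝ) ^ (1 - α / 2) + 1))) ∧
      (∀ k₁ k₃ : ℤ,
        (({q : ℤ × ℤ | (q.1, k₁, q.2, k₃) ∈ Sset α c₀ m N N₁ N₂ N₃ ∧
            (|2 * q.1 - (k₁ + k₃)| : ℝ) < θ * (|k₁ + k₃| : ℝ)}.ncard : ℝ) ≤
          C * ((|k₁ + k₃| : ℝ) ^ (1 - α / 2) + 1)))) := by
  obtain ⟨hα1, hα2⟩ := hα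
  obtain ⟨hθ0, hθ1⟩ := hθ
  set Cg : ℝ := 8 * c₀ / (α * ((α - 1) * θ)) + 8 with hCgdef
  set Cb : ℝ := 8 + 8 * c₀ / (α * (α - 1)) with hCbdef
  have hCg : 0 < Cg := by
    have : 0 < α * ((α - 1) * θ) := mul_pos (by linarith) (mul_pos (by linarith) hθ0)
    have h2 : 0 ≤ 8 * c₀ / (α * ((α - 1) * θ)) := div_nonneg (by linarith) this.le
    rw [hCgdef]; linarith
  have hCb : 0 < Cb := by
    have : 0 < α * (α - 1) := mul_pos (by linarith) (by linarith)
    have h2 : 0 ≤ 8 * c₀ / (α * (α - 1)) := div_nonneg (by linarith) this.le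
    rw [hCbdef]; linarith
  refine ⟨Cg + Cb, by linarith, ?_⟩
  intro m N N₁ N₂ N₃ _ _ _ _ _ _
  refine ⟨?_, ?_, ?_, ?_⟩
  · -- good, fiber over (k, k₂)
    intro k k₂
    set A : Set (ℤ × ℤ) := {q : ℤ × ℤ | (k, q.1, k₂, q.2) ∈ Sset α c₀ m N N₁ N₂ N₃ ∧
      θ * (|k + k₂| : ℝ) ≤ (|2 * q.1 - (k + k₂)| : ℝ)} with hAdef
    set B : ℝ := m + (|k| : ℝ) ^ α + (|k₂| : ℝ) ^ α with hBdef
    have hinj : Set.InjOn Prod.fst A := by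
      intro q hq q' hq' heq
      have h1 := hq.1.1
      have h1' := hq'.1.1
      simp only at h1 h1'
      exact Prod.ext_iff.2 ⟨heq, by omega⟩
    have hsub : Prod.fst '' A ⊆ GBC.XG α c₀ θ B (k + k₂) := by
      rintro _ ⟨q, hq, rfl⟩
      refine ⟨GBC.mem1 hq.1, ?_⟩
      have hg := hq.2
      push_cast [Int.cast_abs] at hg ⊢
      exact hg
    calc (A.ncard : ℝ) = ((Prod.fst '' A).ncard : ℝ) := by
          rw [Set.ncard_image_of_injOn hinj]
      _ ≤ ((GBC.XG α c₀ θ B (k + k₂)).ncard : ℝ) := by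
          exact_mod_cast Set.ncard_le_ncard hsub (GBC.XG_fin hα1 c₀ θ B (k + k₂))
      _ ≤ Cg := GBC.core_good hα1 hα2 hc₀ hθ0 hθ1 (k + k₂) B
      _ ≤ Cg + Cb := by linarith
  · -- good, fiber over (k₁, k₃)
    intro k₁ k₃
    set A : Set (ℤ × ℤ) := {q : ℤ × ℤ | (q.1, k₁, q.2, k₃) ∈ Sset α c₀ m N N₁ N₂ N₃ ∧
      θ * (|k₁ + k₃| : ℝ) ≤ (|2 * q.1 - (k₁ + k₃)| : ℝ)} with hAdef
    set B : ℝ := (|k₁| : ℝ) ^ α + (|k₃| : ℝ) ^ α - m with hBdef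
    have hinj : Set.InjOn Prod.fst A := by
      intro q hq q' hq' heq
      have h1 := hq.1.1
      have h1' := hq'.1.1
      simp only at h1 h1'
      exact Prod.ext_iff.2 ⟨heq, by omega⟩
    have hsub : Prod.fst '' A ⊆ GBC.XG α c₀ θ B (k₁ + k₃) := by
      rintro _ ⟨q, hq, rfl⟩
      refine ⟨GBC.mem2 hq.1, ?_⟩
      have hg := hq.2
      push_cast [Int.cast_abs] at hg ⊢
      exact hg
    calc (A.ncard : ℝ) = ((Prod.fst '' A).ncard : ℝ) := by
          rw [Set.ncard_image_of_injOn hinj]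
      _ ≤ ((GBC.XG α c₀ θ B (k₁ + k₃)).ncard : ℝ) := by
          exact_mod_cast Set.ncard_le_ncard hsub (GBC.XG_fin hα1 c₀ θ B (k₁ + k₃))
      _ ≤ Cg := GBC.core_good hα1 hα2 hc₀ hθ0 hθ1 (k₁ + k₃) B
      _ ≤ Cg + Cb := by linarith
  · -- bad, fiber over (k, k₂)
    intro k k₂
    set A : Set (ℤ × ℤ) := {q : ℤ × ℤ | (k, q.1, k₂, q.2) ∈ Sset α c₀ m N N₁ N₂ N₃ ∧
      (|2 * q.1 - (k + k₂)| : ℝ) < θ * (|k + k₂| : ℝ)} with hAdef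
    set B : ℝ := m + (|k| : ℝ) ^ α + (|k₂| : ℝ) ^ α with hBdef
    have hinj : Set.InjOn Prod.fst A := by
      intro q hq q' hq' heq
      have h1 := hq.1.1
      have h1' := hq'.1.1
      simp only at h1 h1'
      exact Prod.ext_iff.2 ⟨heq, by omega⟩
    have hsub : Prod.fst '' A ⊆ GBC.XB α c₀ θ B (k + k₂) := by
      rintro _ ⟨q, hq, rfl⟩
      refine ⟨GBC.mem1 hq.1, ?_⟩
      have hg := hq.2
      push_cast [Int.cast_abs] at hg ⊢
      exact hg
    have habs : (|k + k₂| : ℝ) = |((k + k₂ : ℤ) : ℝ)| := by push_cast [Int.cast_abs]; ring_nf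
    have hX : (0:ℝ) ≤ |((k + k₂ : ℤ) : ℝ)| ^ (1 - α / 2) :=
      Real.rpow_nonneg (abs_nonneg _) _
    calc (A.ncard : ℝ) = ((Prod.fst '' A).ncard : ℝ) := by
          rw [Set.ncard_image_of_injOn hinj]
      _ ≤ ((GBC.XB α c₀ θ B (k + k₂)).ncard : ℝ) := by
          exact_mod_cast Set.ncard_le_ncard hsub (GBC.XB_fin hα1 c₀ θ B (k + k₂))
      _ ≤ Cb * (|((k + k₂ : ℤ) : ℝ)| ^ (1 - α / 2) + 1) :=
          GBC.core_bad hα1 hα2 hc₀ hθ0 hθ1 (k + k₂) B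
      _ ≤ (Cg + Cb) * ((|k + k₂| : ℝ) ^ (1 - α / 2) + 1) := by
          rw [habs]
          have : (0:ℝ) ≤ |((k + k₂ : ℤ) : ℝ)| ^ (1 - α / 2) + 1 := by linarith
          nlinarith [mul_nonneg hCg.le this]
  · -- bad, fiber over (k₁, k₃)
    intro k₁ k₃
    set A : Set (ℤ × ℤ) := {q : ℤ × ℤ | (q.1, k₁, q.2, k₃) ∈ Sset α c₀ m N N₁ N₂ N₃ ∧
      (|2 * q.1 - (k₁ + k₃)| : ℝ) < θ * (|k₁ + k₃| : ℝ)} with hAdef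
    set B : ℝ := (|k₁| : ℝ) ^ α + (|k₃| : ℝ) ^ α - m with hBdef
    have hinj : Set.InjOn Prod.fst A := by
      intro q hq q' hq' heq
      have h1 := hq.1.1
      have h1' := hq'.1.1
      simp only at h1 h1'
      exact Prod.ext_iff.2 ⟨heq, by omega⟩
    have hsub : Prod.fst '' A ⊆ GBC.XB α c₀ θ B (k₁ + k₃) := by
      rintro _ ⟨q, hq, rfl⟩
      refine ⟨GBC.mem2 hq.1, ?_⟩
      have hg := hq.2
      push_cast [Int.cast_abs] at hg ⊢
      exact hg
    have habs : (|k₁ + k₃| : ℝ) = |((k₁ + k₃ : ℤ) : ℝ)| := by push_cast [Int.cast_abs]; ring_nf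
    have hX : (0:ℝ) ≤ |((k₁ + k₃ : ℤ) : ℝ)| ^ (1 - α / 2) :=
      Real.rpow_nonneg (abs_nonneg _) _
    calc (A.ncard : ℝ) = ((Prod.fst '' A).ncard : ℝ) := by
          rw [Set.ncard_image_of_injOn hinj]
      _ ≤ ((GBC.XB α c₀ θ B (k₁ + k₃)).ncard : ℝ) := by
          exact_mod_cast Set.ncard_le_ncard hsub (GBC.XB_fin hα1 c₀ θ B (k₁ + k₃))
      _ ≤ Cb * (|((k₁ + k₃ : ℤ) : ℝ)| ^ (1 - α / 2) + 1) :=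
          GBC.core_bad hα1 hα2 hc₀ hθ0 hθ1 (k₁ + k₃) B
      _ ≤ (Cg + Cb) * ((|k₁ + k₃| : ℝ) ^ (1 - α / 2) + 1) := by
          rw [habs]
          have : (0:ℝ) ≤ |((k₁ + k₃ : ℤ) : ℝ)| ^ (1 - α / 2) + 1 := by linarith
          nlinarith [mul_nonneg hCg.le this]
end

section
/- For every θ ∈ (0,1/2] there exists a constant C = C(α,c₀,θ) such that for all m ∈ ℝ and all N, N₁, N₂, N₃ with 1 ≤ N₁, N₂, N₃ ≤ N: for every (k,k₂) ∈ ℤ², #S^{bad,θ}_{k k₂} ≤ C·(min(N₁,N₃))^{1−α/2}, and for every (k₁,k₃) ∈ ℤ², #S^{bad,θ}_{k₁ k₃} ≤ C·(min(N,N₂))^{1−α/2}. -/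
open Real Set

private lemma strictMono_gap {k : ℕ} (f : Fin k → ℤ) (hf : StrictMono f) :
    ∀ d : ℕ, ∀ i j : Fin k, (j : ℕ) = (i : ℕ) + d → (d : ℤ) ≤ f j - f i := by
  intro d
  induction d with
  | zero =>
    intro i j h
    have : i = j := Fin.ext (by omega)
    subst this; simp
  | succ n ih =>
    intro i j h
    have hj : (i : ℕ) + n < k := by omega
    have h1 : (n : ℤ) ≤ f ⟨(i : ℕ) + n, hj⟩ - f i := ih i _ rfl
    have h2 : f ⟨(i : ℕ) + n, hj⟩ < f j := by
      apply hf
      rw [Fin.lt_def]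
      show (i : ℕ) + n < (j : ℕ)
      omega
    push_cast
    omega


set_option maxHeartbeats 1000000 in
private lemma convex_aux (α M u v δ : ℝ) (hα1 : 1 < α) (hα2 : α < 2)
    (hu0 : 0 < u) (hvM : v < M) (hv0 : 0 < v)
    (hδ : δ = α * (α - 1) / v ^ (2 - α)) :
    ConvexOn ℝ (Set.Icc u v) (fun t : ℝ => t ^ α + (M - t) ^ α - δ/2 * t^2) := by
  have hder : ∀ t ∈ Set.Ioo u v,
      HasDerivAt (fun t : ℝ => t ^ α + (M - t) ^ α - δ/2 * t^2)
        (α * t ^ (α - 1) - α * (M - t) ^ (α - 1) - δ * t) t := by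
    intro t ht
    have ht0 : 0 < t := lt_trans hu0 ht.1
    have htM : 0 < M - t := by have := ht.2; linarith
    have d1 : HasDerivAt (fun s : ℝ => s ^ α) (α * t ^ (α - 1)) t :=
      Real.hasDerivAt_rpow_const (Or.inl ht0.ne')
    have dm : HasDerivAt (fun s : ℝ => M - s) (-1) t := (hasDerivAt_id t).const_sub M
    have d2 : HasDerivAt (fun s : ℝ => (M - s) ^ α) ((-1) * α * (M - t) ^ (α - 1)) t :=
      dm.rpow_const (Or.inl htM.ne')
    have d3 : HasDerivAt (fun s : ℝ => δ/2 * s^2) (δ/2 * (2 * t)) t := by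
      simpa using (((hasDerivAt_pow 2 t)).const_mul (δ/2))
    have := (d1.add d2).sub d3
    exact this.congr_deriv (by ring)
  have hder2 : ∀ t ∈ Set.Ioo u v,
      HasDerivAt (fun t : ℝ => α * t ^ (α - 1) - α * (M - t) ^ (α - 1) - δ * t)
        (α * (α-1) * t ^ (α - 2) + α * (α-1) * (M - t) ^ (α - 2) - δ) t := by
    intro t ht
    have ht0 : 0 < t := lt_trans hu0 ht.1
    have htM : 0 < M - t := by have := ht.2; linarith
    have d1 : HasDerivAt (fun s : ℝ => s ^ (α - 1)) ((α - 1) * t ^ (α - 1 - 1)) t :=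
      Real.hasDerivAt_rpow_const (Or.inl ht0.ne')
    have dm : HasDerivAt (fun s : ℝ => M - s) (-1) t := (hasDerivAt_id t).const_sub M
    have d2 : HasDerivAt (fun s : ℝ => (M - s) ^ (α - 1))
        ((-1) * (α - 1) * (M - t) ^ (α - 1 - 1)) t :=
      dm.rpow_const (Or.inl htM.ne')
    have := ((d1.const_mul α).sub (d2.const_mul α)).sub ((hasDerivAt_id t).const_mul δ)
    exact this.congr_deriv (by rw [show α - 1 - 1 = α - 2 by ring]; ring)
  have hcont : ContinuousOn (fun t : ℝ => t ^ α + (M - t) ^ α - δ/2 * t^2) (Set.Icc u v) := by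
    intro t ht
    have ht0 : 0 < t := lt_of_lt_of_le hu0 ht.1
    have htM : 0 < M - t := by have := ht.2; linarith
    have c1 : ContinuousAt (fun s : ℝ => s ^ α) t :=
      Real.continuousAt_rpow_const t α (Or.inl ht0.ne')
    have c2 : ContinuousAt (fun s : ℝ => (M - s) ^ α) t := by
      have := (Real.continuousAt_rpow_const (M - t) α (Or.inl htM.ne')).comp
        ((continuous_const.sub continuous_id).continuousAt (x := t))
      exact this
    exact ((c1.add c2).sub
      ((continuous_const.mul (continuous_pow 2)).continuousAt)).continuousWithinAt
  apply convexOn_of_deriv2_nonneg (convex_Icc u v) hcont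
  · rw [interior_Icc]
    exact fun t ht => (hder t ht).differentiableAt.differentiableWithinAt
  · rw [interior_Icc]
    intro t ht
    have heq : deriv (fun t : ℝ => t ^ α + (M - t) ^ α - δ/2 * t^2) =ᶠ[nhds t]
        (fun t : ℝ => α * t ^ (α - 1) - α * (M - t) ^ (α - 1) - δ * t) :=
      Filter.eventuallyEq_of_mem (isOpen_Ioo.mem_nhds ht) (fun s hs => (hder s hs).deriv)
    exact ((hder2 t ht).differentiableAt.congr_of_eventuallyEq heq).differentiableWithinAt
  · rw [interior_Icc]
    intro t ht
    have ht0 : 0 < t := lt_trans hu0 ht.1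
    have htM : 0 < M - t := by have := ht.2; linarith
    have heq : deriv (fun t : ℝ => t ^ α + (M - t) ^ α - δ/2 * t^2) =ᶠ[nhds t]
        (fun t : ℝ => α * t ^ (α - 1) - α * (M - t) ^ (α - 1) - δ * t) :=
      Filter.eventuallyEq_of_mem (isOpen_Ioo.mem_nhds ht) (fun s hs => (hder s hs).deriv)
    have hd2 : deriv^[2] (fun t : ℝ => t ^ α + (M - t) ^ α - δ/2 * t^2) t =
        α * (α-1) * t ^ (α - 2) + α * (α-1) * (M - t) ^ (α - 2) - δ := by
      show deriv (deriv (fun t : ℝ => t ^ α + (M - t) ^ α - δ/2 * t^2)) t = _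
      rw [heq.deriv_eq]
      exact (hder2 t ht).deriv
    rw [hd2]
    have e1 : t ^ (α - 2) = (t ^ (2 - α))⁻¹ := by
      rw [← Real.rpow_neg ht0.le, show -(2 - α) = α - 2 by ring]
    have e2 : 0 < t ^ (2 - α) := Real.rpow_pos_of_pos ht0 _
    have e3 : t ^ (2 - α) ≤ v ^ (2 - α) :=
      Real.rpow_le_rpow ht0.le ht.2.le (by linarith)
    have e7 : (0:ℝ) ≤ α * (α - 1) := by nlinarith
    have e6 : (v ^ (2-α))⁻¹ ≤ (t ^ (2-α))⁻¹ := inv_anti₀ e2 e3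
    have e4 : δ ≤ α * (α-1) * t ^ (α - 2) := by
      calc δ = α * (α-1) * (v ^ (2-α))⁻¹ := by rw [hδ, div_eq_mul_inv]
      _ ≤ α * (α-1) * (t ^ (2-α))⁻¹ := mul_le_mul_of_nonneg_left e6 e7
      _ = α * (α-1) * t ^ (α - 2) := by rw [e1]
    have e5 : 0 ≤ α * (α-1) * (M - t) ^ (α - 2) := by
      have := Real.rpow_nonneg htM.le (α - 2)
      nlinarith
    linarith


private lemma count_alg (c₀ δ a q Px Py Pz xr yr zr : ℝ) (hc₀ : 1 ≤ c₀) (hδ0 : 0 < δ)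
    (hq1 : 1 ≤ q) (hg1 : q/2 ≤ yr - xr) (hg2 : q/2 ≤ zr - yr)
    (hPxa : |Px - a| ≤ c₀) (hPya : |Py - a| ≤ c₀) (hPza : |Pz - a| ≤ c₀)
    (key : (Py - δ/2*yr^2 - (Px - δ/2*xr^2)) * (zr - yr) ≤
      (Pz - δ/2*zr^2 - (Py - δ/2*yr^2)) * (yr - xr)) :
    δ * q^2 ≤ 16 * c₀ := by
  have hPx := abs_le.mp hPxa
  have hPy := abs_le.mp hPya
  have hPz := abs_le.mp hPza
  have dxy0 : (0:ℝ) < yr - xr := by linarith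
  have dyz0 : (0:ℝ) < zr - yr := by linarith
  have Dpos : (0:ℝ) < (yr - xr) * (zr - yr) := mul_pos dxy0 dyz0
  have step1 : δ/2 * ((yr - xr) * (zr - yr)) * (zr - xr) ≤
      (Pz - Py) * (yr - xr) + (Px - Py) * (zr - yr) := by linarith [key]
  have e1 : (0:ℝ) ≤ (2*c₀ - (Pz - Py)) * (yr - xr) := mul_nonneg (by linarith) dxy0.le
  have e2 : (0:ℝ) ≤ (2*c₀ - (Px - Py)) * (zr - yr) := mul_nonneg (by linarith) dyz0.le
  have step3 : δ/2 * ((yr - xr) * (zr - yr)) * (zr - xr) ≤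
      2 * c₀ * (yr - xr) + 2 * c₀ * (zr - yr) := by linarith [step1, e1, e2]
  have e3 : (0:ℝ) ≤ (2*(zr - yr) - q) * (yr - xr) := mul_nonneg (by linarith) dxy0.le
  have e4 : (0:ℝ) ≤ (2*(yr - xr) - q) * (zr - yr) := mul_nonneg (by linarith) dyz0.le
  have m1 : q * (yr - xr) ≤ 2 * ((yr - xr) * (zr - yr)) := by linarith [e3]
  have m2 : q * (zr - yr) ≤ 2 * ((yr - xr) * (zr - yr)) := by linarith [e4]
  have m3 : q ≤ zr - xr := by linarith
  have s4 : δ/2 * ((yr - xr) * (zr - yr)) * q ≤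
      2 * c₀ * (yr - xr) + 2 * c₀ * (zr - yr) := by
    have hcpos : (0:ℝ) ≤ δ/2 * ((yr - xr) * (zr - yr)) := mul_nonneg (by linarith) Dpos.le
    have := mul_le_mul_of_nonneg_left m3 hcpos
    linarith
  have hq0 : (0:ℝ) ≤ q := by linarith
  have s5 := mul_le_mul_of_nonneg_right s4 hq0
  have s6a := mul_le_mul_of_nonneg_left m1 (show (0:ℝ) ≤ 2*c₀ by linarith)
  have s6b := mul_le_mul_of_nonneg_left m2 (show (0:ℝ) ≤ 2*c₀ by linarith)
  have m6 : δ/2 * ((yr - xr) * (zr - yr)) * q * q ≤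
      8 * c₀ * ((yr - xr) * (zr - yr)) := by linarith [s5, s6a, s6b]
  nlinarith [m6, Dpos]

private lemma sq_le_imp (q r : ℝ) (hq : 0 ≤ q) (hr : 0 ≤ r) (h : q^2 ≤ r^2) : q ≤ r := by
  nlinarith

set_option maxHeartbeats 1000000 in
private lemma core_count (α c₀ : ℝ) (hα : α ∈ Set.Ioo (1:ℝ) 2) (hc₀ : 1 ≤ c₀)
    (M a : ℝ) (hM : 1 ≤ M) (T : Set ℤ)
    (hT : ∀ n ∈ T, M / 4 < (n:ℝ) ∧ (n:ℝ) < 3 * M / 4 ∧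
      |(n:ℝ) ^ α + (M - (n:ℝ)) ^ α - a| ≤ c₀) :
    (T.ncard : ℝ) ≤ 2 + 4 * Real.sqrt (c₀ / (α * (α - 1))) * M ^ (1 - α / 2) := by
  obtain ⟨hα1, hα2⟩ := hα
  have hM0 : (0:ℝ) < M := lt_of_lt_of_le one_pos hM
  have hK0 : 0 ≤ Real.sqrt (c₀ / (α * (α - 1))) := Real.sqrt_nonneg _
  have hMp0 : 0 ≤ M ^ (1 - α / 2) := Real.rpow_nonneg hM0.le _
  have hfin : T.Finite := by
    apply Set.Finite.subset (Set.finite_Icc ⌈M/4⌉ ⌊3*M/4⌋)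
    intro n hn
    obtain ⟨h1, h2, _⟩ := hT n hn
    exact Set.mem_Icc.mpr ⟨Int.ceil_le.mpr h1.le, Int.le_floor.mpr h2.le⟩
  rcases le_or_gt T.ncard 2 with hk2 | hk3
  · calc (T.ncard : ℝ) ≤ 2 := by exact_mod_cast hk2
    _ ≤ 2 + 4 * Real.sqrt (c₀ / (α * (α - 1))) * M ^ (1 - α/2) := by nlinarith
  set k := T.ncard with hk
  clear_value k
  have hFcard : hfin.toFinset.card = k := by rw [hk, Set.ncard_eq_toFinset_card T hfin]
  have hk0 : 0 < k := by omega
  obtain ⟨x, y, z, hxT, hyT, hzT, gapxy, gapyz⟩ :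
      ∃ x y z : ℤ, x ∈ T ∧ y ∈ T ∧ z ∈ T ∧
        ((k:ℤ) - 2 ≤ 2 * (y - x)) ∧ ((k:ℤ) - 2 ≤ 2 * (z - y)) := by
    set e := hfin.toFinset.orderIsoOfFin hFcard with he
    set f : Fin k → ℤ := fun i => (e i : ℤ) with hf
    have hfmono : StrictMono f := fun i j hij => Subtype.coe_lt_coe.mpr (e.strictMono hij)
    have hmem : ∀ i, f i ∈ T := fun i => hfin.mem_toFinset.mp (e i).2
    refine ⟨f ⟨0, hk0⟩, f ⟨(k-1)/2, by omega⟩, f ⟨k-1, by omega⟩, hmem _, hmem _, hmem _, ?_, ?_⟩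
    · have gap1 := strictMono_gap f hfmono ((k-1)/2) ⟨0, hk0⟩ ⟨(k-1)/2, by omega⟩
        (by show (k-1)/2 = 0 + (k-1)/2; omega)
      have hn1 : (k:ℤ) - 2 ≤ 2 * (((k-1)/2 : ℕ) : ℤ) := by omega
      omega
    · have gap2 := strictMono_gap f hfmono ((k-1) - (k-1)/2) ⟨(k-1)/2, by omega⟩ ⟨k-1, by omega⟩
        (by show k - 1 = (k-1)/2 + ((k-1) - (k-1)/2); omega)
      have hn2 : (k:ℤ) - 2 ≤ 2 * (((k-1) - (k-1)/2 : ℕ) : ℤ) := by omega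
      omega
  have hmemx := hT x hxT
  have hmemy := hT y hyT
  have hmemz := hT z hzT
  have hq1 : (1:ℝ) ≤ (k:ℝ) - 2 := by
    have : (3:ℝ) ≤ (k:ℝ) := by exact_mod_cast hk3
    linarith
  have hgap1 : ((k:ℝ) - 2) / 2 ≤ (y:ℝ) - (x:ℝ) := by
    have : ((k:ℝ) - 2) ≤ 2 * ((y:ℝ) - (x:ℝ)) := by exact_mod_cast gapxy
    linarith
  have hgap2 : ((k:ℝ) - 2) / 2 ≤ (z:ℝ) - (y:ℝ) := by
    have : ((k:ℝ) - 2) ≤ 2 * ((z:ℝ) - (y:ℝ)) := by exact_mod_cast gapyz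
    linarith
  have hxy : (x:ℝ) < (y:ℝ) := by linarith
  have hyz : (y:ℝ) < (z:ℝ) := by linarith
  have hv0 : (0:ℝ) < 3 * M / 4 := by linarith
  have hvexp : (0:ℝ) < (3 * M / 4) ^ (2 - α) := Real.rpow_pos_of_pos hv0 _
  have hδ0 : (0:ℝ) < α * (α - 1) / (3 * M / 4) ^ (2 - α) := by
    apply div_pos _ hvexp
    nlinarith
  have hconv := convex_aux α M (M/4) (3*M/4) (α * (α - 1) / (3 * M / 4) ^ (2 - α))
    hα1 hα2 (by linarith) (by linarith) hv0 rfl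
  have hxmem : (x:ℝ) ∈ Set.Icc (M/4) (3*M/4) := ⟨hmemx.1.le, hmemx.2.1.le⟩
  have hzmem : (z:ℝ) ∈ Set.Icc (M/4) (3*M/4) := ⟨hmemz.1.le, hmemz.2.1.le⟩
  have hslope := hconv.slope_mono_adjacent hxmem hzmem hxy hyz
  beta_reduce at hslope
  have dxy0 : (0:ℝ) < (y:ℝ) - (x:ℝ) := by linarith
  have dyz0 : (0:ℝ) < (z:ℝ) - (y:ℝ) := by linarith
  rw [div_le_div_iff₀ dxy0 dyz0] at hslope
  set δ : ℝ := α * (α - 1) / (3 * M / 4) ^ (2 - α) with hδ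
  set Px : ℝ := (x:ℝ) ^ α + (M - (x:ℝ)) ^ α with hPx
  set Py : ℝ := (y:ℝ) ^ α + (M - (y:ℝ)) ^ α with hPy
  set Pz : ℝ := (z:ℝ) ^ α + (M - (z:ℝ)) ^ α with hPz
  have hδq : δ * ((k:ℝ) - 2)^2 ≤ 16 * c₀ := by
    apply count_alg c₀ δ a ((k:ℝ) - 2) Px Py Pz (x:ℝ) (y:ℝ) (z:ℝ) hc₀ hδ0 hq1 hgap1 hgap2
      hmemx.2.2 hmemy.2.2 hmemz.2.2
    exact hslope
  have haa : (0:ℝ) < α * (α - 1) := mul_pos (by linarith) (by linarith)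
  have hq2 : ((k:ℝ) - 2)^2 ≤ 16 * c₀ * M ^ (2 - α) / (α * (α - 1)) := by
    have hvm : (3*M/4) ^ (2 - α) ≤ M ^ (2 - α) :=
      Real.rpow_le_rpow hv0.le (by linarith) (by linarith)
    rw [hδ, div_mul_eq_mul_div, div_le_iff₀ hvexp] at hδq
    rw [le_div_iff₀ haa]
    have h16 := mul_le_mul_of_nonneg_left hvm (show (0:ℝ) ≤ 16 * c₀ by linarith)
    calc ((k:ℝ) - 2)^2 * (α * (α-1)) = α * (α - 1) * ((k:ℝ) - 2) ^ 2 := by ring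
    _ ≤ 16 * c₀ * (3*M/4) ^ (2 - α) := hδq
    _ ≤ 16 * c₀ * M ^ (2 - α) := h16
  have hMsq : (M ^ (1 - α/2))^2 = M ^ (2 - α) := by
    rw [← Real.rpow_natCast (M ^ (1 - α/2)) 2, ← Real.rpow_mul hM0.le]
    congr 1
    push_cast
    ring
  have hKsq : Real.sqrt (c₀ / (α * (α - 1)))^2 = c₀ / (α * (α - 1)) :=
    Real.sq_sqrt (div_nonneg (by linarith) haa.le)
  have hsq2 : ((k:ℝ) - 2)^2 ≤ (4 * Real.sqrt (c₀ / (α * (α - 1))) * M ^ (1 - α/2))^2 := by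
    have hexp : (4 * Real.sqrt (c₀ / (α * (α - 1))) * M ^ (1 - α/2))^2 =
        16 * (c₀ / (α*(α-1))) * M ^ (2-α) := by
      rw [mul_pow, mul_pow, hKsq, hMsq]; ring
    rw [hexp]
    calc ((k:ℝ) - 2)^2 ≤ 16 * c₀ * M ^ (2 - α) / (α * (α - 1)) := hq2
    _ = 16 * (c₀ / (α*(α-1))) * M ^ (2-α) := by ring
  have hfinal : (k:ℝ) - 2 ≤ 4 * Real.sqrt (c₀ / (α * (α - 1))) * M ^ (1 - α/2) :=
    sq_le_imp _ _ (by linarith) (by positivity) hsq2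
  linarith
set_option maxHeartbeats 1000000 in
private lemma mid_pos (α c₀ θ : ℝ) (hα : α ∈ Set.Ioo (1:ℝ) 2) (hc₀ : 1 ≤ c₀)
    (hθ : θ ∈ Set.Ioc (0:ℝ) (1/2)) (Na Nb : ℝ) (hNa : 1 ≤ Na) (hNb : 1 ≤ Nb)
    (M' : ℤ) (hM' : 0 ≤ M') (a : ℝ) (T : Set ℤ)
    (hT : ∀ n ∈ T, |(n:ℝ)| ≤ Na ∧ |(M':ℝ) - (n:ℝ)| ≤ Nb ∧
      |(|(n:ℝ)|) ^ α + (|(M':ℝ) - (n:ℝ)|) ^ α - a| ≤ c₀ ∧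
      |2*(n:ℝ) - (M':ℝ)| < θ * |(M':ℝ)|) :
    (T.ncard : ℝ) ≤ (2 + 8 * Real.sqrt (c₀ / (α * (α - 1)))) * (min Na Nb) ^ (1 - α/2) := by
  obtain ⟨hα1, hα2⟩ := hα
  obtain ⟨hθ0, hθ2⟩ := hθ
  have hK0 : 0 ≤ Real.sqrt (c₀ / (α * (α - 1))) := Real.sqrt_nonneg _
  have hmin1 : 1 ≤ min Na Nb := le_min hNa hNb
  have hp0 : (0:ℝ) ≤ 1 - α/2 := by linarith
  have hminp : 1 ≤ (min Na Nb) ^ (1 - α/2) := by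
    have h := Real.rpow_le_rpow_of_exponent_le hmin1 hp0
    rwa [Real.rpow_zero] at h
  have hminp0 : (0:ℝ) ≤ (min Na Nb) ^ (1 - α/2) := by linarith
  rcases T.eq_empty_or_nonempty with rfl | ⟨n₀, hn₀⟩
  · simp only [Set.ncard_empty, Nat.cast_zero]
    nlinarith [hK0, hminp0, hminp]
  obtain ⟨b1, b2, _, b4⟩ := hT n₀ hn₀
  have hMabs : |(M':ℝ)| = (M':ℝ) := abs_of_nonneg (by exact_mod_cast hM')
  have hM1 : (1:ℝ) ≤ (M':ℝ) := by
    have hne : M' ≠ 0 := by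
      rintro rfl
      simp only [Int.cast_zero, abs_zero, mul_zero] at b4
      exact absurd b4 (not_lt.mpr (abs_nonneg _))
    have : (1:ℤ) ≤ M' := by omega
    exact_mod_cast this
  have key : ∀ n ∈ T, (M':ℝ) / 4 < (n:ℝ) ∧ (n:ℝ) < 3 * (M':ℝ) / 4 ∧
      |(n:ℝ) ^ α + ((M':ℝ) - (n:ℝ)) ^ α - a| ≤ c₀ := by
    intro n hn
    obtain ⟨h1, h2, h3, h4⟩ := hT n hn
    rw [hMabs] at h4
    have hb := abs_lt.mp h4
    have hθM : θ * (M':ℝ) ≤ (M':ℝ) / 2 := by nlinarith [hθ2, hM1]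
    have hn1 : (M':ℝ) / 4 < (n:ℝ) := by linarith [hb.1, hb.2]
    have hn2 : (n:ℝ) < 3 * (M':ℝ) / 4 := by linarith [hb.1, hb.2]
    have habs1 : |(n:ℝ)| = (n:ℝ) := abs_of_pos (by linarith)
    have habs2 : |(M':ℝ) - (n:ℝ)| = (M':ℝ) - (n:ℝ) := abs_of_pos (by linarith)
    rw [habs1, habs2] at h3
    exact ⟨hn1, hn2, h3⟩
  have hcount := core_count α c₀ ⟨hα1, hα2⟩ hc₀ (M':ℝ) a hM1 T key
  obtain ⟨g1, g2, _⟩ := key n₀ hn₀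
  have hMa : (M':ℝ) ≤ 4 * Na := by
    have := le_abs_self ((n₀:ℝ))
    linarith
  have hMb : (M':ℝ) ≤ 4 * Nb := by
    have := le_abs_self ((M':ℝ) - (n₀:ℝ))
    linarith
  have hMmin : (M':ℝ) ≤ 4 * min Na Nb := by
    have : (M':ℝ)/4 ≤ min Na Nb := le_min (by linarith) (by linarith)
    linarith
  have hrp : (M':ℝ) ^ (1 - α/2) ≤ (4 * min Na Nb) ^ (1 - α/2) :=
    Real.rpow_le_rpow (by linarith) hMmin hp0
  have h4p : (4 * min Na Nb) ^ (1 - α/2) = (4:ℝ)^(1 - α/2) * (min Na Nb)^(1 - α/2) :=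
    Real.mul_rpow (by norm_num) (by linarith)
  have h42 : (4:ℝ)^(1 - α/2) ≤ 2 := by
    have h1 : (4:ℝ)^(1 - α/2) ≤ (4:ℝ)^((1:ℝ)/2) :=
      Real.rpow_le_rpow_of_exponent_le (by norm_num) (by linarith)
    have h2 : (4:ℝ)^((1:ℝ)/2) = 2 := by
      rw [show (4:ℝ) = 2^(2:ℕ) by norm_num, ← Real.rpow_natCast 2 2,
        ← Real.rpow_mul (by norm_num)]
      norm_num
    linarith
  have hM2min : (M':ℝ)^(1 - α/2) ≤ 2 * (min Na Nb)^(1 - α/2) := by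
    calc (M':ℝ)^(1 - α/2) ≤ (4:ℝ)^(1 - α/2) * (min Na Nb)^(1 - α/2) := by
          rw [← h4p]; exact hrp
    _ ≤ 2 * (min Na Nb)^(1 - α/2) := mul_le_mul_of_nonneg_right h42 hminp0
  have hfin2 := mul_le_mul_of_nonneg_left hM2min
    (show (0:ℝ) ≤ 4 * Real.sqrt (c₀ / (α * (α - 1))) by linarith)
  calc (T.ncard:ℝ) ≤ 2 + 4 * Real.sqrt (c₀ / (α * (α - 1))) * (M':ℝ)^(1 - α/2) := hcount
  _ ≤ (2 + 8 * Real.sqrt (c₀ / (α * (α - 1)))) * (min Na Nb) ^ (1 - α/2) := by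
      nlinarith [hfin2, hminp, hK0]

set_option maxHeartbeats 1000000 in
private lemma mid_lem (α c₀ θ : ℝ) (hα : α ∈ Set.Ioo (1:ℝ) 2) (hc₀ : 1 ≤ c₀)
    (hθ : θ ∈ Set.Ioc (0:ℝ) (1/2)) (Na Nb : ℝ) (hNa : 1 ≤ Na) (hNb : 1 ≤ Nb)
    (M' : ℤ) (a : ℝ) (T : Set ℤ)
    (hT : ∀ n ∈ T, |(n:ℝ)| ≤ Na ∧ |(M':ℝ) - (n:ℝ)| ≤ Nb ∧
      |(|(n:ℝ)|) ^ α + (|(M':ℝ) - (n:ℝ)|) ^ α - a| ≤ c₀ ∧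
      |2*(n:ℝ) - (M':ℝ)| < θ * |(M':ℝ)|) :
    (T.ncard : ℝ) ≤ (2 + 8 * Real.sqrt (c₀ / (α * (α - 1)))) * (min Na Nb) ^ (1 - α/2) := by
  rcases le_or_gt 0 M' with hM' | hM'
  · exact mid_pos α c₀ θ hα hc₀ hθ Na Nb hNa hNb M' hM' a T hT
  · have himg : T.ncard = (Neg.neg '' T).ncard :=
      (Set.ncard_image_of_injective T neg_injective).symm
    rw [himg]
    apply mid_pos α c₀ θ hα hc₀ hθ Na Nb hNa hNb (-M') (by omega) a
    rintro n ⟨p, hp, rfl⟩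
    obtain ⟨h1, h2, h3, h4⟩ := hT p hp
    have e0 : ((-p : ℤ):ℝ) = -(p:ℝ) := by push_cast; ring
    have eM : ((-M' : ℤ):ℝ) = -(M':ℝ) := by push_cast; ring
    have e1 : |((-p : ℤ):ℝ)| = |(p:ℝ)| := by rw [e0, abs_neg]
    have e2 : |((-M' : ℤ):ℝ) - ((-p : ℤ):ℝ)| = |(M':ℝ) - (p:ℝ)| := by
      rw [e0, eM, show -(M':ℝ) - -(p:ℝ) = -((M':ℝ) - (p:ℝ)) by ring, abs_neg]
    have e3 : |2*((-p : ℤ):ℝ) - ((-M' : ℤ):ℝ)| = |2*(p:ℝ) - (M':ℝ)| := by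
      rw [e0, eM, show 2 * -(p:ℝ) - -(M':ℝ) = -(2*(p:ℝ) - (M':ℝ)) by ring, abs_neg]
    have e4 : |((-M' : ℤ):ℝ)| = |(M':ℝ)| := by rw [eM, abs_neg]
    exact ⟨by rw [e1]; exact h1, by rw [e2]; exact h2, by rw [e1, e2]; exact h3,
      by rw [e3, e4]; exact h4⟩

set_option maxHeartbeats 1000000 in
/-- Frequency-localized bounds for the bad portions of the fibers
`S_{k k₂}` (pairs `(k₁,k₃)` with `|2k₁ - (k+k₂)| < θ |k+k₂|`) and `S_{k₁ k₃}`
(pairs `(k,k₂)` with `|2k - (k₁+k₃)| < θ |k₁+k₃|`). -/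
theorem bad_counting_localized (α c₀ θ : ℝ) (hα : α ∈ Set.Ioo (1 : ℝ) 2) (hc₀ : 1 ≤ c₀)
    (hθ : θ ∈ Set.Ioc (0 : ℝ) (1 / 2)) :
    ∃ C : ℝ, 0 < C ∧ ∀ m N N₁ N₂ N₃ : ℝ,
      1 ≤ N₁ → 1 ≤ N₂ → 1 ≤ N₃ → N₁ ≤ N → N₂ ≤ N → N₃ ≤ N →
      ((∀ k k₂ : ℤ,
        (({q : ℤ × ℤ | (k, q.1, k₂, q.2) ∈ Sset α c₀ m N N₁ N₂ N₃ ∧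
            (|2 * q.1 - (k + k₂)| : ℝ) < θ * (|k + k₂| : ℝ)}.ncard : ℝ) ≤
          C * (min N₁ N₃) ^ (1 - α / 2))) ∧
      (∀ k₁ k₃ : ℤ,
        (({q : ℤ × ℤ | (q.1, k₁, q.2, k₃) ∈ Sset α c₀ m N N₁ N₂ N₃ ∧
            (|2 * q.1 - (k₁ + k₃)| : ℝ) < θ * (|k₁ + k₃| : ℝ)}.ncard : ℝ) ≤
          C * (min N N₂) ^ (1 - α / 2)))) := by
  refine ⟨2 + 8 * Real.sqrt (c₀ / (α * (α - 1))), by positivity, ?_⟩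
  intro m N N₁ N₂ N₃ h1 h2 h3 h12 h22 h32
  have hN : 1 ≤ N := le_trans h1 h12
  constructor
  · intro k k₂
    have hinj : Set.InjOn Prod.fst {q : ℤ × ℤ | (k, q.1, k₂, q.2) ∈ Sset α c₀ m N N₁ N₂ N₃ ∧
        (|2 * q.1 - (k + k₂)| : ℝ) < θ * (|k + k₂| : ℝ)} := by
      rintro ⟨a1, a2⟩ ha ⟨b1, b2⟩ hb h
      have e1 := ha.1.1
      have e2 := hb.1.1
      simp only at e1 e2 h
      simp only [Prod.mk.injEq]
      exact ⟨h, by omega⟩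
    rw [← Set.ncard_image_of_injOn hinj]
    apply mid_lem α c₀ θ hα hc₀ hθ N₁ N₃ h1 h3 (k + k₂)
      (m + |(k₂:ℝ)| ^ α + |(k:ℝ)| ^ α)
    rintro n ⟨⟨q1, q2⟩, hq, rfl⟩
    obtain ⟨⟨he, _, _, hres, _, hb1, _, hb3⟩, hbad⟩ := hq
    simp only at he hres hb1 hb3 hbad ⊢
    have hq2 : q2 = k + k₂ - q1 := by omega
    subst hq2
    push_cast at hres hb1 hb3 hbad ⊢
    refine ⟨hb1, ?_, ?_, ?_⟩
    · convert hb3 using 2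
    · have harg : |(q1:ℝ)| ^ α + |(k:ℝ) + (k₂:ℝ) - (q1:ℝ)| ^ α -
          (m + |(k₂:ℝ)| ^ α + |(k:ℝ)| ^ α) =
          |(q1:ℝ)| ^ α - |(k₂:ℝ)| ^ α + |(k:ℝ) + (k₂:ℝ) - (q1:ℝ)| ^ α - |(k:ℝ)| ^ α - m := by
        ring
      rw [harg]
      exact hres
    · convert hbad using 2
  · intro k₁ k₃
    have hinj : Set.InjOn Prod.fst {q : ℤ × ℤ | (q.1, k₁, q.2, k₃) ∈ Sset α c₀ m N N₁ N₂ N₃ ∧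
        (|2 * q.1 - (k₁ + k₃)| : ℝ) < θ * (|k₁ + k₃| : ℝ)} := by
      rintro ⟨a1, a2⟩ ha ⟨b1, b2⟩ hb h
      have e1 := ha.1.1
      have e2 := hb.1.1
      simp only at e1 e2 h
      simp only [Prod.mk.injEq]
      exact ⟨h, by omega⟩
    rw [← Set.ncard_image_of_injOn hinj]
    apply mid_lem α c₀ θ hα hc₀ hθ N N₂ hN h2 (k₁ + k₃)
      (|(k₁:ℝ)| ^ α + |(k₃:ℝ)| ^ α - m)
    rintro n ⟨⟨q1, q2⟩, hq, rfl⟩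
    obtain ⟨⟨he, _, _, hres, hk, _, hb2, _⟩, hbad⟩ := hq
    simp only at he hres hk hb2 hbad ⊢
    have hq2 : q2 = k₁ + k₃ - q1 := by omega
    subst hq2
    push_cast at hres hk hb2 hbad ⊢
    refine ⟨hk, ?_, ?_, ?_⟩
    · convert hb2 using 2
    · have harg : |(q1:ℝ)| ^ α + |(k₁:ℝ) + (k₃:ℝ) - (q1:ℝ)| ^ α -
          (|(k₁:ℝ)| ^ α + |(k₃:ℝ)| ^ α - m) =
          -(|(k₁:ℝ)| ^ α - |(k₁:ℝ) + (k₃:ℝ) - (q1:ℝ)| ^ α + |(k₃:ℝ)| ^ α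
            - |(q1:ℝ)| ^ α - m) := by
        ring
      rw [harg, abs_neg]
      exact hres
    · convert hbad using 2
end

section
/- There exists a constant C = C(α,c₀) such that for all m ∈ ℝ and all N, N₁, N₂, N₃ with 1 ≤ N₁, N₂, N₃ ≤ N: for every (k,k₂) ∈ ℤ², #S_{k k₂} ≤ C·(min(N₁,N₃))^{1−α/2}, and for every (k₁,k₃) ∈ ℤ², #S_{k₁ k₃} ≤ C·(min(N,N₂))^{1−α/2}. -/
open Real Set

lemma aux_bernoulli {p t : ℝ} (hp0 : 0 ≤ p) (hp1 : p ≤ 1) (ht : 0 ≤ t) :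
    t ^ p ≤ p * t + (1 - p) := by
  have h := Real.geom_mean_le_arith_mean2_weighted (w₁ := p) (w₂ := 1 - p) (p₁ := t)
    (p₂ := 1) hp0 (by linarith) ht zero_le_one (by ring)
  simpa using h

lemma aux_L2 {α M x y : ℝ} (hα : α ∈ Set.Ioo (1:ℝ) 2) (hx : 0 ≤ x) (hxy : x ≤ y)
    (hyM : y ≤ M) : (α - 1) * M ^ (α - 2) * (y - x) ≤ y ^ (α - 1) - x ^ (α - 1) := by
  obtain ⟨hα1, hα2⟩ := hα
  rcases eq_or_lt_of_le (hx.trans hxy) with hy | hy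
  · have hx0 : x = 0 := le_antisymm (hxy.trans hy.symm.le) hx
    rw [← hy, hx0]
    simp
  · have hM : 0 < M := hy.trans_le hyM
    have ht0 : 0 ≤ x / y := div_nonneg hx hy.le
    have hb := aux_bernoulli (p := α - 1) (t := x / y) (by linarith) (by linarith) ht0
    have hxpow : x ^ (α - 1) = (x / y) ^ (α - 1) * y ^ (α - 1) := by
      rw [← Real.mul_rpow ht0 hy.le, div_mul_cancel₀ _ hy.ne']
    have hysplit : y ^ (α - 1) = y ^ (α - 2) * y := by
      rw [← Real.rpow_add_one hy.ne']
      ring_nf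
    have hMy : M ^ (α - 2) ≤ y ^ (α - 2) :=
      Real.rpow_le_rpow_of_nonpos hy hyM (by linarith)
    have hy1 : (0:ℝ) ≤ y ^ (α - 1) := Real.rpow_nonneg hy.le _
    have key : (α - 1) * y ^ (α - 2) * (y - x) ≤ y ^ (α - 1) - x ^ (α - 1) := by
      rw [hxpow]
      have h2 : y ^ (α - 1) * ((α-1) * (1 - x/y)) ≤ y ^ (α - 1) * (1 - (x/y) ^ (α-1)) := by
        apply mul_le_mul_of_nonneg_left _ hy1
        nlinarith
      have hexp : y ^ (α - 1) * ((α-1) * (1 - x/y)) = (α - 1) * y ^ (α - 2) * (y - x) := by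
        rw [hysplit]
        field_simp
      nlinarith
    nlinarith [mul_le_mul_of_nonneg_right hMy
      (mul_nonneg (by linarith : (0:ℝ) ≤ α - 1) (by linarith : (0:ℝ) ≤ y - x))]

lemma aux_hasDerivAt_abs_rpow {α : ℝ} (hα : 1 < α) (x : ℝ) :
    HasDerivAt (fun y : ℝ => |y| ^ α) (α * |x| ^ (α - 1) * Real.sign x) x := by
  rcases lt_trichotomy x 0 with hx | hx | hx
  · have h1 : HasDerivAt (fun y : ℝ => (-y) ^ α) (α * (-x) ^ (α - 1) * (-1)) x := by
      have := (Real.hasDerivAt_rpow_const (p := α) (x := -x) (Or.inl (by linarith))).comp x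
        (hasDerivAt_neg x)
      exact this
    have h2 : (fun y : ℝ => |y| ^ α) =ᶠ[nhds x] fun y : ℝ => (-y) ^ α := by
      filter_upwards [Iio_mem_nhds hx] with y hy
      rw [abs_of_neg hy]
    have h3 := h1.congr_of_eventuallyEq h2
    have : α * |x| ^ (α - 1) * Real.sign x = α * (-x) ^ (α - 1) * (-1) := by
      rw [abs_of_neg hx, Real.sign_of_neg hx]
    rwa [this]
  · subst hx
    rw [hasDerivAt_iff_tendsto_slope]
    have hb : ∀ y : ℝ, ‖slope (fun y : ℝ => |y| ^ α) 0 y‖ ≤ |y| ^ (α - 1) := by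
      intro y
      rcases eq_or_ne y 0 with rfl | hy
      · simp only [slope_same, norm_zero]
        exact Real.rpow_nonneg (abs_nonneg 0) _
      · have hay : (0:ℝ) < |y| := abs_pos.mpr hy
        rw [slope_def_field]
        have : |y| ^ α = |y| ^ (α - 1) * |y| := by
          rw [← Real.rpow_add_one hay.ne']; ring_nf
        rw [norm_div, Real.norm_eq_abs, Real.norm_eq_abs, abs_zero,
          Real.zero_rpow (by intro h; linarith [h] : α ≠ 0), sub_zero, sub_zero,
          abs_of_nonneg (Real.rpow_nonneg (abs_nonneg y) α), this,
          mul_div_assoc, div_self hay.ne', mul_one]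
    have hg : Filter.Tendsto (fun y : ℝ => |y| ^ (α - 1)) (nhdsWithin 0 {0}ᶜ) (nhds 0) := by
      have hc : Filter.Tendsto (fun y : ℝ => |y| ^ (α - 1)) (nhds 0) (nhds (|(0:ℝ)| ^ (α - 1))) := by
        apply ContinuousAt.tendsto
        exact (Real.continuousAt_rpow_const _ _ (Or.inr (by linarith))).comp continuous_abs.continuousAt
      rw [abs_zero, Real.zero_rpow (by intro h; linarith [h] : α - 1 ≠ 0)] at hc
      exact hc.mono_left nhdsWithin_le_nhds
    have := squeeze_zero_norm hb hg
    simpa [Real.sign_zero] using this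
  · have h1 : HasDerivAt (fun y : ℝ => y ^ α) (α * x ^ (α - 1)) x :=
      Real.hasDerivAt_rpow_const (Or.inl hx.ne')
    have h2 : (fun y : ℝ => |y| ^ α) =ᶠ[nhds x] fun y : ℝ => y ^ α := by
      filter_upwards [Ioi_mem_nhds hx] with y hy
      rw [abs_of_pos hy]
    have h3 := h1.congr_of_eventuallyEq h2
    have : α * |x| ^ (α - 1) * Real.sign x = α * x ^ (α - 1) := by
      rw [abs_of_pos hx, Real.sign_of_pos hx, mul_one]
    rwa [this]

lemma aux_dval_nonneg {α x : ℝ} (hα : 1 < α) (hx : 0 ≤ x) :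
    α * |x| ^ (α - 1) * Real.sign x = α * x ^ (α - 1) := by
  rcases eq_or_lt_of_le hx with rfl | hx'
  · simp [Real.zero_rpow (by intro h; linarith [h] : α - 1 ≠ 0)]
  · rw [abs_of_pos hx', Real.sign_of_pos hx', mul_one]

lemma aux_dval_nonpos {α x : ℝ} (hα : 1 < α) (hx : x ≤ 0) :
    α * |x| ^ (α - 1) * Real.sign x = -(α * (-x) ^ (α - 1)) := by
  rcases eq_or_lt_of_le hx with rfl | hx'
  · simp [Real.zero_rpow (by intro h; linarith [h] : α - 1 ≠ 0)]
  · rw [abs_of_neg hx', Real.sign_of_neg hx']; ring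

lemma aux_d_mono {α M : ℝ} (hα : α ∈ Set.Ioo (1:ℝ) 2) (hM : 0 < M) {x y : ℝ}
    (hx : x ∈ Set.Icc (-M) M) (hy : y ∈ Set.Icc (-M) M) (hxy : x ≤ y) :
    α * |x| ^ (α - 1) * Real.sign x - α * (α - 1) * M ^ (α - 2) * x ≤
      α * |y| ^ (α - 1) * Real.sign y - α * (α - 1) * M ^ (α - 2) * y := by
  obtain ⟨hα1, hα2⟩ := hα
  have hz : (0:ℝ) ^ (α - 1) = 0 := Real.zero_rpow (by intro h; linarith [h] : α - 1 ≠ 0)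
  rcases le_or_gt 0 x with hx0 | hx0
  · rw [aux_dval_nonneg hα1 hx0, aux_dval_nonneg hα1 (hx0.trans hxy)]
    have h := aux_L2 ⟨hα1, hα2⟩ hx0 hxy hy.2
    nlinarith
  rcases le_or_gt 0 y with hy0 | hy0
  · rw [aux_dval_nonpos hα1 hx0.le, aux_dval_nonneg hα1 hy0]
    have h2 := aux_L2 (M := M) ⟨hα1, hα2⟩ le_rfl hy0 hy.2
    have h3 := aux_L2 (M := M) ⟨hα1, hα2⟩ le_rfl (by linarith : (0:ℝ) ≤ -x)
      (by linarith [hx.1] : -x ≤ M)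
    rw [hz] at h2 h3
    nlinarith
  · rw [aux_dval_nonpos hα1 hx0.le, aux_dval_nonpos hα1 hy0.le]
    have h := aux_L2 (M := M) ⟨hα1, hα2⟩ (by linarith : (0:ℝ) ≤ -y)
      (by linarith : -y ≤ -x) (by linarith [hx.1] : -x ≤ M)
    nlinarith

lemma aux_F_convex {α M : ℝ} (hα : α ∈ Set.Ioo (1:ℝ) 2) (hM : 0 < M) :
    ConvexOn ℝ (Set.Icc (-M) M)
      (fun x : ℝ => |x| ^ α - α * (α - 1) * M ^ (α - 2) / 2 * x ^ 2) := by
  obtain ⟨hα1, hα2⟩ := hα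
  have hder : ∀ x : ℝ, HasDerivAt
      (fun x : ℝ => |x| ^ α - α * (α - 1) * M ^ (α - 2) / 2 * x ^ 2)
      (α * |x| ^ (α - 1) * Real.sign x - α * (α - 1) * M ^ (α - 2) * x) x := by
    intro x
    have h1 := aux_hasDerivAt_abs_rpow hα1 x
    have h2 : HasDerivAt (fun x : ℝ => α * (α - 1) * M ^ (α - 2) / 2 * x ^ 2)
        (α * (α - 1) * M ^ (α - 2) * x) x := by
      have := (hasDerivAt_pow 2 x).const_mul (α * (α - 1) * M ^ (α - 2) / 2)
      refine this.congr_deriv ?_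
      push_cast
      ring
    exact h1.sub h2
  apply MonotoneOn.convexOn_of_deriv (convex_Icc _ _)
  · exact fun x _ => (hder x).continuousAt.continuousWithinAt
  · exact fun x _ => (hder x).differentiableAt.differentiableWithinAt
  · intro x hx y hy hxy
    rw [(hder x).deriv, (hder y).deriv]
    exact aux_d_mono ⟨hα1, hα2⟩ hM (interior_subset hx) (interior_subset hy) hxy

lemma aux_gap {s : Set ℝ} {g : ℝ → ℝ} {μ t c₀ : ℝ} (hμ : 0 < μ)
    (hconv : ConvexOn ℝ s (fun x => g x - μ / 2 * x ^ 2))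
    {u v w : ℝ} (hu : u ∈ s) (hv : v ∈ s) (hw : w ∈ s) (huv : u ≤ v) (hvw : v ≤ w)
    (hgu : |g u - t| ≤ c₀) (hgv : |g v - t| ≤ c₀) (hgw : |g w - t| ≤ c₀) :
    (v - u) * (w - v) ≤ 4 * c₀ / μ := by
  have hc : 0 ≤ c₀ := le_trans (abs_nonneg _) hgu
  rcases eq_or_lt_of_le (huv.trans hvw) with huw | huw
  · have : v = u := le_antisymm (huw ▸ hvw) huv
    rw [this]
    simp only [sub_self, zero_mul]
    positivity
  · set θ : ℝ := (w - v) / (w - u) with hθdef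
    have hA : 0 < w - u := by linarith
    have hθ0 : 0 ≤ θ := div_nonneg (by linarith) hA.le
    have hθ1 : 0 ≤ 1 - θ := by
      rw [hθdef]
      rw [sub_nonneg, div_le_one hA]
      linarith
    have hpt : θ • u + (1 - θ) • w = v := by
      simp only [smul_eq_mul, hθdef]
      field_simp
      ring
    have hcomb := hconv.2 hu hw hθ0 hθ1 (by ring)
    rw [hpt] at hcomb
    simp only [smul_eq_mul] at hcomb
    have key : θ * u ^ 2 + (1 - θ) * w ^ 2 - v ^ 2 = (v - u) * (w - v) := by
      rw [hθdef]
      field_simp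
      ring
    rw [abs_le] at hgu hgv hgw
    have h1 : θ * g u ≤ θ * (t + c₀) := mul_le_mul_of_nonneg_left (by linarith [hgu.2]) hθ0
    have h2 : (1 - θ) * g w ≤ (1 - θ) * (t + c₀) := mul_le_mul_of_nonneg_left (by linarith [hgw.2]) hθ1
    have h3 : μ / 2 * ((v - u) * (w - v)) ≤ 2 * c₀ := by nlinarith
    rw [le_div_iff₀ hμ]
    nlinarith

lemma aux_count {T : Set ℤ} {a b : ℤ} (hsub : T ⊆ Set.Icc a b) {K : ℝ} (hK : 0 ≤ K)
    (h3 : ∀ u ∈ T, ∀ v ∈ T, ∀ w ∈ T, u ≤ v → v ≤ w →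
      ((v : ℝ) - (u : ℝ)) * ((w : ℝ) - (v : ℝ)) ≤ K ^ 2) :
    (T.ncard : ℝ) ≤ 2 * K + 2 := by
  have hfin : T.Finite := (Set.finite_Icc a b).subset hsub
  rcases T.eq_empty_or_nonempty with rfl | hne
  · simp
    linarith
  · set F := hfin.toFinset with hF
    have hFne : F.Nonempty := by
      rw [hF, Set.Finite.toFinset_nonempty]
      exact hne
    set u := F.min' hFne with hu
    set w := F.max' hFne with hw
    have huT : u ∈ T := hfin.mem_toFinset.mp (F.min'_mem hFne)
    have hwT : w ∈ T := hfin.mem_toFinset.mp (F.max'_mem hFne)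
    have hsub2 : T ⊆ Set.Icc u (u + ⌊K⌋) ∪ Set.Icc (w - ⌊K⌋) w := by
      intro v hv
      have huv : u ≤ v := F.min'_le v (hfin.mem_toFinset.mpr hv)
      have hvw : v ≤ w := F.le_max' v (hfin.mem_toFinset.mpr hv)
      have hp := h3 u huT v hv w hwT huv hvw
      rcases le_total ((v : ℝ) - u) ((w : ℝ) - v) with hc | hc
      · left
        have hx0 : (0:ℝ) ≤ (v:ℝ) - u := by exact_mod_cast sub_nonneg.mpr huv
        have : (v : ℝ) - u ≤ K := by nlinarith
        have : (v : ℤ) - u ≤ ⌊K⌋ := Int.le_floor.mpr (by push_cast; linarith)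
        exact ⟨huv, by linarith⟩
      · right
        have hx0 : (0:ℝ) ≤ (w:ℝ) - v := by exact_mod_cast sub_nonneg.mpr hvw
        have : (w : ℝ) - v ≤ K := by nlinarith
        have : (w : ℤ) - v ≤ ⌊K⌋ := Int.le_floor.mpr (by push_cast; linarith)
        exact ⟨by linarith, hvw⟩
    have hcard : T.ncard ≤ (Set.Icc u (u + ⌊K⌋)).ncard + (Set.Icc (w - ⌊K⌋) w).ncard :=
      le_trans (Set.ncard_le_ncard hsub2 ((Set.finite_Icc _ _).union (Set.finite_Icc _ _)))
        (Set.ncard_union_le _ _)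
    have hKfl : (0:ℤ) ≤ ⌊K⌋ := Int.le_floor.mpr (by simpa using hK)
    have hicc : ∀ c d : ℤ, (Set.Icc c d).ncard = (d + 1 - c).toNat := by
      intro c d
      rw [← Nat.card_coe_set_eq, Nat.card_eq_card_finite_toFinset (Set.finite_Icc c d)]
      simp [Int.card_Icc]
    have h1 : ((Set.Icc u (u + ⌊K⌋)).ncard : ℝ) ≤ K + 1 := by
      rw [hicc]
      have : (u + ⌊K⌋ + 1 - u) = ⌊K⌋ + 1 := by ring
      rw [this]
      have hcast : (((⌊K⌋ + 1).toNat : ℤ) : ℝ) = ((⌊K⌋ : ℝ) + 1) := by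
        rw [Int.toNat_of_nonneg (by linarith : (0:ℤ) ≤ ⌊K⌋ + 1)]
        push_cast
        ring
      rw [show (((⌊K⌋ + 1).toNat : ℕ) : ℝ) = (((⌊K⌋ + 1).toNat : ℤ) : ℝ) by push_cast; ring, hcast]
      linarith [Int.floor_le K]
    have h2 : ((Set.Icc (w - ⌊K⌋) w).ncard : ℝ) ≤ K + 1 := by
      rw [hicc]
      have : (w + 1 - (w - ⌊K⌋)) = ⌊K⌋ + 1 := by ring
      rw [this]
      have hcast : (((⌊K⌋ + 1).toNat : ℤ) : ℝ) = ((⌊K⌋ : ℝ) + 1) := by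
        rw [Int.toNat_of_nonneg (by linarith : (0:ℤ) ≤ ⌊K⌋ + 1)]
        push_cast
        ring
      rw [show (((⌊K⌋ + 1).toNat : ℕ) : ℝ) = (((⌊K⌋ + 1).toNat : ℤ) : ℝ) by push_cast; ring, hcast]
      linarith [Int.floor_le K]
    calc (T.ncard : ℝ) ≤ ((Set.Icc u (u + ⌊K⌋)).ncard : ℝ) + ((Set.Icc (w - ⌊K⌋) w).ncard : ℝ) := by
          exact_mod_cast hcard
      _ ≤ 2 * K + 2 := by linarith

lemma aux_core {α c₀ : ℝ} (hα : α ∈ Set.Ioo (1:ℝ) 2) (hc₀ : 0 < c₀)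
    {B₁ B₂ : ℝ} (hB₁ : 1 ≤ B₁) (hB₂ : 1 ≤ B₂) (a : ℤ) (t : ℝ) :
    (({n : ℤ | ((|n| : ℤ) : ℝ) ≤ B₁ ∧ ((|a - n| : ℤ) : ℝ) ≤ B₂ ∧
        |((|n| : ℤ) : ℝ) ^ α + ((|a - n| : ℤ) : ℝ) ^ α - t| ≤ c₀}).ncard : ℝ)
      ≤ (2 * Real.sqrt (4 * c₀ / (α * (α - 1))) + 2) * (min B₁ B₂) ^ (1 - α / 2) := by
  obtain ⟨hα1, hα2⟩ := hα
  set M : ℝ := min B₁ B₂ with hMdef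
  have hM1 : 1 ≤ M := le_min hB₁ hB₂
  have hM0 : 0 < M := by linarith
  set T : Set ℤ := {n : ℤ | ((|n| : ℤ) : ℝ) ≤ B₁ ∧ ((|a - n| : ℤ) : ℝ) ≤ B₂ ∧
      |((|n| : ℤ) : ℝ) ^ α + ((|a - n| : ℤ) : ℝ) ^ α - t| ≤ c₀} with hTdef
  set lam1 : ℝ := α * (α - 1) * B₁ ^ (α - 2) with hl1
  set lam2 : ℝ := α * (α - 1) * B₂ ^ (α - 2) with hl2
  set μ : ℝ := lam1 + lam2 with hmu
  have hl1pos : 0 < lam1 := by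
    rw [hl1]
    exact mul_pos (mul_pos (by linarith) (by linarith)) (Real.rpow_pos_of_pos (by linarith) _)
  have hl2pos : 0 < lam2 := by
    rw [hl2]
    exact mul_pos (mul_pos (by linarith) (by linarith)) (Real.rpow_pos_of_pos (by linarith) _)
  have hμpos : 0 < μ := by rw [hmu]; linarith
  set lamM : ℝ := α * (α - 1) * M ^ (α - 2) with hlM
  have hlMpos : 0 < lamM := by
    rw [hlM]
    exact mul_pos (mul_pos (by linarith) (by linarith)) (Real.rpow_pos_of_pos hM0 _)
  have hlamM : lamM ≤ μ := by
    rcases min_choice B₁ B₂ with h | h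
    · have hMB : M = B₁ := h
      rw [hlM, hMB, hmu, hl1]
      linarith [hl2pos]
    · have hMB : M = B₂ := h
      rw [hlM, hMB, hmu, hl2]
      linarith [hl1pos]
  -- convexity
  set s : Set ℝ := Set.Icc (-B₁) B₁ ∩ Set.Icc ((a:ℝ) - B₂) ((a:ℝ) + B₂) with hsdef
  have hsconv : Convex ℝ s := (convex_Icc _ _).inter (convex_Icc _ _)
  set g : ℝ → ℝ := fun x => |x| ^ α + |(a:ℝ) - x| ^ α with hgdef
  have hconv : ConvexOn ℝ s (fun x => g x - μ / 2 * x ^ 2) := by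
    have h1 : ConvexOn ℝ s (fun x : ℝ => |x| ^ α - lam1 / 2 * x ^ 2) :=
      (aux_F_convex ⟨hα1, hα2⟩ (by linarith : (0:ℝ) < B₁)).subset
        Set.inter_subset_left hsconv
    have h2' := aux_F_convex ⟨hα1, hα2⟩ (by linarith : (0:ℝ) < B₂)
    have h2 : ConvexOn ℝ s (fun x : ℝ => |(a:ℝ) - x| ^ α - lam2 / 2 * ((a:ℝ) - x) ^ 2) := by
      refine ⟨hsconv, fun x hx y hy p q hp hq hpq => ?_⟩
      have hx' : (a:ℝ) - x ∈ Set.Icc (-B₂) B₂ := by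
        obtain ⟨_, hx2⟩ := hx
        constructor <;> [linarith [hx2.2]; linarith [hx2.1]]
      have hy' : (a:ℝ) - y ∈ Set.Icc (-B₂) B₂ := by
        obtain ⟨_, hy2⟩ := hy
        constructor <;> [linarith [hy2.2]; linarith [hy2.1]]
      have hpt : p • ((a:ℝ) - x) + q • ((a:ℝ) - y) = (a:ℝ) - (p • x + q • y) := by
        simp only [smul_eq_mul]
        linear_combination (a:ℝ) * hpq
      have := h2'.2 hx' hy' hp hq hpq
      rw [hpt] at this
      exact this
    have h3 : ConvexOn ℝ s (fun x : ℝ => lam2 / 2 * ((a:ℝ)^2 - 2 * (a:ℝ) * x)) := by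
      refine ⟨hsconv, fun x _ y _ p q hp hq hpq => le_of_eq ?_⟩
      simp only [smul_eq_mul]
      linear_combination (-(lam2 / 2 * (a:ℝ)^2)) * hpq
    have heq : (fun x : ℝ => g x - μ / 2 * x ^ 2) =
        fun x : ℝ => ((|x| ^ α - lam1 / 2 * x ^ 2) + (|(a:ℝ) - x| ^ α - lam2 / 2 * ((a:ℝ) - x) ^ 2)) +
          lam2 / 2 * ((a:ℝ)^2 - 2 * (a:ℝ) * x) := by
      funext x
      rw [hgdef, hmu]
      ring
    rw [heq]
    exact (h1.add h2).add h3
  -- K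
  set K : ℝ := Real.sqrt (4 * c₀ / (α * (α - 1))) * M ^ (1 - α / 2) with hK
  have hc4 : (0:ℝ) < 4 * c₀ / (α * (α - 1)) := by
    apply div_pos (by linarith)
    nlinarith
  have hMe : (0:ℝ) < M ^ (1 - α / 2) := Real.rpow_pos_of_pos hM0 _
  have hK0 : 0 ≤ K := by positivity
  have hK2 : K ^ 2 = 4 * c₀ / lamM := by
    rw [hK, mul_pow, Real.sq_sqrt hc4.le, ← Real.rpow_natCast (M ^ (1 - α / 2)) 2,
      ← Real.rpow_mul hM0.le]
    push_cast
    rw [hlM]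
    rw [show (1 - α / 2) * 2 = -(α - 2) by ring, Real.rpow_neg hM0.le]
    rw [eq_div_iff (by positivity)]
    field_simp
  -- membership in s
  have hmem : ∀ n : ℤ, n ∈ T → ((n:ℝ) ∈ s ∧ |g (n:ℝ) - t| ≤ c₀) := by
    intro n hn
    obtain ⟨h1, h2, h3⟩ := hn
    have e1 : ((|n| : ℤ) : ℝ) = |(n : ℝ)| := by push_cast; ring
    have e2 : ((|a - n| : ℤ) : ℝ) = |(a : ℝ) - (n : ℝ)| := by push_cast; ring
    rw [e1] at h1
    rw [e2] at h2
    constructor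
    · constructor
      · rw [Set.mem_Icc]
        constructor <;> [linarith [abs_le.mp h1 |>.1]; linarith [abs_le.mp h1 |>.2]]
      · rw [Set.mem_Icc]
        constructor <;> [linarith [abs_le.mp h2 |>.2]; linarith [abs_le.mp h2 |>.1]]
    · rw [hgdef]
      simp only
      rw [← e1, ← e2]
      exact h3
  -- triple bound
  have h3all : ∀ u ∈ T, ∀ v ∈ T, ∀ w ∈ T, u ≤ v → v ≤ w →
      ((v : ℝ) - (u : ℝ)) * ((w : ℝ) - (v : ℝ)) ≤ K ^ 2 := by
    intro u hu v hv w hw huv hvw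
    obtain ⟨hus, hug⟩ := hmem u hu
    obtain ⟨hvs, hvg⟩ := hmem v hv
    obtain ⟨hws, hwg⟩ := hmem w hw
    have := aux_gap hμpos hconv hus hvs hws (by exact_mod_cast huv) (by exact_mod_cast hvw)
      hug hvg hwg
    have hdiv : 4 * c₀ / μ ≤ 4 * c₀ / lamM :=
      div_le_div_of_nonneg_left (by linarith) hlMpos hlamM
    rw [hK2]
    linarith
  -- T inside Icc
  have hTsub : T ⊆ Set.Icc (-⌈B₁⌉) ⌈B₁⌉ := by
    intro n hn
    obtain ⟨h1, _, _⟩ := hn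
    have : (|n| : ℤ) ≤ ⌈B₁⌉ := by
      have := Int.le_ceil B₁
      exact_mod_cast le_trans h1 this
    exact abs_le.mp this
  have hcount := aux_count hTsub hK0 h3all
  -- final arithmetic
  have hMe1 : (1:ℝ) ≤ M ^ (1 - α / 2) := Real.one_le_rpow hM1 (by linarith)
  have hsq : 0 ≤ Real.sqrt (4 * c₀ / (α * (α - 1))) := Real.sqrt_nonneg _
  calc (T.ncard : ℝ) ≤ 2 * K + 2 := hcount
    _ ≤ (2 * Real.sqrt (4 * c₀ / (α * (α - 1))) + 2) * M ^ (1 - α / 2) := by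
        rw [hK]
        nlinarith

lemma aux_T_finite (α c₀ t B₁ B₂ : ℝ) (a : ℤ) :
    ({n : ℤ | ((|n| : ℤ) : ℝ) ≤ B₁ ∧ ((|a - n| : ℤ) : ℝ) ≤ B₂ ∧
        |((|n| : ℤ) : ℝ) ^ α + ((|a - n| : ℤ) : ℝ) ^ α - t| ≤ c₀}).Finite := by
  apply (Set.finite_Icc (-⌈B₁⌉) ⌈B₁⌉).subset
  intro n hn
  have h : ((|n| : ℤ) : ℝ) ≤ ((⌈B₁⌉ : ℤ) : ℝ) := le_trans hn.1 (Int.le_ceil B₁)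
  exact abs_le.mp (by exact_mod_cast h)

/-- Counting bounds for the full fibers `S_{k k₂}` and `S_{k₁ k₃}`. -/
theorem fiber_counting_kk2_k1k3 (α c₀ : ℝ) (hα : α ∈ Set.Ioo (1 : ℝ) 2) (hc₀ : 1 ≤ c₀) :
    ∃ C : ℝ, 0 < C ∧ ∀ m N N₁ N₂ N₃ : ℝ,
      1 ≤ N₁ → 1 ≤ N₂ → 1 ≤ N₃ → N₁ ≤ N → N₂ ≤ N → N₃ ≤ N →
      ((∀ k k₂ : ℤ,
        (({q : ℤ × ℤ | (k, q.1, k₂, q.2) ∈ Sset α c₀ m N N₁ N₂ N₃}.ncard : ℝ) ≤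
          C * (min N₁ N₃) ^ (1 - α / 2))) ∧
      (∀ k₁ k₃ : ℤ,
        (({q : ℤ × ℤ | (q.1, k₁, q.2, k₃) ∈ Sset α c₀ m N N₁ N₂ N₃}.ncard : ℝ) ≤
          C * (min N N₂) ^ (1 - α / 2)))) := by
  obtain ⟨hα1, hα2⟩ := hα
  have hc : (0:ℝ) < c₀ := by linarith
  have hsq : (0:ℝ) ≤ Real.sqrt (4 * c₀ / (α * (α - 1))) := Real.sqrt_nonneg _
  refine ⟨2 * Real.sqrt (4 * c₀ / (α * (α - 1))) + 2, by linarith, ?_⟩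
  intro m N N₁ N₂ N₃ hN₁ hN₂ hN₃ hN₁N hN₂N hN₃N
  constructor
  · intro k k₂
    set a : ℤ := k + k₂ with hadef
    set t : ℝ := m + ((|k₂| : ℤ) : ℝ) ^ α + ((|k| : ℤ) : ℝ) ^ α with htdef
    set T : Set ℤ := {n : ℤ | ((|n| : ℤ) : ℝ) ≤ N₁ ∧ ((|a - n| : ℤ) : ℝ) ≤ N₃ ∧
        |((|n| : ℤ) : ℝ) ^ α + ((|a - n| : ℤ) : ℝ) ^ α - t| ≤ c₀} with hTdef
    set P : Set (ℤ × ℤ) := {q : ℤ × ℤ | (k, q.1, k₂, q.2) ∈ Sset α c₀ m N N₁ N₂ N₃} with hPdef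
    have hinj : Set.InjOn (fun q : ℤ × ℤ => q.1) P := by
      intro q hq q' hq' hqq
      simp only [hPdef, Sset, Set.mem_setOf_eq] at hq hq'
      have e1 : k = q.1 - k₂ + q.2 := hq.1
      have e2 : k = q'.1 - k₂ + q'.2 := hq'.1
      simp only at hqq
      exact Prod.ext hqq (by omega)
    have himg : (fun q : ℤ × ℤ => q.1) '' P ⊆ T := by
      rintro _ ⟨q, hq, rfl⟩
      simp only [hPdef, Sset, Set.mem_setOf_eq] at hq
      obtain ⟨he, _, _, hwin, _, hB1, _, hB3⟩ := hq
      have hq2 : a - q.1 = q.2 := by omega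
      simp only [hTdef, Set.mem_setOf_eq, hq2]
      push_cast
      refine ⟨hB1, hB3, ?_⟩
      have harg : |(q.1 : ℝ)| ^ α + |(q.2 : ℝ)| ^ α - t =
          |(q.1 : ℝ)| ^ α - |(k₂ : ℝ)| ^ α + |(q.2 : ℝ)| ^ α - |(k : ℝ)| ^ α - m := by
        rw [htdef]; push_cast; ring
      rw [harg]
      exact hwin
    calc (P.ncard : ℝ) = (((fun q : ℤ × ℤ => q.1) '' P).ncard : ℝ) := by
          rw [Set.ncard_image_of_injOn hinj]
      _ ≤ (T.ncard : ℝ) := by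
          exact_mod_cast Set.ncard_le_ncard himg (aux_T_finite α c₀ t N₁ N₃ a)
      _ ≤ (2 * Real.sqrt (4 * c₀ / (α * (α - 1))) + 2) * (min N₁ N₃) ^ (1 - α / 2) :=
          aux_core ⟨hα1, hα2⟩ hc hN₁ hN₃ a t
  · intro k₁ k₃
    set a : ℤ := k₁ + k₃ with hadef
    set t : ℝ := ((|k₁| : ℤ) : ℝ) ^ α + ((|k₃| : ℤ) : ℝ) ^ α - m with htdef
    set T : Set ℤ := {n : ℤ | ((|n| : ℤ) : ℝ) ≤ N₂ ∧ ((|a - n| : ℤ) : ℝ) ≤ N ∧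
        |((|n| : ℤ) : ℝ) ^ α + ((|a - n| : ℤ) : ℝ) ^ α - t| ≤ c₀} with hTdef
    set P : Set (ℤ × ℤ) := {q : ℤ × ℤ | (q.1, k₁, q.2, k₃) ∈ Sset α c₀ m N N₁ N₂ N₃} with hPdef
    have hinj : Set.InjOn (fun q : ℤ × ℤ => q.2) P := by
      intro q hq q' hq' hqq
      simp only [hPdef, Sset, Set.mem_setOf_eq] at hq hq'
      have e1 : q.1 = k₁ - q.2 + k₃ := hq.1
      have e2 : q'.1 = k₁ - q'.2 + k₃ := hq'.1
      simp only at hqq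
      exact Prod.ext (by omega) hqq
    have himg : (fun q : ℤ × ℤ => q.2) '' P ⊆ T := by
      rintro _ ⟨q, hq, rfl⟩
      simp only [hPdef, Sset, Set.mem_setOf_eq] at hq
      obtain ⟨he, _, _, hwin, hBN, _, hB2, _⟩ := hq
      have hq2 : a - q.2 = q.1 := by omega
      simp only [hTdef, Set.mem_setOf_eq, hq2]
      push_cast
      refine ⟨hB2, hBN, ?_⟩
      have harg : |(q.2 : ℝ)| ^ α + |(q.1 : ℝ)| ^ α - t =
          -(|(k₁ : ℝ)| ^ α - |(q.2 : ℝ)| ^ α + |(k₃ : ℝ)| ^ α - |(q.1 : ℝ)| ^ α - m) := by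
        rw [htdef]; push_cast; ring
      rw [harg, abs_neg]
      exact hwin
    have h1N : (1:ℝ) ≤ N := le_trans hN₂ hN₂N
    calc (P.ncard : ℝ) = (((fun q : ℤ × ℤ => q.2) '' P).ncard : ℝ) := by
          rw [Set.ncard_image_of_injOn hinj]
      _ ≤ (T.ncard : ℝ) := by
          exact_mod_cast Set.ncard_le_ncard himg (aux_T_finite α c₀ t N₂ N a)
      _ ≤ (2 * Real.sqrt (4 * c₀ / (α * (α - 1))) + 2) * (min N₂ N) ^ (1 - α / 2) :=
          aux_core ⟨hα1, hα2⟩ hc hN₂ h1N a t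
      _ = (2 * Real.sqrt (4 * c₀ / (α * (α - 1))) + 2) * (min N N₂) ^ (1 - α / 2) := by
          rw [min_comm]
end
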